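/- arXiv:2005.00075 — 11 statements merged into one kernel-verified Lean document; each statement's English description precedes it below -/
import Mathlib

section
/- Let T ∈ L(H) and suppose β, γ are functions in the Wiener algebra such that the series Σ|β_n| T*^n T^n and Σ|γ_n| T*^n T^n both converge in the strong operator topology. Then the product δ = βγ also satisfies: Σ|δ_n| T*^n T^n converges in the strong operator topology. -/
/-!
For weights `a n ≥ 0`, the series `∑ a n • R n† R n` converges strongly exactly when the quadratic
forms are uniformly bounded, `∑ a n ‖R n x‖² ≤ C ‖x‖²`. A strong limit `S` gives `C = ‖S‖`.
Conversely, by a weighted Cauchy–Schwarz inequality every finite partial sum `P` satisfies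
`‖P x‖² ≤ C ⟪P x, x⟫`, so the tails of `∑ a n ‖R n x‖²` control those of the vector series, which is
therefore Cauchy; Banach–Steinhaus makes the pointwise limit a bounded operator.

For the Cauchy product, `|δ n| ≤ ∑ |β j| |γ (n - j)|` and `Tⁿ = Tʲ Tⁿ⁻ʲ`; applying the bound for `β`
at the vectors `Tᵏ x` and then the bound for `γ` gives the bound `C_β C_γ` for `δ`.
-/

open Filter Topology ContinuousLinearMap

open scoped InnerProductSpace

theorem summable_of_norm_sum_sq_le {ι E : Type*} [SeminormedAddCommGroup E] [CompleteSpace E]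
    {f : ι → E} {g : ι → ℝ} (hg : Summable g) (C : ℝ)
    (h : ∀ t : Finset ι, ‖∑ i ∈ t, f i‖ ^ 2 ≤ C * ∑ i ∈ t, g i) : Summable f := by
  rw [summable_iff_vanishing_norm]
  intro ε hε
  obtain ⟨s, hs⟩ := summable_iff_vanishing_norm.1 hg (ε ^ 2 / (|C| + 1)) (by positivity)
  refine ⟨s, fun t ht => lt_of_pow_lt_pow_left₀ 2 hε.le ?_⟩
  calc ‖∑ i ∈ t, f i‖ ^ 2 ≤ C * ∑ i ∈ t, g i := h t
    _ ≤ |C| * ‖∑ i ∈ t, g i‖ := by rw [Real.norm_eq_abs, ← abs_mul]; exact le_abs_self _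
    _ ≤ |C| * (ε ^ 2 / (|C| + 1)) := mul_le_mul_of_nonneg_left (hs t ht).le (abs_nonneg C)
    _ < ε ^ 2 := by
      rw [mul_div_assoc', div_lt_iff₀ (by positivity)]
      nlinarith [sq_pos_of_pos hε]

section WeightedGram

variable {𝕜 E F ι : Type*} [RCLike 𝕜]
  [NormedAddCommGroup E] [InnerProductSpace 𝕜 E] [CompleteSpace E]
  [NormedAddCommGroup F] [InnerProductSpace 𝕜 F] [CompleteSpace F]

theorem inner_sum_smul_adjoint_apply (R : ι → E →L[𝕜] F) (a : ι → ℝ) (I : Finset ι) (x y : E) :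
    ⟪∑ n ∈ I, (a n : 𝕜) • adjoint (R n) (R n x), y⟫_𝕜 = ∑ n ∈ I, (a n : 𝕜) * ⟪R n x, R n y⟫_𝕜 := by
  simp only [sum_inner, inner_smul_left, adjoint_inner_left, RCLike.conj_ofReal]

theorem re_inner_sum_smul_adjoint_apply_self (R : ι → E →L[𝕜] F) (a : ι → ℝ) (I : Finset ι)
    (x : E) :
    RCLike.re ⟪∑ n ∈ I, (a n : 𝕜) • adjoint (R n) (R n x), x⟫_𝕜 = ∑ n ∈ I, a n * ‖R n x‖ ^ 2 := by
  simp only [inner_sum_smul_adjoint_apply, map_sum, RCLike.re_ofReal_mul, inner_self_eq_norm_sq]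

theorem norm_sum_smul_adjoint_apply_sq_le {R : ι → E →L[𝕜] F} {a : ι → ℝ} (ha : ∀ n, 0 ≤ a n)
    {I : Finset ι} {C : ℝ} (hbound : ∀ y, ∑ n ∈ I, a n * ‖R n y‖ ^ 2 ≤ C * ‖y‖ ^ 2) (x : E) :
    ‖∑ n ∈ I, (a n : 𝕜) • adjoint (R n) (R n x)‖ ^ 2 ≤ C * ∑ n ∈ I, a n * ‖R n x‖ ^ 2 := by
  set v := ∑ n ∈ I, (a n : 𝕜) • adjoint (R n) (R n x)
  set Q := ∑ n ∈ I, a n * ‖R n x‖ ^ 2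
  have hQ : 0 ≤ Q := Finset.sum_nonneg fun n _ => mul_nonneg (ha n) (sq_nonneg _)
  have hv : ‖v‖ ^ 2 ≤ ∑ n ∈ I, a n * (‖R n x‖ * ‖R n v‖) := by
    rw [← inner_self_eq_norm_sq (𝕜 := 𝕜), inner_sum_smul_adjoint_apply, map_sum]
    gcongr with n
    rw [RCLike.re_ofReal_mul]
    exact mul_le_mul_of_nonneg_left ((RCLike.re_le_norm _).trans (norm_inner_le_norm _ _)) (ha n)
  -- weighted Cauchy–Schwarz, then the bound applied to `v` itself
  have hcs : (∑ n ∈ I, a n * (‖R n x‖ * ‖R n v‖)) ^ 2 ≤ Q * (C * ‖v‖ ^ 2) := by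
    refine (Finset.sum_sq_le_sum_mul_sum_of_sq_le_mul I (f := fun n => a n * ‖R n x‖ ^ 2)
      (g := fun n => a n * ‖R n v‖ ^ 2) (fun n _ => mul_nonneg (ha n) (sq_nonneg _))
      (fun n _ => mul_nonneg (ha n) (sq_nonneg _)) fun n _ => le_of_eq (by ring)).trans ?_
    exact mul_le_mul_of_nonneg_left (hbound v) hQ
  have hv4 : (‖v‖ ^ 2) ^ 2 ≤ C * Q * ‖v‖ ^ 2 := by
    nlinarith [pow_le_pow_left₀ (by positivity) hv 2]
  have hCQ : 0 ≤ C * Q := by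
    rcases le_or_gt 0 C with hC | hC
    · exact mul_nonneg hC hQ
    · have hQ' : Q ≤ 0 := (hbound x).trans (mul_nonpos_of_nonpos_of_nonneg hC.le (sq_nonneg _))
      rw [le_antisymm hQ' hQ, mul_zero]
  nlinarith [sq_nonneg ‖v‖]

theorem sum_range_mul_norm_sq_le_of_tendsto {R : ℕ → E →L[𝕜] F} {a : ℕ → ℝ} (ha : ∀ n, 0 ≤ a n)
    {S : E →L[𝕜] E}
    (hS : ∀ x, Tendsto (fun N => ∑ n ∈ Finset.range N, (a n : 𝕜) • adjoint (R n) (R n x)) atTop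
      (𝓝 (S x)))
    (x : E) (N : ℕ) : ∑ n ∈ Finset.range N, a n * ‖R n x‖ ^ 2 ≤ ‖S‖ * ‖x‖ ^ 2 := by
  have hsum : HasSum (fun n => a n * ‖R n x‖ ^ 2) (RCLike.re ⟪S x, x⟫_𝕜) := by
    rw [hasSum_iff_tendsto_nat_of_nonneg fun n => mul_nonneg (ha n) (sq_nonneg _)]
    simpa only [Function.comp_def, re_inner_sum_smul_adjoint_apply_self] using
      (RCLike.continuous_re.tendsto _).comp ((hS x).inner (𝕜 := 𝕜) (tendsto_const_nhds (x := x)))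
  calc ∑ n ∈ Finset.range N, a n * ‖R n x‖ ^ 2
      ≤ RCLike.re ⟪S x, x⟫_𝕜 := sum_le_hasSum _ (fun n _ => mul_nonneg (ha n) (sq_nonneg _)) hsum
    _ ≤ ‖S x‖ * ‖x‖ := (RCLike.re_le_norm _).trans (norm_inner_le_norm _ _)
    _ ≤ ‖S‖ * ‖x‖ ^ 2 := by
      rw [sq, ← mul_assoc]
      exact mul_le_mul_of_nonneg_right (S.le_opNorm x) (norm_nonneg _)

theorem exists_tendsto_sum_smul_adjoint_apply {R : ℕ → E →L[𝕜] F} {a : ℕ → ℝ}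
    (ha : ∀ n, 0 ≤ a n) {C : ℝ}
    (hbound : ∀ y N, ∑ n ∈ Finset.range N, a n * ‖R n y‖ ^ 2 ≤ C * ‖y‖ ^ 2) :
    ∃ S : E →L[𝕜] E, ∀ x, Tendsto (fun N => ∑ n ∈ Finset.range N,
      (a n : 𝕜) • adjoint (R n) (R n x)) atTop (𝓝 (S x)) := by
  have hnonneg : ∀ y n, 0 ≤ a n * ‖R n y‖ ^ 2 := fun y n => mul_nonneg (ha n) (sq_nonneg _)
  have hsummable y : Summable fun n => a n * ‖R n y‖ ^ 2 :=
    summable_of_sum_range_le (hnonneg y) (hbound y)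
  have hfinset y (I : Finset ℕ) : ∑ n ∈ I, a n * ‖R n y‖ ^ 2 ≤ C * ‖y‖ ^ 2 :=
    ((hsummable y).sum_le_tsum I fun n _ => hnonneg y n).trans
      (Real.tsum_le_of_sum_range_le (hnonneg y) (hbound y))
  have hconv x : Tendsto (fun N => ∑ n ∈ Finset.range N, (a n : 𝕜) • adjoint (R n) (R n x))
      atTop (𝓝 (∑' n, (a n : 𝕜) • adjoint (R n) (R n x))) :=
    (summable_of_norm_sum_sq_le (hsummable x) C fun I =>
      norm_sum_smul_adjoint_apply_sq_le ha (hfinset · I) x).hasSum.tendsto_sum_nat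
  let P : ℕ → E →L[𝕜] E := fun N => ∑ n ∈ Finset.range N, (a n : 𝕜) • (adjoint (R n) ∘L R n)
  have hP N x : P N x = ∑ n ∈ Finset.range N, (a n : 𝕜) • adjoint (R n) (R n x) := by
    simp [P]
  refine ⟨continuousLinearMapOfTendsto (l := atTop) P
    (f := fun x => ∑' n, (a n : 𝕜) • adjoint (R n) (R n x)) (tendsto_pi_nhds.2 fun x => ?_),
    fun x => ?_⟩
  · simpa only [hP] using hconv x
  · exact hconv x

end WeightedGram

theorem Finset.sum_range_diag_le_sum_range_sum_range {M : Type*} [AddCommMonoid M] [PartialOrder M]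
    [IsOrderedAddMonoid M] (N : ℕ) {f : ℕ → ℕ → M} (hf : ∀ j k, 0 ≤ f j k) :
    ∑ n ∈ range N, ∑ j ∈ range (n + 1), f j (n - j) ≤ ∑ j ∈ range N, ∑ k ∈ range N, f j k := by
  rw [sum_range_diag_flip]
  gcongr with j
  · exact fun k _ _ => hf j k
  · exact N.sub_le j

theorem sum_range_norm_cauchyProduct_mul_norm_pow_apply_sq_le {𝕜 E : Type*} [NormedField 𝕜]
    [SeminormedAddCommGroup E] [NormedSpace 𝕜 E] (T : E →L[𝕜] E) {β γ : ℕ → 𝕜} {Cβ Cγ : ℝ}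
    (hCβ : 0 ≤ Cβ)
    (hβ : ∀ y N, ∑ n ∈ Finset.range N, ‖β n‖ * ‖(T ^ n) y‖ ^ 2 ≤ Cβ * ‖y‖ ^ 2)
    (hγ : ∀ y N, ∑ n ∈ Finset.range N, ‖γ n‖ * ‖(T ^ n) y‖ ^ 2 ≤ Cγ * ‖y‖ ^ 2) (y : E) (N : ℕ) :
    ∑ n ∈ Finset.range N, ‖∑ j ∈ Finset.range (n + 1), β j * γ (n - j)‖ * ‖(T ^ n) y‖ ^ 2
      ≤ Cβ * Cγ * ‖y‖ ^ 2 := by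
  have hsplit n j (hj : j ∈ Finset.range (n + 1)) : (T ^ n) y = (T ^ j) ((T ^ (n - j)) y) := by
    rw [← pow_mul_pow_sub T (Finset.mem_range_succ_iff.1 hj)]
    rfl
  calc ∑ n ∈ Finset.range N, ‖∑ j ∈ Finset.range (n + 1), β j * γ (n - j)‖ * ‖(T ^ n) y‖ ^ 2
      ≤ ∑ n ∈ Finset.range N, ∑ j ∈ Finset.range (n + 1),
          ‖γ (n - j)‖ * (‖β j‖ * ‖(T ^ j) ((T ^ (n - j)) y)‖ ^ 2) := by
        gcongr with n
        refine (mul_le_mul_of_nonneg_right (norm_sum_le _ _) (sq_nonneg _)).trans_eq ?_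
        rw [Finset.sum_mul]
        refine Finset.sum_congr rfl fun j hj => ?_
        rw [norm_mul, ← hsplit n j hj]
        ring
    _ ≤ ∑ j ∈ Finset.range N, ∑ k ∈ Finset.range N, ‖γ k‖ * (‖β j‖ * ‖(T ^ j) ((T ^ k) y)‖ ^ 2) :=
        Finset.sum_range_diag_le_sum_range_sum_range N
          (f := fun j k => ‖γ k‖ * (‖β j‖ * ‖(T ^ j) ((T ^ k) y)‖ ^ 2)) fun j k => by positivity
    _ = ∑ k ∈ Finset.range N, ‖γ k‖ * ∑ j ∈ Finset.range N, ‖β j‖ * ‖(T ^ j) ((T ^ k) y)‖ ^ 2 := by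
        rw [Finset.sum_comm]
        simp only [Finset.mul_sum]
    _ ≤ ∑ k ∈ Finset.range N, ‖γ k‖ * (Cβ * ‖(T ^ k) y‖ ^ 2) := by
        gcongr with k
        exact hβ _ N
    _ = Cβ * ∑ k ∈ Finset.range N, ‖γ k‖ * ‖(T ^ k) y‖ ^ 2 := by
        rw [Finset.mul_sum]
        exact Finset.sum_congr rfl fun k _ => by ring
    _ ≤ Cβ * Cγ * ‖y‖ ^ 2 := by
        rw [mul_assoc]
        exact mul_le_mul_of_nonneg_left (hγ y N) hCβ

theorem stmt_2_general {H : Type*} [NormedAddCommGroup H] [InnerProductSpace ℂ H] [CompleteSpace H]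
    (T : H →L[ℂ] H) (β γ : ℕ → ℂ)
    (hβ : ∃ S : H →L[ℂ] H, ∀ x : H,
      Tendsto (fun N => ∑ n ∈ Finset.range N,
        ((‖β n‖ : ℂ) • (adjoint (T ^ n)) ((T ^ n) x))) atTop (𝓝 (S x)))
    (hγ : ∃ S : H →L[ℂ] H, ∀ x : H,
      Tendsto (fun N => ∑ n ∈ Finset.range N,
        ((‖γ n‖ : ℂ) • (adjoint (T ^ n)) ((T ^ n) x))) atTop (𝓝 (S x))) :
    ∃ S : H →L[ℂ] H, ∀ x : H,
      Tendsto (fun N => ∑ n ∈ Finset.range N,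
        ((‖∑ j ∈ Finset.range (n + 1), β j * γ (n - j)‖ : ℂ) •
          (adjoint (T ^ n)) ((T ^ n) x))) atTop (𝓝 (S x)) := by
  obtain ⟨Sβ, hSβ⟩ := hβ
  obtain ⟨Sγ, hSγ⟩ := hγ
  exact exists_tendsto_sum_smul_adjoint_apply (R := fun n => T ^ n)
    (a := fun n => ‖∑ j ∈ Finset.range (n + 1), β j * γ (n - j)‖) (fun n => norm_nonneg _)
    (sum_range_norm_cauchyProduct_mul_norm_pow_apply_sq_le T (norm_nonneg Sβ)
      (sum_range_mul_norm_sq_le_of_tendsto (fun n => norm_nonneg (β n)) hSβ)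
      (sum_range_mul_norm_sq_le_of_tendsto (fun n => norm_nonneg (γ n)) hSγ))

/-- If the series `Σ|β_n| T*^n T^n` and `Σ|γ_n| T*^n T^n` converge in the strong operator
topology, then so does the corresponding series for the Cauchy product `δ = βγ`. -/
theorem stmt_2 {H : Type*} [NormedAddCommGroup H] [InnerProductSpace ℂ H] [CompleteSpace H]
    (T : H →L[ℂ] H) (β γ : ℕ → ℂ)
    (hβw : Summable fun n => ‖β n‖) (hγw : Summable fun n => ‖γ n‖)
    (hβ : ∃ S : H →L[ℂ] H, ∀ x : H,
      Tendsto (fun N => ∑ n ∈ Finset.range N,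
        ((‖β n‖ : ℂ) • (adjoint (T ^ n)) ((T ^ n) x))) atTop (𝓝 (S x)))
    (hγ : ∃ S : H →L[ℂ] H, ∀ x : H,
      Tendsto (fun N => ∑ n ∈ Finset.range N,
        ((‖γ n‖ : ℂ) • (adjoint (T ^ n)) ((T ^ n) x))) atTop (𝓝 (S x))) :
    ∃ S : H →L[ℂ] H, ∀ x : H,
      Tendsto (fun N => ∑ n ∈ Finset.range N,
        ((‖∑ j ∈ Finset.range (n + 1), β j * γ (n - j)‖ : ℂ) •
          (adjoint (T ^ n)) ((T ^ n) x))) atTop (𝓝 (S x)) :=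
  stmt_2_general T β γ hβ hγ
end

section
/- Let T ∈ L(H), let β in the Wiener algebra satisfy that Σ|β_n| T*^n T^n converges in the strong operator topology, and suppose γ_n = β_n τ_n where τ_n → 0. Then Σ|γ_n| T*^n T^n converges in the operator-norm topology of L(H). -/
/-!
Let `P n = |β_n| T*ⁿ Tⁿ ≥ 0`. The partial sums of `∑ P n` increase and converge strongly to some
`S`, so every finite sum of the `P n` lies below `S` in the Loewner order. Once `|τ_n| ≤ δ`, a
finite tail `∑ |τ_n| P n` is squeezed between `0` and `δ S`; in a C⋆-algebra this bounds its norm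
by `δ ‖S‖`, and the series is Cauchy in operator norm.
-/

open Filter Topology ContinuousLinearMap Finset

open scoped ComplexOrder InnerProductSpace

section

variable {H : Type*} [NormedAddCommGroup H] [InnerProductSpace ℂ H]

theorem ContinuousLinearMap.isPositive_iff_forall_inner_nonneg (A : H →L[ℂ] H) :
    A.IsPositive ↔ ∀ x, 0 ≤ ⟪A x, x⟫_ℂ := by
  simp only [isPositive_iff_complex, Complex.nonneg_iff, Complex.ext_iff, Complex.ofReal_re,
    Complex.ofReal_im, RCLike.re_to_complex]
  grind

theorem ContinuousLinearMap.le_of_monotone_of_tendsto_apply {Q : ℕ → H →L[ℂ] H}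
    {S : H →L[ℂ] H} (hQ : Monotone Q) (hS : ∀ x, Tendsto (fun N => Q N x) atTop (𝓝 (S x)))
    (N : ℕ) : Q N ≤ S := by
  rw [le_def, isPositive_iff_forall_inner_nonneg]
  intro x
  have hlim : Tendsto (fun M => ⟪(Q M - Q N) x, x⟫_ℂ) atTop (𝓝 ⟪(S - Q N) x, x⟫_ℂ) :=
    ((hS x).sub_const (Q N x)).inner tendsto_const_nhds
  exact ge_of_tendsto hlim <| eventually_atTop.2
    ⟨N, fun M hM => (isPositive_iff_forall_inner_nonneg _).1 (hQ hM) x⟩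

variable [CompleteSpace H]

theorem ContinuousLinearMap.sum_le_of_tendsto_sum_range_apply {P : ℕ → H →L[ℂ] H}
    (hP : ∀ n, 0 ≤ P n) {S : H →L[ℂ] H}
    (hS : ∀ x, Tendsto (fun N => (∑ n ∈ range N, P n) x) atTop (𝓝 (S x))) (F : Finset ℕ) :
    ∑ n ∈ F, P n ≤ S := by
  obtain ⟨N, hFN⟩ := F.exists_nat_subset_range
  have hmono : Monotone fun N => ∑ n ∈ range N, P n :=
    monotone_nat_of_le_succ fun N => by
      simpa only [sum_range_succ] using le_add_of_nonneg_right (hP N)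
  calc ∑ n ∈ F, P n ≤ ∑ n ∈ range N, P n :=
        sum_le_sum_of_subset_of_nonneg hFN fun n _ _ => hP n
    _ ≤ S := le_of_monotone_of_tendsto_apply hmono hS N

theorem ContinuousLinearMap.summable_smul_of_tendsto_sum_range_apply
    {P : ℕ → H →L[ℂ] H} (hP : ∀ n, 0 ≤ P n) {S : H →L[ℂ] H}
    (hS : ∀ x, Tendsto (fun N => (∑ n ∈ range N, P n) x) atTop (𝓝 (S x)))
    {t : ℕ → ℝ} (ht₀ : ∀ n, 0 ≤ t n) (ht : Tendsto t atTop (𝓝 0)) :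
    Summable fun n => (t n : ℂ) • P n := by
  rw [summable_iff_vanishing_norm]
  intro ε hε
  set δ := ε / (‖S‖ + 1)
  have hδ : 0 < δ := by positivity
  obtain ⟨N, hN⟩ := eventually_atTop.1 (ht.eventually (gt_mem_nhds hδ))
  refine ⟨range N, fun u hu => ?_⟩
  have htδ : ∀ n ∈ u, (t n : ℂ) ≤ δ := fun n hn => Complex.real_le_real.2 <|
    (hN n (not_lt.1 fun h => disjoint_left.1 hu hn (mem_range.2 h))).le
  have hnonneg : 0 ≤ ∑ n ∈ u, (t n : ℂ) • P n :=
    sum_nonneg fun n _ => smul_nonneg (Complex.zero_le_real.2 (ht₀ n)) (hP n)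
  have hle : ∑ n ∈ u, (t n : ℂ) • P n ≤ (δ : ℂ) • S :=
    calc ∑ n ∈ u, (t n : ℂ) • P n ≤ ∑ n ∈ u, (δ : ℂ) • P n :=
          sum_le_sum fun n hn => smul_le_smul_of_nonneg_right (htδ n hn) (hP n)
      _ = (δ : ℂ) • ∑ n ∈ u, P n := (smul_sum ..).symm
      _ ≤ (δ : ℂ) • S := smul_le_smul_of_nonneg_left
          (sum_le_of_tendsto_sum_range_apply hP hS u) (Complex.zero_le_real.2 hδ.le)
  calc ‖∑ n ∈ u, (t n : ℂ) • P n‖ ≤ ‖(δ : ℂ) • S‖ :=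
        CStarAlgebra.norm_le_norm_of_nonneg_of_le hnonneg hle
    _ = δ * ‖S‖ := by rw [norm_smul, Complex.norm_real, Real.norm_of_nonneg hδ.le]
    _ < ε := by
        rw [div_mul_eq_mul_div, div_lt_iff₀ (by positivity)]
        nlinarith [norm_nonneg S]

end

theorem stmt_3_general {H : Type*} [NormedAddCommGroup H] [InnerProductSpace ℂ H] [CompleteSpace H]
    (T : H →L[ℂ] H) (β γ τ : ℕ → ℂ)
    (hβ : ∃ S : H →L[ℂ] H, ∀ x : H,
      Tendsto (fun N => ∑ n ∈ Finset.range N,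
        ((‖β n‖ : ℂ) • (adjoint (T ^ n)) ((T ^ n) x))) atTop (𝓝 (S x)))
    (hτ : Tendsto τ atTop (𝓝 0))
    (hγ : ∀ n, γ n = β n * τ n) :
    ∃ S : H →L[ℂ] H,
      Tendsto (fun N => ∑ n ∈ Finset.range N,
        ((‖γ n‖ : ℂ) • ((adjoint (T ^ n)).comp (T ^ n)))) atTop (𝓝 S) := by
  obtain ⟨S, hS⟩ := hβ
  set P : ℕ → H →L[ℂ] H := fun n => (‖β n‖ : ℂ) • (adjoint (T ^ n)).comp (T ^ n)
  have hP : ∀ n, 0 ≤ P n := fun n => (nonneg_iff_isPositive _).2 <|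
    (isPositive_adjoint_comp_self _).smul_of_nonneg (Complex.zero_le_real.2 (norm_nonneg _))
  have hPS : ∀ x, Tendsto (fun N => (∑ n ∈ range N, P n) x) atTop (𝓝 (S x)) := by
    simpa [P, _root_.sum_apply] using hS
  have hsum := summable_smul_of_tendsto_sum_range_apply hP hPS (fun n => norm_nonneg (τ n))
    (tendsto_zero_iff_norm_tendsto_zero.1 hτ)
  have hγP : ∀ n, (‖γ n‖ : ℂ) • (adjoint (T ^ n)).comp (T ^ n) = (‖τ n‖ : ℂ) • P n := by
    intro n
    simp only [P, smul_smul, hγ, norm_mul, Complex.ofReal_mul, mul_comm]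
  simp_rw [hγP]
  exact ⟨_, hsum.hasSum.tendsto_sum_nat⟩

/-- If `Σ|β_n| T*^n T^n` converges in SOT and `γ_n = β_n τ_n` with `τ_n → 0`, then
`Σ|γ_n| T*^n T^n` converges in the operator-norm topology. -/
theorem stmt_3 {H : Type*} [NormedAddCommGroup H] [InnerProductSpace ℂ H] [CompleteSpace H]
    (T : H →L[ℂ] H) (β γ τ : ℕ → ℂ)
    (hβw : Summable fun n => ‖β n‖)
    (hβ : ∃ S : H →L[ℂ] H, ∀ x : H,
      Tendsto (fun N => ∑ n ∈ Finset.range N,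
        ((‖β n‖ : ℂ) • (adjoint (T ^ n)) ((T ^ n) x))) atTop (𝓝 (S x)))
    (hτ : Tendsto τ atTop (𝓝 0))
    (hγ : ∀ n, γ n = β n * τ n) :
    ∃ S : H →L[ℂ] H,
      Tendsto (fun N => ∑ n ∈ Finset.range N,
        ((‖γ n‖ : ℂ) • ((adjoint (T ^ n)).comp (T ^ n)))) atTop (𝓝 S) :=
  stmt_3_general T β γ τ hβ hτ hγ
end

section
/- Let T ∈ L(H), B ∈ L(H) a non-negative operator, and let f, g be functions with real Taylor coefficients such that Σ|f_n| T*^n T^n and Σ|g_n| T*^n T^n converge in the strong operator topology. If h = fg, then Σ_k h_k T*^k B T^k = Σ_n g_n T*^n (Σ_m f_m T*^m B T^m) T^n, where all series converge in SOT. -/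
/-!
Write `B = D* D`. Call a family of operators `A i` with real weights `c i` a weighted Bessel
family with bound `M` if `∑ |c i| ‖A i x‖² ≤ M ‖x‖²`. For such a family the series
`∑ c i • (A i)* (A i x)` converges unconditionally: by Cauchy–Schwarz the square of the norm of
a finite block is at most `M` times the block of `∑ |c i| ‖A i x‖²`. The hypotheses say that
`(T ^ n)` with weights `f n`, resp. `g n`, are such families, hence so are `(D T ^ n)` and the
product family `(D T ^ m T ^ n)` with weights `f m * g n`. The double series can therefore be
summed fibrewise in `n`, which gives `g(T*, T)(f(T*, T)(B))`, or along the antidiagonals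
`m + n = k`, which gives `h(T*, T)(B)`. Banach–Steinhaus makes the pointwise limits bounded.
-/

open Filter Topology ContinuousLinearMap
open scoped InnerProductSpace

section Bessel

variable {𝕜 ι κ E F G : Type*} [RCLike 𝕜]
  [NormedAddCommGroup E] [InnerProductSpace 𝕜 E]
  [NormedAddCommGroup F] [InnerProductSpace 𝕜 F]
  [NormedAddCommGroup G] [InnerProductSpace 𝕜 G]

lemma re_inner_sum_smul_adjoint_apply [CompleteSpace E] [CompleteSpace F]
    (c : ι → ℝ) (A : ι → E →L[𝕜] F) (s : Finset ι) (x y : E) :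
    RCLike.re ⟪∑ i ∈ s, (c i : 𝕜) • adjoint (A i) (A i x), y⟫_𝕜
      = ∑ i ∈ s, c i * RCLike.re ⟪A i x, A i y⟫_𝕜 := by
  simp [sum_inner, inner_smul_left, adjoint_inner_left]

def IsWeightedBessel (c : ι → ℝ) (A : ι → E →L[𝕜] F) (M : ℝ) : Prop :=
  ∀ (x : E) (s : Finset ι), ∑ i ∈ s, |c i| * ‖A i x‖ ^ 2 ≤ M * ‖x‖ ^ 2

namespace IsWeightedBessel

variable {c : ι → ℝ} {A : ι → E →L[𝕜] F} {M : ℝ}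

lemma summable_weighted_norm_sq (h : IsWeightedBessel c A M) (x : E) :
    Summable fun i => |c i| * ‖A i x‖ ^ 2 :=
  summable_of_sum_le (fun _ => by positivity) (h x)

lemma comp_left (h : IsWeightedBessel c A M) (D : F →L[𝕜] G) :
    IsWeightedBessel c (fun i => D ∘L A i) (‖D‖ ^ 2 * M) := fun x s =>
  calc ∑ i ∈ s, |c i| * ‖D (A i x)‖ ^ 2
      ≤ ∑ i ∈ s, |c i| * (‖D‖ ^ 2 * ‖A i x‖ ^ 2) := by
        gcongr with i
        rw [← mul_pow]
        exact pow_le_pow_left₀ (norm_nonneg _) (D.le_opNorm _) 2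
    _ = ‖D‖ ^ 2 * ∑ i ∈ s, |c i| * ‖A i x‖ ^ 2 := by
        rw [Finset.mul_sum]; exact Finset.sum_congr rfl fun _ _ => by ring
    _ ≤ ‖D‖ ^ 2 * (M * ‖x‖ ^ 2) := by gcongr; exact h x s
    _ = ‖D‖ ^ 2 * M * ‖x‖ ^ 2 := by ring

lemma prod {d : κ → ℝ} {K : κ → E →L[𝕜] F} {A : ι → F →L[𝕜] G} {N : ℝ}
    (hA : IsWeightedBessel c A M) (hK : IsWeightedBessel d K N) (hM : 0 ≤ M) :
    IsWeightedBessel (fun q : ι × κ => c q.1 * d q.2) (fun q => A q.1 ∘L K q.2) (M * N) := by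
  intro x t
  classical
  calc ∑ q ∈ t, |c q.1 * d q.2| * ‖A q.1 (K q.2 x)‖ ^ 2
      ≤ ∑ q ∈ t.image Prod.fst ×ˢ t.image Prod.snd, |c q.1 * d q.2| * ‖A q.1 (K q.2 x)‖ ^ 2 :=
        Finset.sum_le_sum_of_subset_of_nonneg
          (fun q hq => Finset.mem_product.2
            ⟨Finset.mem_image_of_mem _ hq, Finset.mem_image_of_mem _ hq⟩)
          (fun _ _ _ => by positivity)
    _ = ∑ j ∈ t.image Prod.snd, |d j| * ∑ i ∈ t.image Prod.fst, |c i| * ‖A i (K j x)‖ ^ 2 := by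
        rw [Finset.sum_product_right]
        refine Finset.sum_congr rfl fun j _ => ?_
        rw [Finset.mul_sum]
        exact Finset.sum_congr rfl fun i _ => by rw [abs_mul]; ring
    _ ≤ ∑ j ∈ t.image Prod.snd, |d j| * (M * ‖K j x‖ ^ 2) := by
        gcongr with j; exact hA _ _
    _ = M * ∑ j ∈ t.image Prod.snd, |d j| * ‖K j x‖ ^ 2 := by
        rw [Finset.mul_sum]; exact Finset.sum_congr rfl fun _ _ => by ring
    _ ≤ M * (N * ‖x‖ ^ 2) := by gcongr; exact hK _ _
    _ = M * N * ‖x‖ ^ 2 := by ring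

variable [CompleteSpace E] [CompleteSpace F]

lemma norm_sum_smul_adjoint_apply_sq_le (h : IsWeightedBessel c A M) (x : E) (s : Finset ι) :
    ‖∑ i ∈ s, (c i : 𝕜) • adjoint (A i) (A i x)‖ ^ 2 ≤ M * ∑ i ∈ s, |c i| * ‖A i x‖ ^ 2 := by
  set v := ∑ i ∈ s, (c i : 𝕜) • adjoint (A i) (A i x)
  have hv : ‖v‖ ^ 2 ≤ ∑ i ∈ s, |c i| * ‖A i x‖ * ‖A i v‖ :=
    calc ‖v‖ ^ 2 = ∑ i ∈ s, c i * RCLike.re ⟪A i x, A i v⟫_𝕜 := by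
          rw [← inner_self_eq_norm_sq (𝕜 := 𝕜), re_inner_sum_smul_adjoint_apply]
      _ ≤ ∑ i ∈ s, |c i| * ‖A i x‖ * ‖A i v‖ := Finset.sum_le_sum fun i _ => by
        rw [mul_assoc]
        refine (le_abs_self _).trans ?_
        rw [abs_mul]
        gcongr
        exact (RCLike.abs_re_le_norm _).trans (norm_inner_le_norm _ _)
  have hSx_le := h x s
  set Sx := ∑ i ∈ s, |c i| * ‖A i x‖ ^ 2
  have hSx₀ : 0 ≤ Sx := Finset.sum_nonneg fun _ _ => by positivity
  have hcs : (‖v‖ ^ 2) ^ 2 ≤ Sx * (M * ‖v‖ ^ 2) :=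
    calc (‖v‖ ^ 2) ^ 2 ≤ (∑ i ∈ s, |c i| * ‖A i x‖ * ‖A i v‖) ^ 2 := by gcongr
      _ ≤ Sx * ∑ i ∈ s, |c i| * ‖A i v‖ ^ 2 :=
        Finset.sum_sq_le_sum_mul_sum_of_sq_le_mul s (fun _ _ => by positivity)
          (fun _ _ => by positivity) fun i _ => le_of_eq (by ring)
      _ ≤ Sx * (M * ‖v‖ ^ 2) := by gcongr; exact h v s
  rcases (sq_nonneg ‖v‖).eq_or_lt with hv₀ | hv₀
  · rw [← hv₀]
    rcases le_or_gt 0 M with hM | hM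
    · positivity
    · nlinarith [mul_nonneg (neg_nonneg.2 hM.le) (sq_nonneg ‖x‖)]
  · nlinarith

lemma summable_smul_adjoint_apply (h : IsWeightedBessel c A M) (x : E) :
    Summable fun i => (c i : 𝕜) • adjoint (A i) (A i x) := by
  rw [summable_iff_vanishing_norm]
  intro ε hε
  obtain ⟨s, hs⟩ := summable_iff_vanishing_norm.1 (h.summable_weighted_norm_sq x)
    (ε ^ 2 / (|M| + 1)) (by positivity)
  refine ⟨s, fun t ht => lt_of_pow_lt_pow_left₀ 2 hε.le ?_⟩
  have hSt := hs t ht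
  rw [Real.norm_of_nonneg (Finset.sum_nonneg fun _ _ => by positivity),
    lt_div_iff₀ (by positivity)] at hSt
  calc ‖∑ i ∈ t, (c i : 𝕜) • adjoint (A i) (A i x)‖ ^ 2
      ≤ M * ∑ i ∈ t, |c i| * ‖A i x‖ ^ 2 := h.norm_sum_smul_adjoint_apply_sq_le x t
    _ ≤ (|M| + 1) * ∑ i ∈ t, |c i| * ‖A i x‖ ^ 2 := by
        gcongr
        linarith [le_abs_self M]
    _ < ε ^ 2 := by linarith

lemma of_tendsto {c : ℕ → ℝ} {A : ℕ → E →L[𝕜] F} {S : E →L[𝕜] E}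
    (hS : ∀ x, Tendsto (fun N => ∑ n ∈ Finset.range N,
      ((|c n| : ℝ) : 𝕜) • adjoint (A n) (A n x)) atTop (𝓝 (S x))) :
    IsWeightedBessel c A ‖S‖ := by
  intro x s
  have hlim : Tendsto (fun N => ∑ n ∈ Finset.range N, |c n| * ‖A n x‖ ^ 2) atTop
      (𝓝 (RCLike.re ⟪S x, x⟫_𝕜)) := by
    have := (hS x).inner (𝕜 := 𝕜) (tendsto_const_nhds (x := x))
    simpa [Function.comp_def, re_inner_sum_smul_adjoint_apply, inner_self_eq_norm_sq] using
      (RCLike.continuous_re.tendsto _).comp this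
  have hmono : Monotone fun N => ∑ n ∈ Finset.range N, |c n| * ‖A n x‖ ^ 2 :=
    fun _ _ hNM => Finset.sum_le_sum_of_subset_of_nonneg (Finset.range_subset_range.2 hNM)
      fun _ _ _ => by positivity
  obtain ⟨N, hN⟩ := s.exists_nat_subset_range
  calc ∑ n ∈ s, |c n| * ‖A n x‖ ^ 2
      ≤ ∑ n ∈ Finset.range N, |c n| * ‖A n x‖ ^ 2 :=
        Finset.sum_le_sum_of_subset_of_nonneg hN fun _ _ _ => by positivity
    _ ≤ RCLike.re ⟪S x, x⟫_𝕜 := hmono.ge_of_tendsto hlim N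
    _ ≤ ‖S x‖ * ‖x‖ := re_inner_le_norm _ _
    _ ≤ ‖S‖ * ‖x‖ * ‖x‖ := by gcongr; exact S.le_opNorm x
    _ = ‖S‖ * ‖x‖ ^ 2 := by ring

end IsWeightedBessel

end Bessel

theorem ContinuousLinearMap.exists_forall_hasSum_apply {ι 𝕜 E F : Type*} [Countable ι]
    [NontriviallyNormedField 𝕜] [NormedAddCommGroup E] [NormedSpace 𝕜 E] [CompleteSpace E]
    [NormedAddCommGroup F] [NormedSpace 𝕜 F] (Φ : ι → E →L[𝕜] F)
    (h : ∀ x, Summable fun i => Φ i x) :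
    ∃ S : E →L[𝕜] F, ∀ x, HasSum (fun i => Φ i x) (S x) :=
  ⟨continuousLinearMapOfTendsto (fun s : Finset ι => ∑ i ∈ s, Φ i)
    (f := fun x => ∑' i, Φ i x)
    (tendsto_pi_nhds.2 fun x => by simp only [sum_apply]; exact (h x).hasSum),
    fun x => (h x).hasSum⟩

theorem HasSum.sum_antidiagonal {α A : Type*} [AddCommMonoid α] [TopologicalSpace α]
    [ContinuousAdd α] [RegularSpace α] [AddMonoid A] [Finset.HasAntidiagonal A]
    {u : A × A → α} {a : α} (h : HasSum u a) :
    HasSum (fun k => ∑ p ∈ Finset.HasAntidiagonal.antidiagonal k, u p) a :=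
  HasSum.sigma (Finset.HasAntidiagonal.sigmaAntidiagonalEquivProd.hasSum_iff.2 h) fun k =>
    (Finset.HasAntidiagonal.antidiagonal k).hasSum u

namespace IsWeightedBessel

variable {ι E F : Type*} [Countable ι]
  [NormedAddCommGroup E] [InnerProductSpace ℂ E] [CompleteSpace E]
  [NormedAddCommGroup F] [InnerProductSpace ℂ F] [CompleteSpace F]
  {c : ι → ℝ} {A : ι → E →L[ℂ] F} {M : ℝ}

lemma exists_hasSum_adjoint_apply_of_isPositive (h : IsWeightedBessel c A M)
    {B : F →L[ℂ] F} (hB : B.IsPositive) :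
    ∃ S : E →L[ℂ] E, ∀ x, HasSum (fun i => (c i : ℂ) • adjoint (A i) (B (A i x))) (S x) := by
  obtain ⟨D, rfl⟩ := CStarAlgebra.nonneg_iff_eq_star_mul_self.1 ((nonneg_iff_isPositive B).2 hB)
  have hD := h.comp_left D
  simpa [star_eq_adjoint, adjoint_comp] using
    exists_forall_hasSum_apply (fun i => (c i : ℂ) • (adjoint (D ∘L A i) ∘L (D ∘L A i)))
      hD.summable_smul_adjoint_apply

end IsWeightedBessel

theorem stmt_5_general {H : Type*} [NormedAddCommGroup H] [InnerProductSpace ℂ H] [CompleteSpace H]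
    (T : H →L[ℂ] H) (f g : ℕ → ℝ)
    (hf : ∃ S : H →L[ℂ] H, ∀ x : H,
      Tendsto (fun N => ∑ n ∈ Finset.range N,
        (((|f n| : ℝ) : ℂ) • (adjoint (T ^ n)) ((T ^ n) x))) atTop (𝓝 (S x)))
    (hg : ∃ S : H →L[ℂ] H, ∀ x : H,
      Tendsto (fun N => ∑ n ∈ Finset.range N,
        (((|g n| : ℝ) : ℂ) • (adjoint (T ^ n)) ((T ^ n) x))) atTop (𝓝 (S x)))
    (B : H →L[ℂ] H) (hB : B.IsPositive) :
    ∃ F G : H →L[ℂ] H,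
      (∀ x : H, Tendsto (fun N => ∑ m ∈ Finset.range N,
        (((f m : ℝ) : ℂ) • (adjoint (T ^ m)) (B ((T ^ m) x)))) atTop (𝓝 (F x))) ∧
      (∀ x : H, Tendsto (fun N => ∑ n ∈ Finset.range N,
        (((g n : ℝ) : ℂ) • (adjoint (T ^ n)) (F ((T ^ n) x)))) atTop (𝓝 (G x))) ∧
      (∀ x : H, Tendsto (fun N => ∑ k ∈ Finset.range N,
        (((∑ m ∈ Finset.range (k + 1), f m * g (k - m) : ℝ) : ℂ) •
          (adjoint (T ^ k)) (B ((T ^ k) x)))) atTop (𝓝 (G x))) := by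
  obtain ⟨Sf, hSf⟩ := hf
  obtain ⟨Sg, hSg⟩ := hg
  have hbf : IsWeightedBessel f (fun n => T ^ n) ‖Sf‖ := .of_tendsto hSf
  have hbg : IsWeightedBessel g (fun n => T ^ n) ‖Sg‖ := .of_tendsto hSg
  obtain ⟨F, hF⟩ := hbf.exists_hasSum_adjoint_apply_of_isPositive hB
  obtain ⟨G, hG⟩ := (hbf.prod hbg (norm_nonneg _)).exists_hasSum_adjoint_apply_of_isPositive hB
  refine ⟨F, G, fun x => (hF x).tendsto_sum_nat, fun x => ?_, fun x => ?_⟩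
  · refine (((Equiv.prodComm ℕ ℕ).hasSum_iff.2 (hG x)).prod_fiberwise fun n => ?_).tendsto_sum_nat
    convert (hF ((T ^ n) x)).mapL (((g n : ℝ) : ℂ) • adjoint (T ^ n)) using 1
    · ext m
      simp only [Function.comp_apply, Equiv.prodComm_apply, Prod.fst_swap, Prod.snd_swap,
        smul_apply, map_smul, adjoint_comp, comp_apply, smul_smul, Complex.ofReal_mul]
    · rfl
  · have hterm : ∀ k, ∑ p ∈ Finset.HasAntidiagonal.antidiagonal k,
        ((f p.1 * g p.2 : ℝ) : ℂ) •
          adjoint ((T ^ p.1) ∘L (T ^ p.2)) (B (((T ^ p.1) ∘L (T ^ p.2)) x))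
        = ((∑ m ∈ Finset.range (k + 1), f m * g (k - m) : ℝ) : ℂ) •
          adjoint (T ^ k) (B ((T ^ k) x)) := fun k => by
      rw [← Finset.Nat.sum_antidiagonal_eq_sum_range_succ_mk (fun p => f p.1 * g p.2),
        Complex.ofReal_sum, Finset.sum_smul]
      refine Finset.sum_congr rfl fun p hp => ?_
      rw [← Finset.HasAntidiagonal.mem_antidiagonal.1 hp, pow_add, mul_def]
    simpa only [hterm] using (hG x).sum_antidiagonal.tendsto_sum_nat

/-- For `f, g` with real coefficients whose associated series converge in SOT, a
non-negative operator `B`, and `h = fg`, one has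
`h(T*,T)(B) = g(T*,T)(f(T*,T)(B))`, with all series converging in SOT. -/
theorem stmt_5 {H : Type*} [NormedAddCommGroup H] [InnerProductSpace ℂ H] [CompleteSpace H]
    (T : H →L[ℂ] H) (f g : ℕ → ℝ)
    (hfw : Summable fun n => |f n|) (hgw : Summable fun n => |g n|)
    (hf : ∃ S : H →L[ℂ] H, ∀ x : H,
      Tendsto (fun N => ∑ n ∈ Finset.range N,
        (((|f n| : ℝ) : ℂ) • (adjoint (T ^ n)) ((T ^ n) x))) atTop (𝓝 (S x)))
    (hg : ∃ S : H →L[ℂ] H, ∀ x : H,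
      Tendsto (fun N => ∑ n ∈ Finset.range N,
        (((|g n| : ℝ) : ℂ) • (adjoint (T ^ n)) ((T ^ n) x))) atTop (𝓝 (S x)))
    (B : H →L[ℂ] H) (hB : B.IsPositive) :
    ∃ F G : H →L[ℂ] H,
      (∀ x : H, Tendsto (fun N => ∑ m ∈ Finset.range N,
        (((f m : ℝ) : ℂ) • (adjoint (T ^ m)) (B ((T ^ m) x)))) atTop (𝓝 (F x))) ∧
      (∀ x : H, Tendsto (fun N => ∑ n ∈ Finset.range N,
        (((g n : ℝ) : ℂ) • (adjoint (T ^ n)) (F ((T ^ n) x)))) atTop (𝓝 (G x))) ∧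
      (∀ x : H, Tendsto (fun N => ∑ k ∈ Finset.range N,
        (((∑ m ∈ Finset.range (k + 1), f m * g (k - m) : ℝ) : ℂ) •
          (adjoint (T ^ k)) (B ((T ^ k) x)))) atTop (𝓝 (G x))) :=
  stmt_5_general T f g hf hg B hB
end

section
/- If q is a real polynomial with q(t) > 0 for every t ∈ [0,1], then there exists a rational function u analytic in a neighborhood of the closed unit disc such that all Taylor coefficients of u are non-negative with u(0) > 0, and all Taylor coefficients of u·q are non-negative with (uq)(0) > 0. -/
/-!
Pick `s > 1` with `q > 0` on `[0, s]`, put `p(x) = q(s x)` and `u(z) = (1 - z / s)^{-(k+1)}`.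
The `n`-th coefficient of `u q` is `s^{-n} C(n+k, k) ∑ₘ pₘ C(n-m+k, k) / C(n+k, k)`, and the ratio
`C(n-m+k, k) / C(n+k, k) = ∏_{i<m} (n-i)/(n+k-i)` differs from `(n/(n+k))^m` by at most `m²/k`,
uniformly in `n`. So the inner sum is within `O(1/k)` of `p(n/(n+k)) ≥ min_{[0,1]} p > 0`, and all
coefficients are non-negative once `k` is large.
-/

open Finset Polynomial

theorem Finset.norm_prod_sub_prod_le {ι R : Type*} [NormedCommRing R] [NormOneClass R]
    (s : Finset ι) {f g : ι → R} (hf : ∀ i ∈ s, ‖f i‖ ≤ 1) (hg : ∀ i ∈ s, ‖g i‖ ≤ 1) :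
    ‖∏ i ∈ s, f i - ∏ i ∈ s, g i‖ ≤ ∑ i ∈ s, ‖f i - g i‖ := by
  classical
  induction s using Finset.induction_on with
  | empty => simp
  | insert a s ha ih =>
    rw [forall_mem_insert] at hf hg
    have hprod : ‖∏ i ∈ s, g i‖ ≤ 1 :=
      (norm_prod_le s g).trans (prod_le_one (fun _ _ => norm_nonneg _) hg.2)
    rw [prod_insert ha, prod_insert ha, sum_insert ha,
      show f a * ∏ i ∈ s, f i - g a * ∏ i ∈ s, g i
        = f a * (∏ i ∈ s, f i - ∏ i ∈ s, g i) + (f a - g a) * ∏ i ∈ s, g i by ring]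
    calc _ ≤ ‖f a‖ * ‖∏ i ∈ s, f i - ∏ i ∈ s, g i‖ + ‖f a - g a‖ * ‖∏ i ∈ s, g i‖ :=
          (norm_add_le _ _).trans (add_le_add (norm_mul_le _ _) (norm_mul_le _ _))
      _ ≤ 1 * ∑ i ∈ s, ‖f i - g i‖ + ‖f a - g a‖ * 1 := by
          gcongr
          · exact hf.1
          · exact ih hf.2 hg.2
      _ = _ := by ring

noncomputable def fallingRatio (k n m : ℕ) : ℝ := ∏ i ∈ range m, ((n : ℝ) - i) / (n + k - i)

theorem fallingRatio_eq_zero {k n m : ℕ} (h : n < m) : fallingRatio k n m = 0 :=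
  prod_eq_zero (mem_range.2 h) (by simp)

theorem choose_sub_add_eq_mul_fallingRatio {k n m : ℕ} (hm : m ≤ n) :
    ((n - m + k).choose k : ℝ) = (n + k).choose k * fallingRatio k n m := by
  induction m with
  | zero => simp [fallingRatio]
  | succ m ih =>
    have hchoose := Nat.choose_mul_succ_eq (n - (m + 1) + k) k
    rw [show n - (m + 1) + k + 1 = n - m + k by omega,
      show n - m + k - k = n - m by omega] at hchoose
    have hchooseR : ((n - (m + 1) + k).choose k : ℝ) * (n + k - m)
        = (n - m + k).choose k * (n - m) := by
      have := congrArg (Nat.cast : ℕ → ℝ) hchoose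
      push_cast [Nat.cast_sub (by omega : m ≤ n)] at this
      linarith
    have hden : (n : ℝ) + k - m ≠ 0 := by
      have : (m : ℝ) < n := by exact_mod_cast hm
      have : (0 : ℝ) ≤ k := k.cast_nonneg
      linarith
    rw [fallingRatio, prod_range_succ, ← fallingRatio, ← mul_assoc, ← ih (by omega),
      mul_div_assoc', eq_div_iff hden, hchooseR]

theorem abs_fallingRatio_factor_sub_le {k n i : ℕ} (hk : 0 < k) (hi : i ≤ n) :
    |((n : ℝ) - i) / (n + k - i) - n / (n + k)| ≤ i / k := by
  have hk' : (0 : ℝ) < k := by exact_mod_cast hk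
  have hi' : (i : ℝ) ≤ n := by exact_mod_cast hi
  have hi0 : (0 : ℝ) ≤ i := i.cast_nonneg
  have hden : (k : ℝ) ≤ n + k - i := by linarith
  have hden0 : (0 : ℝ) < (n + k - i) * (n + k) := by nlinarith
  rw [show ((n : ℝ) - i) / (n + k - i) - n / (n + k) = -(i * k / ((n + k - i) * (n + k))) by
    field_simp [(hk'.trans_le hden).ne']; ring, abs_neg, abs_of_nonneg (by positivity),
    div_le_div_iff₀ hden0 hk', mul_assoc]
  gcongr <;> linarith

theorem abs_fallingRatio_sub_pow_le {k : ℕ} (hk : 0 < k) (n m : ℕ) :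
    |fallingRatio k n m - ((n : ℝ) / (n + k)) ^ m| ≤ m ^ 2 / k := by
  have hk' : (0 : ℝ) < k := by exact_mod_cast hk
  have hn : (0 : ℝ) ≤ n := n.cast_nonneg
  have hx0 : 0 ≤ (n : ℝ) / (n + k) := by positivity
  have hx1 : (n : ℝ) / (n + k) ≤ 1 := (div_le_one (by positivity)).2 (by linarith)
  rcases lt_or_ge n m with hnm | hmn
  · have hnm' : (n : ℝ) + 1 ≤ m := by exact_mod_cast hnm
    rw [fallingRatio_eq_zero hnm, zero_sub, abs_neg, abs_of_nonneg (by positivity)]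
    calc ((n : ℝ) / (n + k)) ^ m ≤ (n : ℝ) / (n + k) := pow_le_of_le_one hx0 hx1 (by omega)
      _ ≤ n / k := div_le_div_of_nonneg_left hn hk' (by linarith)
      _ ≤ m ^ 2 / k := by gcongr; nlinarith
  · have hfactor : ∀ i ∈ range m, |((n : ℝ) - i) / (n + k - i) - n / (n + k)| ≤ m / k :=
      fun i hi => (abs_fallingRatio_factor_sub_le hk ((mem_range.1 hi).le.trans hmn)).trans
        (by gcongr; exact_mod_cast (mem_range.1 hi).le)
    have hfactor_le_one : ∀ i ∈ range m, ‖((n : ℝ) - i) / (n + k - i)‖ ≤ 1 := by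
      intro i hi
      have hi : (i : ℝ) < n := by exact_mod_cast (mem_range.1 hi).trans_le hmn
      rw [Real.norm_of_nonneg (div_nonneg (by linarith) (by linarith)), div_le_one (by linarith)]
      linarith
    have hprod := norm_prod_sub_prod_le (range m) hfactor_le_one
      (g := fun _ => (n : ℝ) / (n + k)) (fun _ _ => by rwa [Real.norm_of_nonneg hx0])
    simp only [Real.norm_eq_abs, prod_const, card_range] at hprod
    calc _ ≤ _ := hprod
      _ ≤ ∑ i ∈ range m, (m : ℝ) / k := sum_le_sum hfactor
      _ = m ^ 2 / k := by rw [sum_const, card_range, nsmul_eq_mul]; ring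

theorem exists_forall_sum_coeff_mul_fallingRatio_nonneg (p : ℝ[X])
    (hp : ∀ x ∈ Set.Icc (0 : ℝ) 1, 0 < p.eval x) :
    ∃ k, ∀ n, 0 ≤ p.sum fun m a => a * fallingRatio k n m := by
  obtain ⟨x₀, hx₀, hmin⟩ := isCompact_Icc.exists_isMinOn (Set.nonempty_Icc.2 zero_le_one)
    p.continuous.continuousOn
  have hδ : 0 < p.eval x₀ := hp x₀ hx₀
  set B := ∑ m ∈ p.support, |p.coeff m| * (m : ℝ) ^ 2
  obtain ⟨k, hk⟩ := exists_nat_gt (B / p.eval x₀)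
  have hk0 : (0 : ℝ) < k :=
    (div_nonneg (sum_nonneg fun _ _ => by positivity) hδ.le).trans_lt hk
  have hB : B / k ≤ p.eval x₀ := by
    rw [div_lt_iff₀ hδ] at hk
    rw [div_le_iff₀ hk0]
    linarith
  refine ⟨k, fun n => ?_⟩
  set x : ℝ := n / (n + k)
  have hx : x ∈ Set.Icc (0 : ℝ) 1 :=
    ⟨by positivity, (div_le_one (by positivity)).2 (by linarith)⟩
  have herr : |(p.sum fun m a => a * fallingRatio k n m) - p.eval x| ≤ B / k := by
    rw [eval_eq_sum, Polynomial.sum_def, Polynomial.sum_def, sum_div, ← sum_sub_distrib]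
    refine (abs_sum_le_sum_abs _ _).trans (sum_le_sum fun m _ => ?_)
    rw [← mul_sub, abs_mul, mul_div_assoc]
    exact mul_le_mul_of_nonneg_left
      (abs_fallingRatio_sub_pow_le (by exact_mod_cast hk0) n m) (abs_nonneg _)
  linarith [abs_le.1 herr, isMinOn_iff.1 hmin x hx]

theorem sum_range_choose_mul_coeff_eq (p : ℝ[X]) (k n : ℕ) :
    ∑ j ∈ range (n + 1), ((j + k).choose k : ℝ) * p.coeff (n - j)
      = (n + k).choose k * p.sum fun m a => a * fallingRatio k n m := by
  have hsupp : ∑ m ∈ range (n + 1), p.coeff m * fallingRatio k n m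
      = p.sum fun m a => a * fallingRatio k n m := by
    rw [p.sum_over_range' (f := fun m a => a * fallingRatio k n m) (fun _ => zero_mul _)
      (n + 1 + p.natDegree) (by omega)]
    refine sum_subset (range_subset_range.2 (by omega)) fun m _ hm => ?_
    rw [fallingRatio_eq_zero (by simpa using hm), mul_zero]
  rw [← hsupp, mul_sum, ← sum_range_reflect]
  refine sum_congr rfl fun m hm => ?_
  have hmn : m ≤ n := mem_range_succ_iff.1 hm
  rw [add_tsub_cancel_right, Nat.sub_sub_self hmn, choose_sub_add_eq_mul_fallingRatio hmn]
  ring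

theorem exists_forall_sum_range_choose_mul_coeff_nonneg (p : ℝ[X])
    (hp : ∀ x ∈ Set.Icc (0 : ℝ) 1, 0 < p.eval x) :
    ∃ k, ∀ n, 0 ≤ ∑ j ∈ range (n + 1), ((j + k).choose k : ℝ) * p.coeff (n - j) := by
  obtain ⟨k, hk⟩ := exists_forall_sum_coeff_mul_fallingRatio_nonneg p hp
  exact ⟨k, fun n => sum_range_choose_mul_coeff_eq p k n ▸ mul_nonneg (by positivity) (hk n)⟩

theorem exists_gt_Icc_subset_of_isOpen {α : Type*} [TopologicalSpace α] [LinearOrder α]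
    [OrderTopology α] [DenselyOrdered α] [NoMaxOrder α] {S : Set α} (hS : IsOpen S) {a b : α}
    (hab : a ≤ b) (h : Set.Icc a b ⊆ S) : ∃ c, b < c ∧ Set.Icc a c ⊆ S := by
  obtain ⟨u, hbu, hu⟩ := exists_Ico_subset_of_mem_nhds (hS.mem_nhds (h ⟨hab, le_rfl⟩))
    (exists_gt b)
  obtain ⟨c, hbc, hcu⟩ := exists_between hbu
  refine ⟨c, hbc, fun t ht => ?_⟩
  rcases le_or_gt t b with htb | hbt
  · exact h ⟨ht.1, htb⟩
  · exact hu ⟨hbt.le, ht.2.trans_lt hcu⟩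

theorem sum_range_mul_inv_pow_mul_coeff {K : Type*} [Field K] (q : K[X]) {s : K} (hs : s ≠ 0)
    (a : ℕ → K) (n : ℕ) :
    ∑ j ∈ range (n + 1), a j * s⁻¹ ^ j * q.coeff (n - j)
      = s⁻¹ ^ n * ∑ j ∈ range (n + 1), a j * (q.comp (C s * X)).coeff (n - j) := by
  rw [mul_sum]
  refine sum_congr rfl fun j hj => ?_
  obtain ⟨e, rfl⟩ : ∃ e, n = j + e := ⟨n - j, by have := mem_range.1 hj; omega⟩
  rw [comp_C_mul_X_coeff, Nat.add_sub_cancel_left, pow_add, inv_pow s e]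
  field_simp

theorem hasSum_choose_mul_pow_mul_pow (k : ℕ) {r : ℝ} {z : ℂ} (h : ‖(r : ℂ) * z‖ < 1) :
    HasSum (fun n => (((n + k).choose k * r ^ n : ℝ) : ℂ) * z ^ n) (1 / (1 - r * z) ^ (k + 1)) := by
  have hterm : (fun n => (((n + k).choose k * r ^ n : ℝ) : ℂ) * z ^ n)
      = fun n => ((n + k).choose k : ℂ) * (r * z) ^ n := by
    funext n
    push_cast
    ring
  exact hterm ▸ hasSum_choose_mul_geometric_of_norm_lt_one k h

/-- If `q` is a real polynomial positive on `[0,1]`, there is a rational function `u`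
analytic on a disc of radius `R > 1`, with non-negative Taylor coefficients and positive
constant term, such that `u·q` also has non-negative Taylor coefficients and positive
constant term. -/
theorem stmt_6 (q : Polynomial ℝ) (hq : ∀ t ∈ Set.Icc (0 : ℝ) 1, 0 < q.eval t) :
    ∃ (R : ℝ) (c : ℕ → ℝ) (p₁ p₂ : Polynomial ℂ),
      1 < R ∧
      (∀ z : ℂ, ‖z‖ < R → Polynomial.eval z p₂ ≠ 0 ∧
        HasSum (fun n => (c n : ℂ) * z ^ n)
          (Polynomial.eval z p₁ / Polynomial.eval z p₂)) ∧
      (∀ n, 0 ≤ c n) ∧ 0 < c 0 ∧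
      (∀ n, 0 ≤ ∑ j ∈ Finset.range (n + 1), c j * q.coeff (n - j)) ∧
      0 < c 0 * q.coeff 0 := by
  obtain ⟨s, hs1, hqs⟩ := exists_gt_Icc_subset_of_isOpen
    (isOpen_lt continuous_const q.continuous) zero_le_one hq
  have hs0 : 0 < s := by linarith
  obtain ⟨k, hk⟩ := exists_forall_sum_range_choose_mul_coeff_nonneg (q.comp (C s * X))
    fun x hx => by
      simp only [eval_comp, eval_mul, eval_C, eval_X]
      exact hqs ⟨by nlinarith [hx.1], by nlinarith [hx.2]⟩
  refine ⟨(1 + s) / 2, fun n => (n + k).choose k * s⁻¹ ^ n, 1,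
    (1 - C ((s⁻¹ : ℝ) : ℂ) * X) ^ (k + 1), by linarith, fun z hz => ?_, fun n => by positivity,
    by simp, fun n => ?_, by simpa [coeff_zero_eq_eval_zero] using hq 0 ⟨le_rfl, zero_le_one⟩⟩
  · have hrz : ‖((s⁻¹ : ℝ) : ℂ) * z‖ < 1 := by
      rw [norm_mul, Complex.norm_real, Real.norm_of_nonneg (by positivity), inv_mul_lt_one₀ hs0]
      linarith
    simp only [eval_pow, eval_sub, eval_one, eval_mul, eval_C, eval_X]
    refine ⟨pow_ne_zero _ (sub_ne_zero.2 fun h => ?_), hasSum_choose_mul_pow_mul_pow k hrz⟩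
    rw [← h, norm_one] at hrz
    exact lt_irrefl _ hrz
  · rw [sum_range_mul_inv_pow_mul_coeff q hs0.ne']
    exact mul_nonneg (by positivity) (hk n)
end

section
/- If f is in the Wiener algebra with real Taylor coefficients and f(t) > 0 for every t ∈ [0,1], then there exists g in the Wiener algebra with real coefficients such that g ≻ 0 and fg ≻ 0, i.e., all Taylor coefficients of g and of fg are non-negative and their constant terms are positive. -/
/-!
Let `ε > 0` be the minimum of `F(t) = ∑ fₙ tⁿ` on `[0, 1]`. Split `f = P + ρ`, where `P` is a
truncation of `f` and `∑ |ρₙ| < ε / 2`; then `P > ε / 2` on `[0, 1]`, hence on some `[0, R]`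
with `R > 1`. A quantitative Pólya argument handles `P`: for `G = (1 - X / R)^{-(e+1)}` the
ratio of the `n`-th coefficients of `P G` and `G` is
`∑ pⱼ Rʲ C(n-j+e, e) / C(n+e, e) = P(R n / (n + e)) + O(1/e)`,
so for large `e` every coefficient of `P G` is at least `ε / 2` times that of `G`. The tail is
absorbed by the resolvent `E = (1 - τ / (ε/2))⁻¹` of `τ = |ρ|`, which has nonnegative summable
coefficients because `∑ τₙ < ε / 2`. Then `g = G E` works, since
`f g = (P G - (ε/2) G) E + (ρ + τ) G E + (ε/2) G` is a sum of products of nonnegative series.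
-/
open Finset PowerSeries
open scoped Polynomial

theorem coeff_mul_eq_sum_range {R : Type*} [CommSemiring R] (φ ψ : R⟦X⟧) (n : ℕ) :
    coeff n (φ * ψ) = ∑ j ∈ range (n + 1), coeff j φ * coeff (n - j) ψ := by
  rw [coeff_mul, Nat.sum_antidiagonal_eq_sum_range_succ fun i k => coeff i φ * coeff k ψ]

section CoeffNonneg

variable {R : Type*} [CommSemiring R] [PartialOrder R]

def CoeffNonneg (φ : R⟦X⟧) : Prop := ∀ n, 0 ≤ coeff n φ

theorem coeffNonneg_C {a : R} (ha : 0 ≤ a) : CoeffNonneg (C a) := fun n => by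
  rw [coeff_C]; split_ifs <;> simp [ha]

variable [IsOrderedRing R]

theorem CoeffNonneg.add {φ ψ : R⟦X⟧} (hφ : CoeffNonneg φ) (hψ : CoeffNonneg ψ) :
    CoeffNonneg (φ + ψ) := fun n => by
  rw [map_add]; exact add_nonneg (hφ n) (hψ n)

theorem CoeffNonneg.mul {φ ψ : R⟦X⟧} (hφ : CoeffNonneg φ) (hψ : CoeffNonneg ψ) :
    CoeffNonneg (φ * ψ) := fun n => by
  rw [coeff_mul]; exact sum_nonneg fun p _ => mul_nonneg (hφ p.1) (hψ p.2)

theorem sum_range_coeff_mul_le {φ ψ : R⟦X⟧} (hφ : CoeffNonneg φ) (hψ : CoeffNonneg ψ) (M : ℕ) :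
    ∑ n ∈ range M, coeff n (φ * ψ) ≤
      (∑ n ∈ range M, coeff n φ) * ∑ n ∈ range M, coeff n ψ := by
  simp only [coeff_mul]
  rw [sum_congr rfl fun n _ => Nat.sum_antidiagonal_eq_sum_range_succ
    (fun i k => coeff i φ * coeff k ψ) n]
  rw [sum_range_diag_flip M fun i k => coeff i φ * coeff k ψ, sum_mul]
  gcongr with i
  rw [← mul_sum]
  gcongr
  · exact hφ i
  · exact fun k _ _ => hψ k
  · exact Nat.sub_le M i

end CoeffNonneg

theorem summable_norm_coeff_mul {R : Type*} [NormedCommRing R] {φ ψ : R⟦X⟧}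
    (hφ : Summable fun n => ‖coeff n φ‖) (hψ : Summable fun n => ‖coeff n ψ‖) :
    Summable fun n => ‖coeff n (φ * ψ)‖ := by
  simpa only [coeff_mul] using summable_norm_sum_mul_antidiagonal_of_summable_norm hφ hψ


section Resolvent

variable {k : Type*} [Field k] [LinearOrder k] [IsStrictOrderedRing k]

theorem coeffNonneg_of_C_sub_mul_eq {τ E : k⟦X⟧} {b : k} (hb : 0 < b) (hτ : CoeffNonneg τ)
    (hτ0 : constantCoeff τ = 0) (hE : (C b - τ) * E = C b) : CoeffNonneg E := by
  have hrec : C b * E = C b + τ * E := by linear_combination hE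
  intro n
  induction n using Nat.strong_induction_on with
  | _ n ih =>
    have h := congrArg (coeff n) hrec
    rw [coeff_C_mul, map_add, coeff_mul] at h
    refine (mul_nonneg_iff_of_pos_left hb).1 (h ▸ add_nonneg (coeffNonneg_C hb.le n) ?_)
    refine sum_nonneg fun p hp => ?_
    rcases Nat.eq_zero_or_pos p.1 with h0 | h0
    · rw [h0, coeff_zero_eq_constantCoeff_apply, hτ0, zero_mul]
    · exact mul_nonneg (hτ _) (ih _ (by have := mem_antidiagonal.1 hp; omega))

theorem CoeffNonneg.mul_mul_of_C_sub_mul_eq {F P G E τ : k⟦X⟧} {b : k} (hb : 0 ≤ b)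
    (hG : CoeffNonneg G) (hE : CoeffNonneg E) (hPG : CoeffNonneg (P * G - C b * G))
    (hFτ : CoeffNonneg (F - P + τ)) (hτE : (C b - τ) * E = C b) : CoeffNonneg (F * (G * E)) := by
  have : F * (G * E) = (P * G - C b * G) * E + (F - P + τ) * (G * E) + C b * G := by
    linear_combination G * hτE
  rw [this]
  exact ((hPG.mul hE).add (hFτ.mul (hG.mul hE))).add ((coeffNonneg_C hb).mul hG)

end Resolvent

theorem summable_coeff_of_C_sub_mul_eq {τ E : ℝ⟦X⟧} {b : ℝ} (hb : 0 < b) (hτ : CoeffNonneg τ)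
    (hτ0 : constantCoeff τ = 0) (hτsum : Summable fun n => coeff n τ) (hτb : ∑' n, coeff n τ < b)
    (hE : (C b - τ) * E = C b) : Summable fun n => coeff n E := by
  have hE0 := coeffNonneg_of_C_sub_mul_eq hb hτ hτ0 hE
  have hrec : C b * E = C b + τ * E := by linear_combination hE
  refine summable_of_sum_range_le hE0 (c := b / (b - ∑' n, coeff n τ)) fun M => ?_
  set S := ∑ n ∈ range M, coeff n E
  have hC : ∑ n ∈ range M, coeff n (C b) ≤ b := by
    simp only [coeff_C, sum_ite_eq', mem_range]; split_ifs <;> linarith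
  have hτM : ∑ n ∈ range M, coeff n τ ≤ ∑' n, coeff n τ := hτsum.sum_le_tsum _ fun n _ => hτ n
  have key : b * S ≤ b + (∑' n, coeff n τ) * S :=
    calc b * S = ∑ n ∈ range M, coeff n (C b) + ∑ n ∈ range M, coeff n (τ * E) := by
          rw [mul_sum, ← sum_add_distrib]
          exact sum_congr rfl fun n _ => by rw [← coeff_C_mul, hrec, map_add]
      _ ≤ b + (∑' n, coeff n τ) * S := by
          gcongr
          exact (sum_range_coeff_mul_le hτ hE0 M).trans
            (mul_le_mul_of_nonneg_right hτM (sum_nonneg fun n _ => hE0 n))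
  rw [le_div_iff₀ (by linarith)]
  linarith

theorem exists_C_sub_mul_eq_C {τ : ℝ⟦X⟧} {b : ℝ} (hb : 0 < b) (hτ : CoeffNonneg τ)
    (hτ0 : constantCoeff τ = 0) (hτsum : Summable fun n => coeff n τ) (hτb : ∑' n, coeff n τ < b) :
    ∃ E : ℝ⟦X⟧, (C b - τ) * E = C b ∧ constantCoeff E = 1 ∧ CoeffNonneg E ∧
      Summable fun n => coeff n E := by
  have hτE : (C b - τ) * (C b * (C b - τ)⁻¹) = C b := by
    rw [mul_left_comm, PowerSeries.mul_inv_cancel _ (by simp [hτ0, hb.ne']), mul_one]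
  exact ⟨_, hτE, by simp [hτ0, hb.ne'], coeffNonneg_of_C_sub_mul_eq hb hτ hτ0 hτE,
    summable_coeff_of_C_sub_mul_eq hb hτ hτ0 hτsum hτb hτE⟩

theorem div_add_sub_div_add_le {p q e : ℝ} (hp : 0 < p) (hpq : p ≤ q) (he : 0 ≤ e) :
    p / (p + e) ≤ q / (q + e) ∧ q / (q + e) - p / (p + e) ≤ (q - p) / (q + e) := by
  have hq : 0 < q := hp.trans_le hpq
  have hdiff : q / (q + e) - p / (p + e) = e * (q - p) / ((q + e) * (p + e)) := by
    field_simp; ring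
  constructor
  · rw [← sub_nonneg, hdiff]; have := sub_nonneg.2 hpq; positivity
  · rw [hdiff, div_le_div_iff₀ (by positivity) (by positivity)]
    have := sub_nonneg.2 hpq
    nlinarith [mul_nonneg (mul_nonneg this hp.le) (by positivity : 0 ≤ q + e)]

theorem cast_choose_eq_choose_succ_mul (e m : ℕ) :
    ((e + m).choose e : ℝ) = (e + (m + 1)).choose e * ((m + 1) / (m + 1 + e)) := by
  have := congrArg (Nat.cast (R := ℝ)) (Nat.choose_mul_succ_eq (e + m) e)
  rw [show e + m + 1 - e = m + 1 by omega, show e + m + 1 = e + (m + 1) by ring] at this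
  push_cast at this
  field_simp
  linarith

-- Each step of the induction multiplies by `(m + 1) / (m + 1 + e)`, which lies within
-- `j / (m + j + e)` below `x = (m + j) / (m + j + e)`.
theorem choose_le_choose_mul_pow_and_le (e m j : ℕ) :
    ((e + m).choose e : ℝ) ≤ (e + (m + j)).choose e * (((m : ℝ) + j) / (m + j + e)) ^ j ∧
    (e + (m + j)).choose e * (((m : ℝ) + j) / (m + j + e)) ^ j ≤
      (e + m).choose e + (e + (m + j)).choose e * j ^ 2 / (m + j + e) := by
  induction j generalizing m with
  | zero => simp
  | succ j ih =>
    obtain ⟨ih₁, ih₂⟩ := ih (m + 1)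
    set B : ℝ := ↑((e + (m + (j + 1))).choose e)
    set s : ℝ := m + (j + 1 : ℕ) + e
    set x : ℝ := ((m : ℝ) + (j + 1 : ℕ)) / s
    set c : ℝ := ↑((e + m).choose e)
    set c' : ℝ := ↑((e + (m + 1)).choose e)
    set a : ℝ := (m + 1) / (m + 1 + e)
    rw [show e + (m + 1 + j) = e + (m + (j + 1)) by ring,
      show ((m + 1 : ℕ) : ℝ) + j = m + (j + 1 : ℕ) by push_cast; ring] at ih₁ ih₂
    have hca : c = c' * a := cast_choose_eq_choose_succ_mul e m
    obtain ⟨hax, hxa⟩ := div_add_sub_div_add_le (p := m + 1) (q := m + (j + 1 : ℕ))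
      (e := e) (by positivity) (by push_cast; linarith [j.cast_nonneg (α := ℝ)]) e.cast_nonneg
    rw [show ((m : ℝ) + (j + 1 : ℕ)) - (m + 1) = j by push_cast; ring] at hxa
    change a ≤ x at hax; change x - a ≤ j / s at hxa
    have hx1 : x ≤ 1 := div_le_one_of_le₀ (by linarith [e.cast_nonneg (α := ℝ)]) (by positivity)
    have hB0 : 0 ≤ B := by positivity
    have hc'B : c' ≤ B := ih₁.trans (mul_le_of_le_one_right hB0 (pow_le_one₀ (by positivity) hx1))
    constructor
    · rw [hca, pow_succ, ← mul_assoc]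
      exact mul_le_mul ih₁ hax (by positivity) (by positivity)
    · calc B * x ^ (j + 1) = x * (B * x ^ j) := by ring
        _ ≤ x * (c' + B * j ^ 2 / s) := by gcongr
        _ ≤ c' * a + c' * (x - a) + B * j ^ 2 / s := by
            have : x * (B * j ^ 2 / s) ≤ B * j ^ 2 / s :=
              mul_le_of_le_one_left (by positivity) hx1
            nlinarith
        _ ≤ c + B * (j / s) + B * j ^ 2 / s := by
            rw [hca]; gcongr
        _ ≤ c + B * (j + 1 : ℕ) ^ 2 / s := by
            rw [add_assoc, mul_div_assoc', ← add_div, ← mul_add]; gcongr; push_cast; nlinarith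

-- The `if` stands for the missing coefficient of `X ^ (n - j)` when `j > n`, where `n - j`
-- would truncate to `0`.
theorem abs_choose_sub_choose_mul_pow_le (e n j : ℕ) :
    |(if j ≤ n then ((e + (n - j)).choose e : ℝ) else 0) -
        (e + n).choose e * ((n : ℝ) / (n + e)) ^ j| ≤ (e + n).choose e * j ^ 2 / (n + e) := by
  split_ifs with hjn
  · obtain ⟨m, rfl⟩ := Nat.exists_eq_add_of_le' hjn
    obtain ⟨h₁, h₂⟩ := choose_le_choose_mul_pow_and_le e m j
    rw [Nat.add_sub_cancel]
    push_cast
    have : (0 : ℝ) ≤ (e + (m + j)).choose e * j ^ 2 / (m + j + e) := by positivity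
    rw [abs_sub_le_iff]
    constructor <;> linarith
  · have hx1 : (n : ℝ) / (n + e) ≤ 1 := div_le_one_of_le₀ (by simp) (by positivity)
    have hjn' : (n : ℝ) ≤ j ^ 2 := by
      exact_mod_cast (Nat.le_of_lt (not_le.1 hjn)).trans (Nat.le_self_pow two_ne_zero j)
    rw [zero_sub, abs_neg, abs_of_nonneg (by positivity), mul_div_assoc]
    gcongr
    calc ((n : ℝ) / (n + e)) ^ j ≤ n / (n + e) := pow_le_of_le_one (by positivity) hx1 (by omega)
      _ ≤ j ^ 2 / (n + e) := by gcongr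

theorem coeff_rescale_invOneSubPow (R : ℝ) (e n : ℕ) :
    coeff n (rescale R⁻¹ (invOneSubPow ℝ (e + 1) : ℝ⟦X⟧)) = R⁻¹ ^ n * (e + n).choose e := by
  rw [coeff_rescale, invOneSubPow_val_succ_eq_mk_add_choose, coeff_mk]

theorem coeff_mul_rescale_invOneSubPow (P : ℝ[X]) {R : ℝ} (hR : R ≠ 0) (e : ℕ) {n M : ℕ}
    (hnM : n < M) :
    coeff n ((P : ℝ⟦X⟧) * rescale R⁻¹ (invOneSubPow ℝ (e + 1) : ℝ⟦X⟧)) = R⁻¹ ^ n *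
      ∑ j ∈ range M, P.coeff j * R ^ j * if j ≤ n then ((e + (n - j)).choose e : ℝ) else 0 := by
  rw [coeff_mul_eq_sum_range, mul_sum, ← sum_range_add_sum_Ico _ (by omega : n + 1 ≤ M),
    sum_eq_zero (s := Ico (n + 1) M) fun j hj => by simp [Nat.not_le.2 (mem_Ico.1 hj).1],
    add_zero]
  refine sum_congr rfl fun j hj => ?_
  have hjn : j ≤ n := Nat.lt_succ_iff.1 (mem_range.1 hj)
  simp only [Polynomial.coeff_coe, coeff_rescale_invOneSubPow, if_pos hjn,
    pow_sub₀ _ (inv_ne_zero hR) hjn, inv_pow, inv_inv]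
  field_simp

theorem mul_sub_abs_mul_le_mul {p c d ε : ℝ} (h : |c - d| ≤ ε) : p * d - |p| * ε ≤ p * c := by
  have := neg_abs_le (p * (c - d))
  rw [abs_mul] at this
  nlinarith [mul_le_mul_of_nonneg_left h (abs_nonneg p)]

theorem mul_coeff_rescale_invOneSubPow_le (P : ℝ[X]) {R a : ℝ} (hR : 0 < R)
    (hP : ∀ x ∈ Set.Icc 0 R, a ≤ P.eval x) (e n : ℕ) :
    (a - P.sum (fun j c => |c| * R ^ j * j ^ 2) / (n + e)) *
        coeff n (rescale R⁻¹ (invOneSubPow ℝ (e + 1) : ℝ⟦X⟧)) ≤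
      coeff n ((P : ℝ⟦X⟧) * rescale R⁻¹ (invOneSubPow ℝ (e + 1) : ℝ⟦X⟧)) := by
  set M := n + P.natDegree + 1
  set K := P.sum fun j c => |c| * R ^ j * j ^ 2
  set B : ℝ := ↑((e + n).choose e)
  set x : ℝ := n / (n + e)
  have hx1 : x ≤ 1 := div_le_one_of_le₀ (by simp) (by positivity)
  have heval : P.eval (R * x) = ∑ j ∈ range M, P.coeff j * R ^ j * x ^ j := by
    rw [Polynomial.eval_eq_sum_range' (n := M) (by omega)]
    simp_rw [mul_pow, mul_assoc]
  have hK : K = ∑ j ∈ range M, |P.coeff j * R ^ j| * j ^ 2 := by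
    simp_rw [abs_mul, abs_pow, abs_of_pos hR]
    exact Polynomial.sum_over_range' _ (by simp) _ (by omega)
  have hPx : a ≤ P.eval (R * x) := hP _ ⟨by positivity, mul_le_of_le_one_right hR.le hx1⟩
  rw [coeff_mul_rescale_invOneSubPow P hR.ne' e (by omega : n < M), coeff_rescale_invOneSubPow,
    mul_left_comm]
  gcongr
  calc (a - K / (n + e)) * B ≤ B * P.eval (R * x) - K * (B / (n + e)) := by
        rw [sub_mul, mul_comm a, div_mul_eq_mul_div, mul_div_assoc]; gcongr
    _ = ∑ j ∈ range M, (P.coeff j * R ^ j * (B * x ^ j) -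
          |P.coeff j * R ^ j| * (B * j ^ 2 / (n + e))) := by
        rw [heval, hK, sum_sub_distrib, mul_sum, sum_mul]
        congr 1 <;> exact sum_congr rfl fun j _ => by ring
    _ ≤ _ := sum_le_sum fun j _ =>
        mul_sub_abs_mul_le_mul (abs_choose_sub_choose_mul_pow_le e n j)

theorem coeffNonneg_rescale_invOneSubPow {R : ℝ} (hR : 0 < R) (e : ℕ) :
    CoeffNonneg (rescale R⁻¹ (invOneSubPow ℝ (e + 1) : ℝ⟦X⟧)) := fun n => by
  rw [coeff_rescale_invOneSubPow]; positivity

theorem summable_coeff_rescale_invOneSubPow {R : ℝ} (hR : 1 < R) (e : ℕ) :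
    Summable fun n => coeff n (rescale R⁻¹ (invOneSubPow ℝ (e + 1) : ℝ⟦X⟧)) := by
  have h := summable_choose_mul_geometric_of_norm_lt_one (R := ℝ) e (r := R⁻¹)
    (by rw [norm_inv, Real.norm_of_nonneg (by linarith)]; exact inv_lt_one_of_one_lt₀ hR)
  refine h.congr fun n => ?_
  rw [coeff_rescale_invOneSubPow, add_comm, mul_comm]

theorem exists_coeffNonneg_mul_rescale_invOneSubPow_sub (P : ℝ[X]) {R b : ℝ} (hR : 0 < R)
    (hP : ∀ x ∈ Set.Icc 0 R, b < P.eval x) :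
    ∃ e : ℕ, CoeffNonneg ((P : ℝ⟦X⟧) * rescale R⁻¹ (invOneSubPow ℝ (e + 1) : ℝ⟦X⟧) -
      C b * rescale R⁻¹ (invOneSubPow ℝ (e + 1) : ℝ⟦X⟧)) := by
  obtain ⟨x₀, hx₀, hmin⟩ := isCompact_Icc.exists_isMinOn (Set.nonempty_Icc.2 hR.le)
    P.continuous.continuousOn
  set K := P.sum fun j c => |c| * R ^ j * j ^ 2
  have hK : 0 ≤ K := by simp only [K, Polynomial.sum_def]; exact sum_nonneg fun j _ => by positivity
  have hgap : 0 < P.eval x₀ - b := sub_pos.2 (hP x₀ hx₀)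
  obtain ⟨e, he⟩ := exists_nat_gt (K / (P.eval x₀ - b))
  refine ⟨e, fun n => ?_⟩
  have hKe : K / (n + e) ≤ P.eval x₀ - b := by
    have he0 : (0 : ℝ) < e := (div_nonneg hK hgap.le).trans_lt he
    rw [div_le_iff₀ (by positivity)]
    rw [div_lt_iff₀ hgap] at he
    nlinarith [n.cast_nonneg (α := ℝ)]
  rw [map_sub, coeff_C_mul, sub_nonneg]
  refine le_trans ?_ (mul_coeff_rescale_invOneSubPow_le P hR (fun x hx => hmin hx) e n)
  gcongr
  · exact coeffNonneg_rescale_invOneSubPow hR e n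
  · linarith

theorem exists_one_lt_forall_Icc_lt {f : ℝ → ℝ} {b : ℝ} (hf : ContinuousAt f 1)
    (hb : ∀ x ∈ Set.Icc 0 1, b < f x) : ∃ R, 1 < R ∧ ∀ x ∈ Set.Icc 0 R, b < f x := by
  obtain ⟨η, hη, hball⟩ := Metric.eventually_nhds_iff.1
    (hf.eventually (eventually_gt_nhds (hb 1 ⟨zero_le_one, le_rfl⟩)))
  refine ⟨1 + η / 2, by linarith, fun x ⟨hx0, hxR⟩ => ?_⟩
  rcases le_or_gt x 1 with hx1 | hx1
  · exact hb x ⟨hx0, hx1⟩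
  · exact hball (by rw [Real.dist_eq, abs_of_pos (by linarith)]; linarith)

theorem norm_mul_pow_le_abs (f : ℕ → ℝ) {t : ℝ} (ht : t ∈ Set.Icc (0 : ℝ) 1) (n : ℕ) :
    ‖f n * t ^ n‖ ≤ |f n| := by
  rw [Real.norm_eq_abs, abs_mul, abs_pow, abs_of_nonneg ht.1]
  exact mul_le_of_le_one_right (abs_nonneg _) (pow_le_one₀ ht.1 ht.2)

theorem continuousOn_tsum_mul_pow {f : ℕ → ℝ} (hf : Summable fun n => |f n|) :
    ContinuousOn (fun t => ∑' n, f n * t ^ n) (Set.Icc 0 1) :=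
  continuousOn_tsum (fun n => (continuous_const.mul (continuous_pow n)).continuousOn) hf
    fun n _ ht => norm_mul_pow_le_abs f ht n

theorem abs_tsum_mul_pow_sub_eval_trunc_le {f : ℕ → ℝ} (hf : Summable fun n => |f n|) (N : ℕ)
    {t : ℝ} (ht : t ∈ Set.Icc (0 : ℝ) 1) :
    |∑' n, f n * t ^ n - (trunc N (mk f)).eval t| ≤ ∑' n, |f (n + N)| := by
  have hsum : Summable fun n => f n * t ^ n := hf.of_norm_bounded (norm_mul_pow_le_abs f ht)
  rw [← hsum.sum_add_tsum_nat_add N, Polynomial.eval, eval₂_trunc_eq_sum_range]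
  simp only [coeff_mk, RingHom.id_apply, add_sub_cancel_left]
  exact tsum_of_norm_bounded ((summable_nat_add_iff N).2 hf).hasSum
    fun n => norm_mul_pow_le_abs f ht (n + N)

theorem coeff_mk_sub_trunc (f : ℕ → ℝ) (N n : ℕ) :
    coeff n (mk f - (trunc N (mk f) : ℝ⟦X⟧)) = if n < N then 0 else f n := by
  rw [map_sub, Polynomial.coeff_coe, coeff_trunc, coeff_mk]
  split_ifs <;> simp

theorem summable_abs_coeff_mk_sub_trunc {f : ℕ → ℝ} (hf : Summable fun n => |f n|) (N : ℕ) :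
    Summable fun n => |coeff n (mk f - (trunc N (mk f) : ℝ⟦X⟧))| :=
  hf.of_nonneg_of_le (fun _ => abs_nonneg _) fun n => by
    rw [coeff_mk_sub_trunc]; split_ifs <;> simp

theorem tsum_abs_coeff_mk_sub_trunc {f : ℕ → ℝ} (hf : Summable fun n => |f n|) (N : ℕ) :
    ∑' n, |coeff n (mk f - (trunc N (mk f) : ℝ⟦X⟧))| = ∑' n, |f (n + N)| := by
  rw [← (summable_abs_coeff_mk_sub_trunc hf N).sum_add_tsum_nat_add N, sum_eq_zero fun n hn => by
    rw [coeff_mk_sub_trunc, if_pos (mem_range.1 hn), abs_zero], zero_add]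
  simp only [coeff_mk_sub_trunc, if_neg (Nat.not_lt.2 (Nat.le_add_left N _))]

theorem exists_coeffNonneg_mk_sub_trunc_add {f : ℕ → ℝ} (hf : Summable fun n => |f n|) {N : ℕ}
    (hN : 0 < N) :
    ∃ τ : ℝ⟦X⟧, CoeffNonneg τ ∧ constantCoeff τ = 0 ∧ (Summable fun n => coeff n τ) ∧
      ∑' n, coeff n τ = ∑' n, |f (n + N)| ∧ CoeffNonneg (mk f - (trunc N (mk f) : ℝ⟦X⟧) + τ) := by
  refine ⟨mk fun n => |coeff n (mk f - trunc N (mk f))|, fun n => by simp, ?_, ?_, ?_,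
    fun n => by rw [map_add, coeff_mk]; exact add_abs_nonneg _⟩
  · rw [← coeff_zero_eq_constantCoeff_apply, coeff_mk, coeff_mk_sub_trunc, if_pos hN, abs_zero]
  · simpa only [coeff_mk] using summable_abs_coeff_mk_sub_trunc hf N
  · simpa only [coeff_mk] using tsum_abs_coeff_mk_sub_trunc hf N

theorem exists_tsum_abs_tail_lt_and_lt_eval_trunc {f : ℕ → ℝ} (hf : Summable fun n => |f n|)
    (hpos : ∀ t ∈ Set.Icc (0 : ℝ) 1, 0 < ∑' n, f n * t ^ n) :
    ∃ b > 0, ∃ N > 0, ∑' n, |f (n + N)| < b ∧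
      ∀ x ∈ Set.Icc (0 : ℝ) 1, b < (trunc N (mk f)).eval x := by
  obtain ⟨t₀, ht₀, hmin⟩ := isCompact_Icc.exists_isMinOn (Set.nonempty_Icc.2 zero_le_one)
    (continuousOn_tsum_mul_pow hf)
  have hε := half_pos (hpos t₀ ht₀)
  obtain ⟨N, hN⟩ := Filter.eventually_atTop.1
    ((tendsto_sum_nat_add fun n => |f n|).eventually (gt_mem_nhds hε))
  refine ⟨_, hε, N + 1, N.succ_pos, hN _ N.le_succ, fun x hx => ?_⟩
  have := abs_sub_le_iff.1 (abs_tsum_mul_pow_sub_eval_trunc_le hf (N + 1) hx)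
  linarith [hN (N + 1) N.le_succ, isMinOn_iff.1 hmin x hx]

/-- If `f` is in the Wiener algebra with real coefficients and `f(t) > 0` on `[0,1]`,
then there is `g` in the Wiener algebra with real coefficients such that `g ≻ 0` and
`fg ≻ 0`. -/
theorem stmt_7 (f : ℕ → ℝ) (hf : Summable fun n => |f n|)
    (hpos : ∀ t ∈ Set.Icc (0 : ℝ) 1, 0 < ∑' n : ℕ, f n * t ^ n) :
    ∃ g : ℕ → ℝ, (Summable fun n => |g n|) ∧
      (∀ n, 0 ≤ g n) ∧ 0 < g 0 ∧
      (∀ n, 0 ≤ ∑ j ∈ Finset.range (n + 1), f j * g (n - j)) ∧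
      0 < f 0 * g 0 := by
  obtain ⟨b, hb, N, hN, htail, hP⟩ := exists_tsum_abs_tail_lt_and_lt_eval_trunc hf hpos
  obtain ⟨τ, hτ, hτ0, hτsum, hτtsum, hfτ⟩ := exists_coeffNonneg_mk_sub_trunc_add hf hN
  obtain ⟨E, hτE, hE0, hE, hEsum⟩ := exists_C_sub_mul_eq_C hb hτ hτ0 hτsum (hτtsum ▸ htail)
  obtain ⟨R, hR, hPR⟩ := exists_one_lt_forall_Icc_lt (trunc N (mk f)).continuous.continuousAt hP
  obtain ⟨e, hPG⟩ := exists_coeffNonneg_mul_rescale_invOneSubPow_sub _ (zero_lt_one.trans hR) hPR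
  set G := rescale R⁻¹ (invOneSubPow ℝ (e + 1) : ℝ⟦X⟧)
  have hG := coeffNonneg_rescale_invOneSubPow (zero_lt_one.trans hR) e
  have hGE : coeff 0 (G * E) = 1 := by
    rw [coeff_zero_eq_constantCoeff_apply, map_mul, hE0, mul_one,
      ← coeff_zero_eq_constantCoeff_apply, coeff_rescale_invOneSubPow]
    simp
  have hfg := hG.mul_mul_of_C_sub_mul_eq hb.le hE hPG hfτ hτE
  have hf0 := hP 0 ⟨le_rfl, zero_le_one⟩
  rw [← Polynomial.coeff_zero_eq_eval_zero, coeff_trunc, if_pos hN, coeff_mk] at hf0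
  refine ⟨fun n => coeff n (G * E), summable_norm_coeff_mul
    (summable_coeff_rescale_invOneSubPow hR e).norm hEsum.norm, hG.mul hE,
    by simp only [hGE, zero_lt_one], fun n => ?_, by simp only [hGE, mul_one]; linarith⟩
  simpa only [coeff_mul_eq_sum_range, coeff_mk] using hfg n
end

section
/- For a ∈ ℂ not a nonpositive integer, the n-th Taylor coefficient k^a(n) of (1-t)^{-a} equals Γ(n+a)/(Γ(a)Γ(n+1)) = binom(n+a-1, a-1); moreover, if 0 < a ≤ 1 then (n+1)^{a-1}/Γ(a) ≤ k^a(n) ≤ n^{a-1}/Γ(a) for all n ≥ 1. -/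
/-!
The generating function `(1 - t)^{-a}` is the binomial series, whose `n`-th coefficient is
`a (a + 1) ⋯ (a + n - 1) / n! = Γ(n + a) / (Γ(a) Γ(n + 1))`; uniqueness of power series
coefficients identifies it with any `c` summing to `(1 - t)^{-a}` near `0`. For `0 < a ≤ 1`
the two bounds are Wendel's inequalities, both instances of the log-convexity of `Γ` on
intervals of length one.
-/

open Filter Topology FormalMultilinearSeries

section PowerSeries

variable {𝕜 : Type*} [NontriviallyNormedField 𝕜] {f : 𝕜 → 𝕜} {c d : ℕ → 𝕜}

theorem hasFPowerSeriesAt_ofScalars_of_eventually_hasSum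
    (h : ∀ᶠ t in 𝓝 0, HasSum (fun n => c n * t ^ n) (f t)) :
    HasFPowerSeriesAt f (ofScalars 𝕜 c) 0 := by
  obtain ⟨ε, hε, hball⟩ := Metric.eventually_nhds_iff.1 h
  obtain ⟨t₀, ht₀, ht₀ε⟩ := NormedField.exists_norm_lt 𝕜 hε
  have hsum : HasSum (fun n => c n * t₀ ^ n) (f t₀) := hball (by simpa using ht₀ε)
  refine ⟨‖t₀‖₊, ?_, by simpa using ht₀, fun {y} hy => ?_⟩
  · refine (ofScalars 𝕜 c).le_radius_of_tendsto (l := 0) ?_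
    simpa [ofScalars_norm] using hsum.summable.tendsto_atTop_zero.norm
  · have hy : ‖y‖ < ‖t₀‖ := by simpa [enorm_eq_nnnorm] using hy
    simpa [ofScalars_apply_eq, mul_comm] using hball (y := y) (by simpa using hy.trans ht₀ε)

theorem HasFPowerSeriesAt.eq_of_eventually_hasSum (hf : HasFPowerSeriesAt f (ofScalars 𝕜 d) 0)
    (h : ∀ᶠ t in 𝓝 0, HasSum (fun n => c n * t ^ n) (f t)) : c = d :=
  (ofScalars_series_eq_iff 𝕜 c d).1
    ((hasFPowerSeriesAt_ofScalars_of_eventually_hasSum h).eq_formalMultilinearSeries hf)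

end PowerSeries

theorem Complex.multichoose_eq_Gamma_div {a : ℂ} (ha : ∀ k : ℕ, a ≠ -k) (n : ℕ) :
    Ring.multichoose a n = Gamma (n + a) / (Gamma a * Gamma (n + 1)) := by
  have h := Ring.factorial_nsmul_multichoose_eq_ascPochhammer a n
  rw [Polynomial.ascPochhammer_smeval_eq_eval, ← Gamma_add_nat_div_Gamma_eq a ha,
    nsmul_eq_mul] at h
  rw [Gamma_nat_eq_factorial, add_comm, ← div_div, ← h,
    mul_div_cancel_left₀ _ (by exact_mod_cast n.factorial_ne_zero)]

theorem Real.multichoose_eq_Gamma_div {a : ℝ} (ha : ∀ k : ℕ, a ≠ -k) (n : ℕ) :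
    Ring.multichoose a n = Gamma (n + a) / (Gamma a * Gamma (n + 1)) := by
  apply Complex.ofReal_injective
  have ha' : ∀ k : ℕ, (a : ℂ) ≠ -k := fun k => by exact_mod_cast ha k
  have := Ring.map_multichoose Complex.ofRealHom a n
  push_cast [Complex.ofRealHom_eq_coe] at this
  rw [this, Complex.multichoose_eq_Gamma_div ha']
  push_cast [← Complex.Gamma_ofReal]
  rfl

theorem Complex.hasFPowerSeriesAt_one_sub_cpow_neg (a : ℂ) :
    HasFPowerSeriesAt (fun t => (1 - t) ^ (-a)) (ofScalars ℂ (Ring.multichoose a)) 0 := by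
  have h := (one_div_one_sub_cpow_hasFPowerSeriesOnBall_zero a).hasFPowerSeriesAt
  simp only [← Ring.multichoose_eq] at h
  exact h.congr (.of_forall fun t => by simp [cpow_neg])

-- For `t > 1` the base `1 - t` is negative and `(1 - t) ^ (-a) ≠ 1 / (1 - t) ^ a` in general.
theorem Real.hasFPowerSeriesAt_one_sub_rpow_neg (a : ℝ) :
    HasFPowerSeriesAt (fun t => (1 - t) ^ (-a)) (ofScalars ℝ (Ring.multichoose a)) 0 := by
  have h := (one_div_one_sub_rpow_hasFPowerSeriesOnBall_zero a).hasFPowerSeriesAt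
  simp only [← Ring.multichoose_eq] at h
  refine h.congr ?_
  filter_upwards [eventually_lt_nhds (show (0:ℝ) < 1 by norm_num)] with t ht
  rw [one_div, rpow_neg (by linarith)]

namespace Real

theorem Gamma_mul_add_mul_le_rpow_Gamma_mul_rpow_Gamma_of_nonneg {s t a b : ℝ} (hs : 0 < s)
    (ht : 0 < t) (ha : 0 ≤ a) (hb : 0 ≤ b) (hab : a + b = 1) :
    Gamma (a * s + b * t) ≤ Gamma s ^ a * Gamma t ^ b := by
  rcases ha.eq_or_lt with rfl | ha
  · simp [show b = 1 by linarith]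
  rcases hb.eq_or_lt with rfl | hb
  · simp [show a = 1 by linarith]
  exact Gamma_mul_add_mul_le_rpow_Gamma_mul_rpow_Gamma hs ht ha hb hab

variable {a x : ℝ}

-- Log-convexity between `x` and `x + 1`, where `Γ(x) = Γ(x + 1) / x`.
theorem Gamma_add_le_Gamma_add_one_mul_rpow (hx : 0 < x) (ha₀ : 0 ≤ a) (ha₁ : a ≤ 1) :
    Gamma (x + a) ≤ Gamma (x + 1) * x ^ (a - 1) := by
  have hΓ : 0 < Gamma (x + 1) := Gamma_pos_of_pos (by linarith)
  have hconv := Gamma_mul_add_mul_le_rpow_Gamma_mul_rpow_Gamma_of_nonneg hx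
    (by linarith : 0 < x + 1) (by linarith : 0 ≤ 1 - a) ha₀ (by ring)
  calc Gamma (x + a) = Gamma ((1 - a) * x + a * (x + 1)) := by ring_nf
    _ ≤ Gamma x ^ (1 - a) * Gamma (x + 1) ^ a := hconv
    _ = (Gamma (x + 1) / x) ^ (1 - a) * Gamma (x + 1) ^ a := by
      rw [Gamma_add_one hx.ne', mul_div_cancel_left₀ _ hx.ne']
    _ = Gamma (x + 1) * x ^ (a - 1) := by
      rw [div_rpow hΓ.le hx.le, div_mul_eq_mul_div, ← rpow_add hΓ, sub_add_cancel, rpow_one,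
        div_eq_mul_inv, ← rpow_neg hx.le, neg_sub]

-- Log-convexity between `x + a` and `x + a + 1`, where `Γ(x + a + 1) = (x + a) Γ(x + a)`.
theorem Gamma_add_one_mul_rpow_le_Gamma_add (hx : 0 < x) (ha₀ : 0 ≤ a) (ha₁ : a ≤ 1) :
    Gamma (x + 1) * (x + a) ^ (a - 1) ≤ Gamma (x + a) := by
  have hxa : 0 < x + a := by linarith
  have hΓ : 0 < Gamma (x + a) := Gamma_pos_of_pos hxa
  have hconv := Gamma_mul_add_mul_le_rpow_Gamma_mul_rpow_Gamma_of_nonneg hxa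
    (by linarith : 0 < x + a + 1) ha₀ (by linarith : 0 ≤ 1 - a) (by ring)
  have hupper : Gamma (x + 1) ≤ Gamma (x + a) * (x + a) ^ (1 - a) :=
    calc Gamma (x + 1) = Gamma (a * (x + a) + (1 - a) * (x + a + 1)) := by ring_nf
      _ ≤ Gamma (x + a) ^ a * Gamma (x + a + 1) ^ (1 - a) := hconv
      _ = Gamma (x + a) * (x + a) ^ (1 - a) := by
        rw [Gamma_add_one hxa.ne', mul_rpow hxa.le hΓ.le, mul_left_comm, ← rpow_add hΓ,
          add_sub_cancel, rpow_one, mul_comm]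
  rwa [← neg_sub, rpow_neg hxa.le, ← div_eq_mul_inv, div_le_iff₀ (rpow_pos_of_pos hxa _)]

theorem Gamma_add_div_Gamma_mul_Gamma_add_one_mem_Icc (hx : 0 < x) (ha₀ : 0 < a)
    (ha₁ : a ≤ 1) :
    Gamma (x + a) / (Gamma a * Gamma (x + 1)) ∈
      Set.Icc ((x + 1) ^ (a - 1) / Gamma a) (x ^ (a - 1) / Gamma a) := by
  have hΓa : 0 < Gamma a := Gamma_pos_of_pos ha₀
  have hΓx : 0 < Gamma (x + 1) := Gamma_pos_of_pos (by linarith)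
  rw [mul_comm, ← div_div, Set.mem_Icc, div_le_div_iff_of_pos_right hΓa,
    div_le_div_iff_of_pos_right hΓa, le_div_iff₀ hΓx, div_le_iff₀ hΓx]
  constructor
  · calc (x + 1) ^ (a - 1) * Gamma (x + 1) ≤ (x + a) ^ (a - 1) * Gamma (x + 1) := by
          gcongr ?_ * _
          exact rpow_le_rpow_of_nonpos (by linarith) (by linarith) (by linarith)
      _ ≤ Gamma (x + a) := by
          rw [mul_comm]; exact Gamma_add_one_mul_rpow_le_Gamma_add hx ha₀.le ha₁
  · rw [mul_comm]
    exact Gamma_add_le_Gamma_add_one_mul_rpow hx ha₀.le ha₁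

end Real

/-- For `a` not a nonpositive integer, the Taylor coefficients of `(1-t)^{-a}`
are `Γ(n+a)/(Γ(a)Γ(n+1))`; moreover if `0 < a ≤ 1` the real coefficients satisfy
`(n+1)^{a-1}/Γ(a) ≤ k^a(n) ≤ n^{a-1}/Γ(a)` for `n ≥ 1`. -/
theorem stmt_9 :
    (∀ a : ℂ, (∀ k : ℕ, a ≠ -(k : ℂ)) →
      ∀ c : ℕ → ℂ,
        (∀ t : ℂ, ‖t‖ < 1 → HasSum (fun n => c n * t ^ n) ((1 - t) ^ (-a))) →
        ∀ n : ℕ,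
          c n = Complex.Gamma ((n : ℂ) + a) /
            (Complex.Gamma a * Complex.Gamma ((n : ℂ) + 1))) ∧
    (∀ a : ℝ, 0 < a → a ≤ 1 →
      ∀ c : ℕ → ℝ,
        (∀ t : ℝ, |t| < 1 → HasSum (fun n => c n * t ^ n) ((1 - t) ^ (-a))) →
        ∀ n : ℕ, 1 ≤ n →
          ((n : ℝ) + 1) ^ (a - 1) / Real.Gamma a ≤ c n ∧
            c n ≤ (n : ℝ) ^ (a - 1) / Real.Gamma a) := by
  constructor
  · intro a ha c hc n
    have hcoeff : c = Ring.multichoose a :=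
      (Complex.hasFPowerSeriesAt_one_sub_cpow_neg a).eq_of_eventually_hasSum <|
        Metric.eventually_nhds_iff.2 ⟨1, one_pos, fun {t} ht => hc t (by simpa using ht)⟩
    rw [hcoeff, Complex.multichoose_eq_Gamma_div ha]
  · intro a ha₀ ha₁ c hc n hn
    have hcoeff : c = Ring.multichoose a :=
      (Real.hasFPowerSeriesAt_one_sub_rpow_neg a).eq_of_eventually_hasSum <|
        Metric.eventually_nhds_iff.2 ⟨1, one_pos, fun {t} ht => hc t (by simpa using ht)⟩
    have ha : ∀ k : ℕ, a ≠ -k := fun k => by linarith [(k.cast_nonneg : (0 : ℝ) ≤ k)]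
    rw [hcoeff, Real.multichoose_eq_Gamma_div ha]
    exact Real.Gamma_add_div_Gamma_mul_Gamma_add_one_mem_Icc (Nat.cast_pos.2 hn) ha₀ ha₁
end

section
/- For 0 < a < 1, the function Σ_{n≥1} n^{a-1} t^n belongs to the Hardy space H^1 of the unit disc. -/
/-!
Write `cₙ = n ^ (a - 1)` and `f z = ∑ cₙ zⁿ`. On the unit disc `‖f z‖ ≤ (1 / a + 2) ‖1 - z‖ ^ (-a)`:
split the series at `N = ⌊‖1 - z‖⁻¹⌋`, bound the head by `∑_{n ≤ N} cₙ ≤ N ^ a / a` and the tail by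
Abel summation, since `cₙ` decreases for `n ≥ 1`. Jordan's inequality gives
`‖1 - r e^{iθ}‖ ≥ |θ| / π` for `|θ| ≤ π`, so the integral over the circle of radius `r` is bounded
by a multiple of `∫₀^{2π} θ ^ (-a) + (2π - θ) ^ (-a) dθ < ∞`, uniformly in `r`.
-/

open Real

lemma mul_rpow_sub_one_le_rpow_sub_rpow {a x : ℝ} (ha0 : 0 ≤ a) (ha1 : a ≤ 1) (hx : 1 ≤ x) :
    a * x ^ (a - 1) ≤ x ^ a - (x - 1) ^ a := by
  have hx0 : 0 < x := by linarith
  have bernoulli : (1 + -x⁻¹) ^ a ≤ 1 + a * -x⁻¹ :=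
    rpow_one_add_le_one_add_mul_self (by linarith [inv_le_one_of_one_le₀ hx]) ha0 ha1
  have hsplit : x - 1 = x * (1 + -x⁻¹) := by field_simp; ring
  rw [hsplit, mul_rpow hx0.le (by linarith [inv_le_one_of_one_le₀ hx]), rpow_sub_one hx0.ne']
  have := mul_le_mul_of_nonneg_left bernoulli (rpow_nonneg hx0.le a)
  linarith [show x ^ a * (1 + a * -x⁻¹) = x ^ a - a * (x ^ a / x) by field_simp; ring]

lemma sum_range_succ_natCast_rpow_le {a : ℝ} (ha : 0 < a) (ha1 : a < 1) (N : ℕ) :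
    ∑ i ∈ Finset.range (N + 1), (i : ℝ) ^ (a - 1) ≤ (N : ℝ) ^ a / a := by
  induction N with
  | zero => simp [zero_rpow (by linarith : a - 1 ≠ 0), zero_rpow ha.ne']
  | succ N ih =>
    have step := mul_rpow_sub_one_le_rpow_sub_rpow ha.le ha1.le
      (by linarith [N.cast_nonneg (α := ℝ)] : (1 : ℝ) ≤ N + 1)
    rw [add_sub_cancel_right] at step
    rw [Finset.sum_range_succ, Nat.cast_succ, le_div_iff₀ ha]
    rw [le_div_iff₀ ha] at ih
    linarith [add_mul (∑ i ∈ Finset.range (N + 1), (i : ℝ) ^ (a - 1)) (((N : ℝ) + 1) ^ (a - 1)) a]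

lemma abs_natCast_rpow_sub_one_le_one {a : ℝ} (ha1 : a ≤ 1) (n : ℕ) :
    |(n : ℝ) ^ (a - 1)| ≤ 1 := by
  rw [abs_of_nonneg (by positivity)]
  rcases n.eq_zero_or_pos with rfl | hn
  · exact_mod_cast zero_rpow_le_one _
  · exact rpow_le_one_of_one_le_of_nonpos (by exact_mod_cast hn) (by linarith)

lemma antitone_natCast_add_succ_rpow {a : ℝ} (ha1 : a ≤ 1) (M : ℕ) :
    Antitone fun k : ℕ ↦ ((k + (M + 1) : ℕ) : ℝ) ^ (a - 1) :=
  fun _ _ hkl ↦ rpow_le_rpow_of_nonpos (by positivity) (by gcongr) (by linarith)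

lemma summable_ofReal_mul_pow {c : ℕ → ℝ} {C : ℝ} (hc : ∀ n, |c n| ≤ C) {z : ℂ} (hz : ‖z‖ < 1) :
    Summable fun n ↦ (c n : ℂ) * z ^ n := by
  refine Summable.of_norm_bounded ((summable_geometric_of_lt_one (norm_nonneg z) hz).mul_left C)
    fun n ↦ ?_
  rw [norm_mul, norm_pow, Complex.norm_real, norm_eq_abs]
  exact mul_le_mul_of_nonneg_right (hc n) (by positivity)

lemma norm_tsum_mul_pow_mul_norm_one_sub_le {c : ℕ → ℝ} (hc : Antitone c) (hc0 : ∀ n, 0 ≤ c n)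
    {z : ℂ} (hz : ‖z‖ < 1) :
    ‖∑' n, (c n : ℂ) * z ^ n‖ * ‖1 - z‖ ≤ 2 * c 0 := by
  have hS := (summable_ofReal_mul_pow
    (fun n ↦ (abs_of_nonneg (hc0 n)).trans_le (hc n.zero_le)) hz).hasSum
  set S := ∑' n, (c n : ℂ) * z ^ n
  have hdiff_nonneg : ∀ n, 0 ≤ c n - c (n + 1) := fun n ↦ sub_nonneg.2 (hc n.le_succ)
  have hdiff_partial : ∀ n, ∑ i ∈ Finset.range n, (c i - c (i + 1)) ≤ c 0 := fun n ↦ by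
    rw [Finset.sum_range_sub']; linarith [hc0 n]
  have hdiff := summable_of_sum_range_le hdiff_nonneg hdiff_partial
  have hshift : HasSum (fun n ↦ (c (n + 1) : ℂ) * z ^ (n + 1)) (S - c 0) := by
    simpa using (hasSum_nat_add_iff' 1).2 hS
  have habel : HasSum (fun n ↦ ((c (n + 1) - c n : ℝ) : ℂ) * z ^ (n + 1)) (S - c 0 - z * S) := by
    have hfun : (fun n ↦ ((c (n + 1) - c n : ℝ) : ℂ) * z ^ (n + 1))
        = fun n ↦ (c (n + 1) : ℂ) * z ^ (n + 1) - z * ((c n : ℂ) * z ^ n) := by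
      funext n; push_cast; ring
    exact hfun ▸ hshift.sub (hS.mul_left z)
  have hrem : ‖S - c 0 - z * S‖ ≤ c 0 := by
    refine (habel.norm_le_of_bounded hdiff.hasSum fun n ↦ ?_).trans
      (hdiff.tsum_le_of_sum_range_le hdiff_partial)
    rw [norm_mul, Complex.norm_real, norm_eq_abs, abs_sub_comm, abs_of_nonneg (hdiff_nonneg n)]
    exact mul_le_of_le_one_right (hdiff_nonneg n) (by simpa using pow_le_one₀ (norm_nonneg z) hz.le)
  calc ‖S‖ * ‖1 - z‖ = ‖(c 0 : ℂ) + (S - c 0 - z * S)‖ := by rw [← norm_mul]; ring_nf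
    _ ≤ c 0 + c 0 := by
      refine (norm_add_le _ _).trans (add_le_add (le_of_eq ?_) hrem)
      rw [Complex.norm_real, norm_eq_abs, abs_of_nonneg (hc0 0)]
    _ = 2 * c 0 := by ring

lemma norm_tsum_rpow_mul_pow_le {a : ℝ} (ha : 0 < a) (ha1 : a < 1) {z : ℂ} (hz : ‖z‖ < 1) :
    ‖∑' n : ℕ, (((n : ℝ) ^ (a - 1) : ℝ) : ℂ) * z ^ n‖ ≤ (1 / a + 2) * ‖1 - z‖ ^ (-a) := by
  set δ := ‖1 - z‖
  have hδ : 0 < δ := norm_pos_iff.2 (sub_ne_zero.2 fun h ↦ by simp [← h] at hz)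
  set N := ⌊δ⁻¹⌋₊
  have hz1 : ∀ n : ℕ, ‖z ^ n‖ ≤ 1 := fun n ↦ by
    simpa using pow_le_one₀ (norm_nonneg z) hz.le
  have hhead : ‖∑ n ∈ Finset.range (N + 1), (((n : ℝ) ^ (a - 1) : ℝ) : ℂ) * z ^ n‖
      ≤ δ ^ (-a) / a := calc
    _ ≤ ∑ n ∈ Finset.range (N + 1), (n : ℝ) ^ (a - 1) := by
      refine norm_sum_le_of_le _ fun n _ ↦ ?_
      rw [norm_mul, Complex.norm_real, norm_eq_abs, abs_of_nonneg (by positivity)]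
      exact mul_le_of_le_one_right (by positivity) (hz1 n)
    _ ≤ (N : ℝ) ^ a / a := sum_range_succ_natCast_rpow_le ha ha1 N
    _ ≤ δ ^ (-a) / a := by
      rw [rpow_neg hδ.le, ← inv_rpow hδ.le]
      gcongr
      exact Nat.floor_le (by positivity)
  have htail : ‖∑' k, ((((k + (N + 1) : ℕ) : ℝ) ^ (a - 1) : ℝ) : ℂ) * z ^ k‖ ≤ 2 * δ ^ (-a) := by
    have habel := norm_tsum_mul_pow_mul_norm_one_sub_le (antitone_natCast_add_succ_rpow ha1.le N)
      (fun _ ↦ by positivity) hz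
    have hfirst : (((0 + (N + 1) : ℕ) : ℝ)) ^ (a - 1) ≤ δ ^ (1 - a) := by
      rw [show 1 - a = -(a - 1) by ring, rpow_neg hδ.le, ← inv_rpow hδ.le, zero_add, Nat.cast_succ]
      exact rpow_le_rpow_of_nonpos (by positivity) (Nat.lt_floor_add_one _).le (by linarith)
    rw [← le_div_iff₀ hδ] at habel
    refine habel.trans ((div_le_iff₀ hδ).2 ?_)
    rw [mul_assoc, ← rpow_add_one hδ.ne', neg_add_eq_sub]
    exact mul_le_mul_of_nonneg_left hfirst zero_le_two
  have hsummable := summable_ofReal_mul_pow (abs_natCast_rpow_sub_one_le_one ha1.le) hz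
  calc
    _ = ‖(∑ n ∈ Finset.range (N + 1), (((n : ℝ) ^ (a - 1) : ℝ) : ℂ) * z ^ n)
        + z ^ (N + 1) * (∑' k, ((((k + (N + 1) : ℕ) : ℝ) ^ (a - 1) : ℝ) : ℂ) * z ^ k)‖ := by
      rw [← hsummable.sum_add_tsum_nat_add (N + 1), ← tsum_mul_left]
      congr 2
      exact tsum_congr fun k ↦ by rw [pow_add]; ring
    _ ≤ δ ^ (-a) / a + 1 * (2 * δ ^ (-a)) := by
      refine (norm_add_le _ _).trans (add_le_add hhead ?_)
      rw [norm_mul]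
      exact mul_le_mul (hz1 _) htail (norm_nonneg _) zero_le_one
    _ = (1 / a + 2) * δ ^ (-a) := by ring

lemma norm_ofReal_mul_exp_mul_I {r : ℝ} (hr : 0 ≤ r) (θ : ℝ) :
    ‖(r : ℂ) * Complex.exp (θ * Complex.I)‖ = r := by
  rw [norm_mul, Complex.norm_exp_ofReal_mul_I, Complex.norm_real, norm_of_nonneg hr, mul_one]

lemma abs_div_pi_le_norm_one_sub_ofReal_mul_exp {r θ : ℝ} (hr : 0 ≤ r) (hθ : |θ| ≤ π) :
    |θ| / π ≤ ‖1 - (r : ℂ) * Complex.exp (θ * Complex.I)‖ := by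
  have hnormSq : ‖1 - (r : ℂ) * Complex.exp (θ * Complex.I)‖ ^ 2 = 1 - 2 * r * cos θ + r ^ 2 := by
    rw [Complex.sq_norm, Complex.normSq_apply]
    simp only [Complex.sub_re, Complex.sub_im, Complex.one_re, Complex.one_im,
      Complex.re_ofReal_mul, Complex.im_ofReal_mul, Complex.exp_ofReal_mul_I_re,
      Complex.exp_ofReal_mul_I_im]
    nlinarith [sin_sq_add_cos_sq θ]
  have hjordan : 2 * (θ ^ 2 / π ^ 2) ≤ 1 - cos θ := by
    linarith [cos_le_one_sub_mul_cos_sq hθ, show 2 / π ^ 2 * θ ^ 2 = 2 * (θ ^ 2 / π ^ 2) by ring]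
  have hcos := neg_one_le_cos θ
  -- `1 - 2 r cos θ + r² - (1 - cos θ) / 2`
  -- `= ((1 + cos θ) (1 - r)² + (1 - cos θ) r²) / 2 + r (1 - cos θ) ≥ 0`
  have hsq : (|θ| / π) ^ 2 ≤ ‖1 - (r : ℂ) * Complex.exp (θ * Complex.I)‖ ^ 2 := by
    rw [hnormSq, div_pow, sq_abs]
    nlinarith [mul_nonneg (by linarith : 0 ≤ 1 + cos θ) (sq_nonneg (1 - r)),
      mul_nonneg (by linarith [cos_le_one θ] : 0 ≤ 1 - cos θ) (sq_nonneg r),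
      mul_nonneg hr (by linarith [cos_le_one θ] : 0 ≤ 1 - cos θ)]
  exact (pow_le_pow_iff_left₀ (by positivity) (norm_nonneg _) two_ne_zero).1 hsq

lemma norm_one_sub_ofReal_mul_exp_rpow_neg_le {a r θ : ℝ} (ha : 0 ≤ a) (hr : 0 ≤ r) (hθ0 : θ ≠ 0)
    (hθ : |θ| ≤ π) :
    ‖1 - (r : ℂ) * Complex.exp (θ * Complex.I)‖ ^ (-a) ≤ π ^ a * |θ| ^ (-a) := calc
  _ ≤ (|θ| / π) ^ (-a) := rpow_le_rpow_of_nonpos (by positivity)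
      (abs_div_pi_le_norm_one_sub_ofReal_mul_exp hr hθ) (by linarith)
  _ = π ^ a * |θ| ^ (-a) := by
      rw [div_rpow (abs_nonneg θ) pi_pos.le, rpow_neg pi_pos.le, div_inv_eq_mul, mul_comm]

lemma norm_one_sub_ofReal_mul_exp_rpow_neg_le_of_mem_Ioo {a r θ : ℝ} (ha : 0 ≤ a) (hr : 0 ≤ r)
    (hθ : θ ∈ Set.Ioo 0 (2 * π)) :
    ‖1 - (r : ℂ) * Complex.exp (θ * Complex.I)‖ ^ (-a)
      ≤ π ^ a * (θ ^ (-a) + (2 * π - θ) ^ (-a)) := by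
  obtain ⟨hθ0, hθ2π⟩ := hθ
  have hθa : 0 ≤ θ ^ (-a) := rpow_nonneg hθ0.le _
  have hθa' : 0 ≤ (2 * π - θ) ^ (-a) := rpow_nonneg (by linarith) _
  rcases le_total θ π with hπ | hπ
  · have := norm_one_sub_ofReal_mul_exp_rpow_neg_le ha hr hθ0.ne' (by rwa [abs_of_pos hθ0])
    rw [abs_of_pos hθ0] at this
    nlinarith [rpow_nonneg pi_pos.le a]
  · have hexp : Complex.exp (θ * Complex.I) = Complex.exp (↑(θ - 2 * π) * Complex.I) := by
      rw [Complex.ofReal_sub, sub_mul, Complex.exp_sub, Complex.ofReal_mul, Complex.ofReal_ofNat,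
        Complex.exp_two_pi_mul_I, div_one]
    have habs : |θ - 2 * π| = 2 * π - θ := by rw [abs_of_neg (by linarith)]; ring
    have hbound := norm_one_sub_ofReal_mul_exp_rpow_neg_le ha hr (by linarith : θ - 2 * π < 0).ne
      (by rw [habs]; linarith)
    rw [← hexp, habs] at hbound
    nlinarith [rpow_nonneg pi_pos.le a]

lemma continuous_tsum_ofReal_mul_ofReal_mul_exp_pow {c : ℕ → ℝ} {C : ℝ} (hc : ∀ n, |c n| ≤ C)
    {r : ℝ} (hr0 : 0 ≤ r) (hr1 : r < 1) :
    Continuous fun θ : ℝ ↦ ∑' n, (c n : ℂ) * ((r : ℂ) * Complex.exp (θ * Complex.I)) ^ n := by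
  refine continuous_tsum (fun n ↦ by fun_prop) ((summable_geometric_of_lt_one hr0 hr1).mul_left C)
    fun n θ ↦ ?_
  rw [norm_mul, norm_pow, norm_ofReal_mul_exp_mul_I hr0, Complex.norm_real, norm_eq_abs]
  exact mul_le_mul_of_nonneg_right (hc n) (by positivity)

lemma intervalIntegrable_rpow_neg_add_rpow_neg {a : ℝ} (ha1 : a < 1) (b : ℝ) :
    IntervalIntegrable (fun θ ↦ θ ^ (-a) + (b - θ) ^ (-a)) MeasureTheory.volume 0 b := by
  have hleft := intervalIntegral.intervalIntegrable_rpow' (a := 0) (b := b) (neg_lt_neg ha1)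
  refine hleft.add ?_
  simpa using (hleft.comp_sub_left b).symm

/-- For `0 < a < 1`, the function `Σ_{n≥1} n^{a-1} t^n` belongs to the Hardy space
`H¹` of the unit disc. -/
theorem stmt_10 (a : ℝ) (ha : 0 < a) (ha1 : a < 1) :
    ∃ C : ℝ, ∀ r : ℝ, 0 ≤ r → r < 1 →
      (∫ θ in (0 : ℝ)..(2 * π),
        ‖∑' n : ℕ, (((n : ℝ) ^ (a - 1) : ℝ) : ℂ) *
          ((r : ℂ) * Complex.exp (θ * Complex.I)) ^ n‖) ≤ C := by
  refine ⟨∫ θ in (0 : ℝ)..(2 * π), (1 / a + 2) * π ^ a * (θ ^ (-a) + (2 * π - θ) ^ (-a)),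
    fun r hr0 hr1 ↦ ?_⟩
  refine intervalIntegral.integral_mono_on_of_le_Ioo (by positivity)
    ((continuous_tsum_ofReal_mul_ofReal_mul_exp_pow
      (abs_natCast_rpow_sub_one_le_one ha1.le) hr0 hr1).norm.intervalIntegrable _ _)
    ((intervalIntegrable_rpow_neg_add_rpow_neg ha1 _).const_mul _) fun θ hθ ↦ ?_
  calc _ ≤ (1 / a + 2) * ‖1 - (r : ℂ) * Complex.exp (θ * Complex.I)‖ ^ (-a) :=
        norm_tsum_rpow_mul_pow_le ha ha1 (by rwa [norm_ofReal_mul_exp_mul_I hr0])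
    _ ≤ (1 / a + 2) * (π ^ a * (θ ^ (-a) + (2 * π - θ) ^ (-a))) := by
        gcongr; exact norm_one_sub_ofReal_mul_exp_rpow_neg_le_of_mem_Ioo ha.le hr0 hθ
    _ = _ := by ring
end

section
/- Let m be a positive integer. If T is a (2m+1)-contraction, then T is a 2m-contraction and ‖T^n x‖² ≲ (n+1)^{2m} for every x ∈ H (with constant depending on x). -/
/-!
For `u n = ‖T^n x‖²`, the `k`-contraction sum evaluated at `T^n x` is `(-1)^k Δ^k u n`, with `Δ`
the forward difference. So the hypothesis says `Δ^(2m+1) u ≤ 0`. A nonnegative sequence with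
nonpositive `(k+1)`-st difference has nonnegative `k`-th difference, which gives the
`2m`-contraction property. Then `Δ^(2m) u` is nonnegative and antitone, hence bounded, and summing
`2m` times bounds `u n` by a multiple of `(n+1)^(2m)`.
-/

open Filter Finset

lemma fwdDiff_iter_eq_neg_one_pow_mul_sum (u : ℕ → ℝ) (k n : ℕ) :
    (fwdDiff 1)^[k] u n = (-1) ^ k * ∑ j ∈ range (k + 1), (-1) ^ j * (k.choose j) * u (n + j) := by
  rw [fwdDiff_iter_eq_sum_shift, mul_sum]
  refine sum_congr rfl fun j hj => ?_
  have hjk : j ≤ k := Nat.lt_succ_iff.mp (mem_range.mp hj)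
  have hsign : (-1 : ℝ) ^ (k - j) = (-1) ^ k * (-1) ^ j := by
    obtain ⟨i, rfl⟩ := Nat.exists_eq_add_of_le hjk
    rw [Nat.add_sub_cancel_left, pow_add, mul_right_comm, ← pow_add, Even.neg_one_pow ⟨j, rfl⟩,
      one_mul]
  push_cast [zsmul_eq_mul, smul_eq_mul, mul_one]
  rw [hsign]
  ring

lemma antitone_of_fwdDiff_nonpos {w : ℕ → ℝ} (h : ∀ n, fwdDiff 1 w n ≤ 0) : Antitone w :=
  antitone_nat_of_succ_le fun n => sub_nonpos.mp (h n)

lemma antitone_fwdDiff_iter_of_fwdDiff_iter_succ_nonpos {u : ℕ → ℝ} {k : ℕ}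
    (h : ∀ n, (fwdDiff 1)^[k + 1] u n ≤ 0) : Antitone ((fwdDiff 1)^[k] u) :=
  antitone_of_fwdDiff_nonpos fun n => by simpa only [Function.iterate_succ_apply'] using h n

lemma tendsto_atBot_of_fwdDiff_le_of_neg {w : ℕ → ℝ} {c : ℝ} (hc : c < 0)
    (h : ∀ᶠ n in atTop, fwdDiff 1 w n ≤ c) : Tendsto w atTop atBot := by
  obtain ⟨N, hN⟩ := eventually_atTop.mp h
  have hbound : ∀ n, N ≤ n → w n ≤ (w N - N * c) + n * c := by
    refine Nat.le_induction (by linarith) fun n hn ih => ?_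
    have := hN n hn
    simp only [fwdDiff] at this
    push_cast
    linarith
  refine tendsto_atBot_mono' _ (eventually_atTop.mpr ⟨N, hbound⟩) ?_
  exact tendsto_atBot_add_const_left _ _ (tendsto_natCast_atTop_atTop.atTop_mul_const_of_neg hc)

lemma tendsto_atBot_of_fwdDiff_iter {k : ℕ} {w : ℕ → ℝ}
    (h : Tendsto ((fwdDiff 1)^[k] w) atTop atBot) : Tendsto w atTop atBot := by
  induction k generalizing w with
  | zero => exact h
  | succ k ih =>
    rw [Function.iterate_succ] at h
    exact tendsto_atBot_of_fwdDiff_le_of_neg (c := -1) (by norm_num)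
      ((ih h).eventually (eventually_le_atBot _))

/-- Otherwise `Δ^k u` stays below a negative constant from some point on, which drives every lower
difference, and finally `u` itself, to `-∞`. -/
lemma fwdDiff_iter_nonneg_of_fwdDiff_iter_succ_nonpos {u : ℕ → ℝ} {k : ℕ} (hu : ∀ n, 0 ≤ u n)
    (hd : ∀ n, (fwdDiff 1)^[k + 1] u n ≤ 0) (n : ℕ) : 0 ≤ (fwdDiff 1)^[k] u n := by
  by_contra! hneg
  have hbot : Tendsto u atTop atBot := by
    cases k with
    | zero => exact absurd (hu n) (not_le.mpr hneg)
    | succ k =>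
      refine tendsto_atBot_of_fwdDiff_iter (k := k)
        (tendsto_atBot_of_fwdDiff_le_of_neg hneg (eventually_atTop.mpr ⟨n, fun m hm => ?_⟩))
      rw [← Function.iterate_succ_apply' (fwdDiff 1)]
      exact antitone_fwdDiff_iter_of_fwdDiff_iter_succ_nonpos hd hm
  obtain ⟨m, hm⟩ := (hbot.eventually_lt_atBot 0).exists
  exact (hu m).not_gt hm

lemma le_mul_pow_succ_of_fwdDiff_le {w : ℕ → ℝ} {C : ℝ} (hC : 0 ≤ C) {d : ℕ}
    (h : ∀ n, fwdDiff 1 w n ≤ C * ((n : ℝ) + 1) ^ d) (n : ℕ) :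
    w n ≤ max (w 0) C * ((n : ℝ) + 1) ^ (d + 1) := by
  set D := max (w 0) C
  have hCD : C ≤ D := le_max_right _ _
  induction n with
  | zero => simp [D]
  | succ n ih =>
    have hn : (0 : ℝ) ≤ (n : ℝ) + 1 := by positivity
    have hstep : w (n + 1) ≤ w n + C * ((n : ℝ) + 1) ^ d := by
      have := h n
      simp only [fwdDiff] at this
      linarith
    push_cast
    calc w (n + 1) ≤ D * ((n : ℝ) + 1) ^ (d + 1) + D * ((n : ℝ) + 1) ^ d := by
          nlinarith [pow_nonneg hn d]
      _ = D * (((n : ℝ) + 1) ^ d * ((n : ℝ) + 1 + 1)) := by ring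
      _ ≤ D * (((n : ℝ) + 1 + 1) ^ d * ((n : ℝ) + 1 + 1)) := by
          have := hC.trans hCD
          gcongr
          linarith
      _ = D * ((n : ℝ) + 1 + 1) ^ (d + 1) := by ring

lemma exists_le_mul_pow_of_fwdDiff_iter_le {k : ℕ} {u : ℕ → ℝ} {C : ℝ} (hC : 0 ≤ C)
    (h : ∀ n, (fwdDiff 1)^[k] u n ≤ C) : ∃ D, 0 ≤ D ∧ ∀ n, u n ≤ D * ((n : ℝ) + 1) ^ k := by
  induction k generalizing u with
  | zero => exact ⟨C, hC, fun n => by simpa using h n⟩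
  | succ k ih =>
    obtain ⟨D, hD, hΔu⟩ :=
      ih (u := fwdDiff 1 u) (by simpa only [Function.iterate_succ_apply] using h)
    exact ⟨max (u 0) D, hD.trans (le_max_right _ _), le_mul_pow_succ_of_fwdDiff_le hD hΔu⟩

lemma fwdDiff_iter_norm_pow_apply_sq {R E : Type*} [Semiring R] [SeminormedAddCommGroup E]
    [Module R E] (T : E →L[R] E) (x : E) (k n : ℕ) :
    (fwdDiff 1)^[k] (fun i => ‖(T ^ i) x‖ ^ 2) n
      = (-1) ^ k * ∑ j ∈ range (k + 1), (-1) ^ j * (k.choose j) * ‖(T ^ j) ((T ^ n) x)‖ ^ 2 := by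
  simp only [fwdDiff_iter_eq_neg_one_pow_mul_sum, ← mul_apply_eq_comp, ← pow_add,
    add_comm n]

theorem stmt_15_general {H : Type*} [NormedAddCommGroup H] [InnerProductSpace ℂ H]
    (T : H →L[ℂ] H) (m : ℕ)
    (hT : ∀ x : H, 0 ≤ ∑ j ∈ Finset.range (2 * m + 2),
      (-1 : ℝ) ^ j * (Nat.choose (2 * m + 1) j) * ‖(T ^ j) x‖ ^ 2) :
    (∀ x : H, 0 ≤ ∑ j ∈ Finset.range (2 * m + 1),
      (-1 : ℝ) ^ j * (Nat.choose (2 * m) j) * ‖(T ^ j) x‖ ^ 2) ∧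
    (∀ x : H, ∃ C : ℝ, ∀ n : ℕ, ‖(T ^ n) x‖ ^ 2 ≤ C * ((n : ℝ) + 1) ^ (2 * m)) := by
  have hodd : ∀ x n, (fwdDiff 1)^[2 * m + 1] (fun i => ‖(T ^ i) x‖ ^ 2) n ≤ 0 := fun x n => by
    rw [fwdDiff_iter_norm_pow_apply_sq, Odd.neg_one_pow ⟨m, rfl⟩, neg_one_mul, neg_nonpos]
    exact hT ((T ^ n) x)
  have heven : ∀ x n, 0 ≤ (fwdDiff 1)^[2 * m] (fun i => ‖(T ^ i) x‖ ^ 2) n := fun x =>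
    fwdDiff_iter_nonneg_of_fwdDiff_iter_succ_nonpos (fun n => by positivity) (hodd x)
  refine ⟨fun x => ?_, fun x => ?_⟩
  · simpa only [fwdDiff_iter_norm_pow_apply_sq, Even.neg_one_pow ⟨m, two_mul m⟩, one_mul, pow_zero,
      one_apply_eq_self] using heven x 0
  · obtain ⟨C, -, hC⟩ := exists_le_mul_pow_of_fwdDiff_iter_le (heven x 0)
      fun n => antitone_fwdDiff_iter_of_fwdDiff_iter_succ_nonpos (hodd x) (Nat.zero_le n)
    exact ⟨C, hC⟩

/-- If `T` is a `(2m+1)`-contraction, then `T` is a `2m`-contraction and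
`‖T^n x‖² ≲ (n+1)^{2m}` for every `x` (constant depending on `x`). -/
theorem stmt_15 {H : Type*} [NormedAddCommGroup H] [InnerProductSpace ℂ H] [CompleteSpace H]
    (T : H →L[ℂ] H) (m : ℕ) (hm : 1 ≤ m)
    (hT : ∀ x : H, 0 ≤ ∑ j ∈ Finset.range (2 * m + 2),
      (-1 : ℝ) ^ j * (Nat.choose (2 * m + 1) j) * ‖(T ^ j) x‖ ^ 2) :
    (∀ x : H, 0 ≤ ∑ j ∈ Finset.range (2 * m + 1),
      (-1 : ℝ) ^ j * (Nat.choose (2 * m) j) * ‖(T ^ j) x‖ ^ 2) ∧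
    (∀ x : H, ∃ C : ℝ, ∀ n : ℕ, ‖(T ^ n) x‖ ^ 2 ≤ C * ((n : ℝ) + 1) ^ (2 * m)) :=
  stmt_15_general T m hT
end

section
/- Let m be a positive integer. If T is a 2m-contraction and ‖T^n x‖² = o(n^{2m-1}) as n → ∞ for every x ∈ H, then T is a (2m-1)-contraction. -/
/-!
With `a n = ‖T ^ n x‖ ^ 2`, the `k`-contraction sum at `T ^ n x` is `(-1) ^ k * Δ ^ k a n`.
If it is nonnegative for `k = p + 1`, then `(-1) ^ p * Δ ^ p a` is antitone; were it negative
at `0`, it would stay below some `-c < 0`, and summing `p` times (Newton's forward formula as an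
inequality) would give `(-1) ^ (p + 1) * a n ≥ c * n.choose p - O(n ^ (p - 1))`, incompatible
with `a n = o(n ^ p)`.
-/

open Filter Asymptotics Finset fwdDiff

lemma sum_range_cast_choose (i n : ℕ) :
    ∑ k ∈ range n, (k.choose i : ℝ) = n.choose (i + 1) := by
  induction n with
  | zero => simp
  | succ n ih => rw [sum_range_succ, ih, Nat.choose_succ_succ]; push_cast; ring

lemma choose_mul_add_sum_le_of_le_fwdDiff_iter {c : ℝ} (p : ℕ) {f : ℕ → ℝ}
    (h : ∀ n, c ≤ Δ_[1] ^[p] f n) (n : ℕ) :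
    c * n.choose p + ∑ i ∈ range p, Δ_[1] ^[i] f 0 * n.choose i ≤ f n := by
  induction p generalizing f n with
  | zero => simpa using h n
  | succ p ih =>
    have hΔ := ih (f := Δ_[1] f) fun k => by simpa only [Function.iterate_succ_apply] using h k
    calc c * n.choose (p + 1) + ∑ i ∈ range (p + 1), Δ_[1] ^[i] f 0 * n.choose i
        = f 0 + ∑ k ∈ range n, (c * k.choose p +
            ∑ i ∈ range p, Δ_[1] ^[i] (Δ_[1] f) 0 * k.choose i) := by
          simp only [sum_add_distrib, ← mul_sum, sum_comm (s := range n), sum_range_cast_choose,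
            sum_range_succ', Function.iterate_succ_apply, Function.iterate_zero, id_eq,
            Nat.choose_zero_right, Nat.cast_one, mul_one]
          ring
      _ ≤ f 0 + ∑ k ∈ range n, Δ_[1] f k := by gcongr; exact hΔ _
      _ = f n := by simp only [fwdDiff]; rw [sum_range_sub, add_sub_cancel]

lemma isLittleO_choose_pow {i p : ℕ} (h : i < p) :
    (fun n : ℕ => (n.choose i : ℝ)) =o[atTop] fun n : ℕ => (n : ℝ) ^ p :=
  (isTheta_choose i).isBigO.trans_isLittleO <|
    (isLittleO_pow_pow_atTop_of_lt h).comp_tendsto tendsto_natCast_atTop_atTop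

lemma not_isLittleO_choose_pow (p : ℕ) :
    ¬ (fun n : ℕ => (n.choose p : ℝ)) =o[atTop] fun n : ℕ => (n : ℝ) ^ p := fun h =>
  isLittleO_irrefl (frequently_atTop.2 fun N => ⟨N + 1, by omega, by positivity⟩)
    ((isTheta_choose p).symm.isBigO.trans_isLittleO h)

lemma not_isLittleO_of_le_fwdDiff_iter {c : ℝ} (hc : 0 < c) (p : ℕ) {f : ℕ → ℝ}
    (h : ∀ n, c ≤ Δ_[1] ^[p] f n) : ¬ f =o[atTop] fun n : ℕ => (n : ℝ) ^ p := by
  intro hf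
  have hQ : (fun n : ℕ => ∑ i ∈ range p, Δ_[1] ^[i] f 0 * n.choose i) =o[atTop]
      fun n : ℕ => (n : ℝ) ^ p :=
    IsLittleO.fun_sum fun i hi => (isLittleO_choose_pow (mem_range.1 hi)).const_mul_left _
  have hle (n : ℕ) :
      ‖c * n.choose p‖ ≤ ‖f n - ∑ i ∈ range p, Δ_[1] ^[i] f 0 * n.choose i‖ := by
    have h0 : 0 ≤ c * n.choose p := by positivity
    have := choose_mul_add_sum_le_of_le_fwdDiff_iter p h n
    rw [Real.norm_of_nonneg h0, Real.norm_of_nonneg (by linarith)]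
    linarith
  refine not_isLittleO_choose_pow p ?_
  rw [← isLittleO_const_mul_left_iff hc.ne']
  exact (isBigO_of_le _ hle).trans_isLittleO (hf.sub hQ)

lemma fwdDiff_iter_nonneg_of_isLittleO (p : ℕ) {a : ℕ → ℝ}
    (hD : ∀ n, 0 ≤ (-1) ^ (p + 1) * Δ_[1] ^[p + 1] a n)
    (ha : a =o[atTop] fun n : ℕ => (n : ℝ) ^ p) : 0 ≤ (-1) ^ p * Δ_[1] ^[p] a 0 := by
  by_contra! hneg
  have hanti : Antitone fun n => (-1) ^ p * Δ_[1] ^[p] a n :=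
    antitone_nat_of_succ_le fun n => by
      have := hD n
      rw [Function.iterate_succ_apply', fwdDiff, pow_succ] at this
      linarith
  refine not_isLittleO_of_le_fwdDiff_iter (neg_pos.2 hneg) p (f := (-1 : ℝ) ^ (p + 1) • a)
    (fun n => ?_) (ha.const_mul_left _)
  have := hanti (Nat.zero_le n)
  rw [fwdDiff_iter_const_smul, Pi.smul_apply, smul_eq_mul, pow_succ]
  linarith

lemma neg_one_pow_mul_fwdDiff_iter_eq_sum (k : ℕ) (a : ℕ → ℝ) (n : ℕ) :
    (-1) ^ k * Δ_[1] ^[k] a n = ∑ j ∈ range (k + 1), (-1) ^ j * k.choose j * a (n + j) := by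
  rw [fwdDiff_iter_eq_sum_shift, mul_sum]
  refine sum_congr rfl fun j hj => ?_
  obtain ⟨i, rfl⟩ := Nat.exists_eq_add_of_le (Nat.lt_succ_iff.1 (mem_range.1 hj))
  have hsq : ((-1 : ℝ) ^ i) ^ 2 = 1 := by rw [← pow_mul, pow_mul', neg_one_sq, one_pow]
  rw [Nat.add_sub_cancel_left, zsmul_eq_mul, nsmul_one]
  push_cast
  linear_combination (-1) ^ j * ((j + i).choose j : ℝ) * a (n + j) * hsq

theorem stmt_16_general {H : Type*} [NormedAddCommGroup H] [InnerProductSpace ℂ H]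
    (T : H →L[ℂ] H) (m : ℕ)
    (hT : ∀ x : H, 0 ≤ ∑ j ∈ Finset.range (2 * m + 1),
      (-1 : ℝ) ^ j * (Nat.choose (2 * m) j) * ‖(T ^ j) x‖ ^ 2)
    (ho : ∀ x : H, (fun n : ℕ => ‖(T ^ n) x‖ ^ 2) =o[atTop]
      (fun n : ℕ => (n : ℝ) ^ (2 * m - 1))) :
    ∀ x : H, 0 ≤ ∑ j ∈ Finset.range (2 * m),
      (-1 : ℝ) ^ j * (Nat.choose (2 * m - 1) j) * ‖(T ^ j) x‖ ^ 2 := by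
  intro x
  rcases m.eq_zero_or_pos with rfl | hm
  · simp
  obtain ⟨k, hk⟩ : ∃ k, 2 * m = k + 1 := ⟨2 * m - 1, by omega⟩
  simp only [hk, Nat.add_sub_cancel] at hT ho ⊢
  have hD (n : ℕ) : 0 ≤ (-1) ^ (k + 1) * Δ_[1] ^[k + 1] (fun n => ‖(T ^ n) x‖ ^ 2) n := by
    have hshift (j : ℕ) : (T ^ (n + j)) x = (T ^ j) ((T ^ n) x) := by rw [add_comm, pow_add]; rfl
    simpa only [neg_one_pow_mul_fwdDiff_iter_eq_sum, hshift] using hT ((T ^ n) x)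
  simpa only [neg_one_pow_mul_fwdDiff_iter_eq_sum, zero_add] using
    fwdDiff_iter_nonneg_of_isLittleO k hD (ho x)

/-- If `T` is a `2m`-contraction and `‖T^n x‖² = o(n^{2m-1})` for every `x`, then `T` is
a `(2m-1)`-contraction. -/
theorem stmt_16 {H : Type*} [NormedAddCommGroup H] [InnerProductSpace ℂ H] [CompleteSpace H]
    (T : H →L[ℂ] H) (m : ℕ) (hm : 1 ≤ m)
    (hT : ∀ x : H, 0 ≤ ∑ j ∈ Finset.range (2 * m + 1),
      (-1 : ℝ) ^ j * (Nat.choose (2 * m) j) * ‖(T ^ j) x‖ ^ 2)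
    (ho : ∀ x : H, (fun n : ℕ => ‖(T ^ n) x‖ ^ 2) =o[atTop]
      (fun n : ℕ => (n : ℝ) ^ (2 * m - 1))) :
    ∀ x : H, 0 ≤ ∑ j ∈ Finset.range (2 * m),
      (-1 : ℝ) ^ j * (Nat.choose (2 * m - 1) j) * ‖(T ^ j) x‖ ^ 2 :=
  stmt_16_general T m hT ho
end

section
/- Let s > 0 and let B_s be the backward shift on the weighted space H_s. Then ‖B_s^m‖² ≍ (m+1)^{max(1-s,0)} and ‖F_s^m‖² ≍ (m+1)^{max(s-1,0)}, where F_s is the forward shift f(t) ↦ t·f(t) on H_s. -/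
/-!
Euler's limit formula `Γ(s) = lim n^s n! / (s (s+1) ⋯ (s+n))` gives `k_n ≍ (n+1)^(s-1)` for the
weights `k_n = ‖t^n‖²`. The monomials are orthogonal and `F^m`, `B^m` map them to monomials or to
`0`, so `‖F^m‖²` and `‖B^m‖²` are comparable to the suprema over `j` of `k_{j+m}/k_j` and
`k_j/k_{j+m}`, that is, of `((j+m+1)/(j+1))^(±(s-1))`. Since `1 ≤ (j+m+1)/(j+1) ≤ m+1`, a positive
exponent gives `(m+1)^|s-1|`, attained at `j = 0`; a negative one gives a ratio at most `1`, and at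
least `2^(-|s-1|)` at `j = m`.
-/

open scoped InnerProductSpace

/-- Cesàro numbers: `ces s j` is the `j`-th Taylor coefficient of `(1-t)^{-s}`,
the weight sequence of the space `H_s`. -/
noncomputable def ces (c : ℝ) (j : ℕ) : ℝ :=
  (ascPochhammer ℝ j).eval c / (Nat.factorial j)

open Filter Topology

lemma ascPochhammer_eval_eq_prod_range {R : Type*} [CommSemiring R] (n : ℕ) (r : R) :
    (ascPochhammer R n).eval r = ∏ j ∈ Finset.range n, (r + j) := by
  induction n with
  | zero => simp
  | succ n ih => rw [ascPochhammer_succ_eval, ih, Finset.prod_range_succ]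

lemma ces_pos {s : ℝ} (hs : 0 < s) (n : ℕ) : 0 < ces s n :=
  div_pos (ascPochhammer_pos n s hs) (by positivity)

lemma gammaSeq_mul_ces {s : ℝ} (hs : 0 < s) (n : ℕ) :
    Real.GammaSeq s n * ces s n = (n : ℝ) ^ s / (s + n) := by
  have : 0 < ∏ j ∈ Finset.range n, (s + j) := Finset.prod_pos fun j _ => by positivity
  rw [Real.GammaSeq, ces, ascPochhammer_eval_eq_prod_range, Finset.prod_range_succ]
  field_simp

lemma tendsto_ces_div_rpow {s : ℝ} (hs : 0 < s) :
    Tendsto (fun n : ℕ => ces s n / ((n : ℝ) + 1) ^ (s - 1)) atTop (𝓝 (Real.Gamma s)⁻¹) := by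
  have hlim := (((Real.GammaSeq_tendsto_Gamma s).inv₀ (Real.Gamma_pos_of_pos hs).ne').mul
    (tendsto_natCast_div_add_atTop s)).mul
    ((Real.continuousAt_rpow_const 1 (s - 1) (Or.inl one_ne_zero)).tendsto.comp
      (tendsto_natCast_div_add_atTop (1 : ℝ)))
  rw [Real.one_rpow, mul_one, mul_one] at hlim
  refine hlim.congr' ?_
  filter_upwards [eventually_gt_atTop 0] with n hn
  have hn' : (0 : ℝ) < n := by exact_mod_cast hn
  have hprod := gammaSeq_mul_ces hs n
  have hG : Real.GammaSeq s n ≠ 0 := left_ne_zero_of_mul (by rw [hprod]; positivity)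
  have hces : ces s n = (n : ℝ) ^ s / (s + n) / Real.GammaSeq s n :=
    eq_div_of_mul_eq hG (by rw [mul_comm, hprod])
  simp only [Function.comp_apply]
  rw [Real.div_rpow hn'.le (by positivity), Real.rpow_sub_one hn'.ne', hces]
  field_simp
  ring

lemma exists_forall_le_and_le_of_tendsto {q : ℕ → ℝ} {L : ℝ} (hq : ∀ n, 0 < q n) (hL : L ≠ 0)
    (h : Tendsto q atTop (𝓝 L)) : ∃ a b, 0 < a ∧ 0 < b ∧ ∀ n, a ≤ q n ∧ q n ≤ b := by
  obtain ⟨b, hb⟩ := h.bddAbove_range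
  obtain ⟨c, hc⟩ := (h.inv₀ hL).bddAbove_range
  have hc0 : 0 < c := (inv_pos.2 (hq 0)).trans_le (hc ⟨0, rfl⟩)
  exact ⟨c⁻¹, b, inv_pos.2 hc0, (hq 0).trans_le (hb ⟨0, rfl⟩),
    fun n => ⟨inv_le_of_inv_le₀ (hq n) (hc ⟨n, rfl⟩), hb ⟨n, rfl⟩⟩⟩

def PowerBounds (k : ℕ → ℝ) (r a b : ℝ) : Prop :=
  ∀ n : ℕ, a * ((n : ℝ) + 1) ^ r ≤ k n ∧ k n ≤ b * ((n : ℝ) + 1) ^ r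

lemma ces_powerBounds {s : ℝ} (hs : 0 < s) :
    ∃ a b, 0 < a ∧ 0 < b ∧ PowerBounds (ces s) (s - 1) a b := by
  obtain ⟨a, b, ha, hb, hab⟩ := exists_forall_le_and_le_of_tendsto
    (fun n => div_pos (ces_pos hs n) (by positivity))
    (inv_ne_zero (Real.Gamma_pos_of_pos hs).ne') (tendsto_ces_div_rpow hs)
  refine ⟨a, b, ha, hb, fun n => ?_⟩
  have hx : 0 < ((n : ℝ) + 1) ^ (s - 1) := by positivity
  exact ⟨(le_div_iff₀ hx).1 (hab n).1, (div_le_iff₀ hx).1 (hab n).2⟩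

lemma rpow_le_rpow_max_mul_rpow {x y K r : ℝ} (hx : 0 < x) (hxy : x ≤ y) (hyK : y ≤ K * x) :
    y ^ r ≤ K ^ max r 0 * x ^ r := by
  rcases le_total 0 r with hr | hr
  · have hK : 0 ≤ K := (pos_of_mul_pos_left ((hx.trans_le hxy).trans_le hyK) hx.le).le
    rw [max_eq_left hr, ← Real.mul_rpow hK hx.le]
    exact Real.rpow_le_rpow (hx.le.trans hxy) hyK hr
  · rw [max_eq_right hr, Real.rpow_zero, one_mul]
    exact Real.rpow_le_rpow_of_nonpos hx hxy hr

namespace PowerBounds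

variable {k : ℕ → ℝ} {r a b : ℝ}

lemma pos (hk : PowerBounds k r a b) (ha : 0 < a) (n : ℕ) : 0 < k n :=
  (by positivity : 0 < a * ((n : ℝ) + 1) ^ r).trans_le (hk n).1

lemma pos_right (hk : PowerBounds k r a b) (ha : 0 < a) : 0 < b := by
  simpa using (hk.pos ha 0).trans_le (hk 0).2

lemma inv (hk : PowerBounds k r a b) (ha : 0 < a) : PowerBounds k⁻¹ (-r) b⁻¹ a⁻¹ := fun n => by
  simp only [Pi.inv_apply, Real.rpow_neg (by positivity : (0 : ℝ) ≤ n + 1), ← mul_inv]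
  exact ⟨inv_anti₀ (hk.pos ha n) (hk n).2, inv_anti₀ (by positivity) (hk n).1⟩

lemma div_le (hk : PowerBounds k r a b) (ha : 0 < a) (j m : ℕ) :
    k (j + m) / k j ≤ b / a * ((m : ℝ) + 1) ^ max r 0 := by
  have hb := hk.pos_right ha
  rw [div_le_iff₀ (hk.pos ha j)]
  calc k (j + m) ≤ b * (((j + m : ℕ) : ℝ) + 1) ^ r := (hk _).2
    _ ≤ b * (((m : ℝ) + 1) ^ max r 0 * ((j : ℝ) + 1) ^ r) := by
        gcongr
        exact rpow_le_rpow_max_mul_rpow (by positivity) (by push_cast; linarith)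
          (by push_cast; nlinarith [(j.cast_nonneg : (0 : ℝ) ≤ j), (m.cast_nonneg : (0 : ℝ) ≤ m)])
    _ = b / a * ((m : ℝ) + 1) ^ max r 0 * (a * ((j : ℝ) + 1) ^ r) := by field_simp
    _ ≤ b / a * ((m : ℝ) + 1) ^ max r 0 * k j := by gcongr; exact (hk j).1

lemma exists_le_div (hk : PowerBounds k r a b) (ha : 0 < a) (m : ℕ) :
    ∃ j, a / b * 2 ^ (-|r|) * ((m : ℝ) + 1) ^ max r 0 ≤ k (j + m) / k j := by
  have hb := hk.pos_right ha
  rcases le_total 0 r with hr | hr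
  · refine ⟨0, ?_⟩
    have h0 : k 0 ≤ b := by simpa using (hk 0).2
    have h2 : (2 : ℝ) ^ (-|r|) ≤ 1 :=
      Real.rpow_le_one_of_one_le_of_nonpos one_le_two (neg_nonpos.2 (abs_nonneg r))
    rw [max_eq_left hr, le_div_iff₀ (hk.pos ha 0), zero_add]
    calc a / b * 2 ^ (-|r|) * ((m : ℝ) + 1) ^ r * k 0
        ≤ a / b * 1 * ((m : ℝ) + 1) ^ r * b := by gcongr; exact (hk.pos ha 0).le
      _ = a * ((m : ℝ) + 1) ^ r := by field_simp
      _ ≤ k m := (hk m).1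
  · refine ⟨m, ?_⟩
    rw [max_eq_right hr, Real.rpow_zero, mul_one, abs_of_nonpos hr, neg_neg,
      le_div_iff₀ (hk.pos ha m)]
    calc a / b * 2 ^ r * k m ≤ a / b * 2 ^ r * (b * ((m : ℝ) + 1) ^ r) := by
          gcongr; exact (hk m).2
      _ = a * (2 * ((m : ℝ) + 1)) ^ r := by
          rw [Real.mul_rpow zero_le_two (by positivity)]; field_simp
      _ ≤ a * (((m + m : ℕ) : ℝ) + 1) ^ r :=
          mul_le_mul_of_nonneg_left
            (Real.rpow_le_rpow_of_nonpos (by positivity) (by push_cast; linarith) hr) ha.le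
      _ ≤ k (m + m) := (hk _).1

end PowerBounds

section InnerProductSpace

variable {𝕜 E F : Type*} [RCLike 𝕜] [NormedAddCommGroup E] [InnerProductSpace 𝕜 E]
  [NormedAddCommGroup F] [InnerProductSpace 𝕜 F]

lemma norm_sum_sq_of_pairwise_inner_eq_zero {ι : Type*} {v : ι → E}
    (hv : Pairwise fun i j => ⟪v i, v j⟫_𝕜 = 0) (s : Finset ι) :
    ‖∑ i ∈ s, v i‖ ^ 2 = ∑ i ∈ s, ‖v i‖ ^ 2 := by
  classical
  induction s using Finset.induction_on with
  | empty => simp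
  | insert i s hi ih =>
    rw [Finset.sum_insert hi, Finset.sum_insert hi, ← ih, sq, sq, sq]
    refine norm_add_sq_eq_norm_sq_add_norm_sq_of_inner_eq_zero (𝕜 := 𝕜) _ _ ?_
    rw [inner_sum]
    exact Finset.sum_eq_zero fun j hj => hv (ne_of_mem_of_not_mem hj hi).symm

lemma pairwise_inner_smul_eq_zero {ι : Type*} {v : ι → E}
    (hv : Pairwise fun i j => ⟪v i, v j⟫_𝕜 = 0) (c : ι → 𝕜) :
    Pairwise fun i j => ⟪c i • v i, c j • v j⟫_𝕜 = 0 := fun i j hij => by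
  dsimp only
  rw [inner_smul_left, inner_smul_right, hv hij, mul_zero, mul_zero]

lemma opNorm_sq_le_of_pairwise_inner_eq_zero {ι : Type*} {e : ι → E}
    (he : Pairwise fun i j => ⟪e i, e j⟫_𝕜 = 0)
    (hdense : (Submodule.span 𝕜 (Set.range e)).topologicalClosure = ⊤) (T : E →L[𝕜] F)
    (hTe : Pairwise fun i j => ⟪T (e i), T (e j)⟫_𝕜 = 0) {M : ℝ} (hM : 0 ≤ M)
    (hTM : ∀ i, ‖T (e i)‖ ^ 2 ≤ M * ‖e i‖ ^ 2) : ‖T‖ ^ 2 ≤ M := by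
  have hspan : (Submodule.span 𝕜 (Set.range e) : Set E) ⊆ {x | ‖T x‖ ^ 2 ≤ M * ‖x‖ ^ 2} := by
    intro x hx
    obtain ⟨c, rfl⟩ := Finsupp.mem_span_range_iff_exists_finsupp.1 hx
    simp only [Set.mem_ofPred_eq, Finsupp.sum, map_sum, map_smul]
    rw [norm_sum_sq_of_pairwise_inner_eq_zero (pairwise_inner_smul_eq_zero hTe c),
      norm_sum_sq_of_pairwise_inner_eq_zero (pairwise_inner_smul_eq_zero he c), Finset.mul_sum]
    refine Finset.sum_le_sum fun i _ => ?_
    rw [norm_smul, norm_smul, mul_pow, mul_pow, mul_left_comm]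
    exact mul_le_mul_of_nonneg_left (hTM i) (by positivity)
  have hall : ∀ x, ‖T x‖ ^ 2 ≤ M * ‖x‖ ^ 2 := fun x =>
    (isClosed_le (by fun_prop) (by fun_prop)).closure_subset_iff.2 hspan
      (Submodule.dense_iff_topologicalClosure_eq_top.2 hdense x)
  have hT : ‖T‖ ≤ √M := T.opNorm_le_bound (Real.sqrt_nonneg M) fun x => by
    rw [← Real.sqrt_sq (norm_nonneg (T x)), ← Real.sqrt_sq (norm_nonneg x), ← Real.sqrt_mul hM]
    exact Real.sqrt_le_sqrt (hall x)
  calc ‖T‖ ^ 2 ≤ √M ^ 2 := by gcongr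
    _ = M := Real.sq_sqrt hM

end InnerProductSpace

lemma ContinuousLinearMap.norm_sq_div_norm_sq_le_opNorm_sq {𝕜 E F : Type*}
    [NontriviallyNormedField 𝕜] [SeminormedAddCommGroup E] [SeminormedAddCommGroup F]
    [NormedSpace 𝕜 E] [NormedSpace 𝕜 F] (T : E →L[𝕜] F) (x : E) :
    ‖T x‖ ^ 2 / ‖x‖ ^ 2 ≤ ‖T‖ ^ 2 := by
  rw [← div_pow]
  exact pow_le_pow_left₀ (by positivity) (T.ratio_le_opNorm x) 2

section Shift

variable {R M : Type*} [Semiring R] [TopologicalSpace M] [AddCommMonoid M] [Module R M]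

def IsForwardShift (F : M →L[R] M) (e : ℕ → M) : Prop :=
  ∀ n, F (e n) = e (n + 1)

def IsBackwardShift (B : M →L[R] M) (e : ℕ → M) : Prop :=
  B (e 0) = 0 ∧ ∀ n, B (e (n + 1)) = e n

lemma IsForwardShift.pow_apply {F : M →L[R] M} {e : ℕ → M} (hF : IsForwardShift F e)
    (m i : ℕ) : (F ^ m) (e i) = e (i + m) := by
  induction m with
  | zero => simp
  | succ m ih => rw [pow_succ', mul_apply_eq_comp, ih, hF]; rfl

lemma IsBackwardShift.pow_apply {B : M →L[R] M} {e : ℕ → M} (hB : IsBackwardShift B e)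
    (m i : ℕ) : (B ^ m) (e i) = if m ≤ i then e (i - m) else 0 := by
  induction m generalizing i with
  | zero => simp
  | succ m ih =>
    rw [pow_succ, mul_apply_eq_comp]
    cases i with
    | zero => simp [hB.1]
    | succ n => simp [hB.2, ih]

end Shift

section WeightedShift

variable {𝕜 E : Type*} [RCLike 𝕜] [NormedAddCommGroup E] [InnerProductSpace 𝕜 E]
  {e : ℕ → E} {k : ℕ → ℝ} {r a b : ℝ}

lemma IsForwardShift.opNorm_pow_sq_le {F : E →L[𝕜] E} (hF : IsForwardShift F e)
    (he : Pairwise fun i j => ⟪e i, e j⟫_𝕜 = 0)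
    (hdense : (Submodule.span 𝕜 (Set.range e)).topologicalClosure = ⊤)
    (hnorm : ∀ i, ‖e i‖ ^ 2 = k i) (hk : PowerBounds k r a b) (ha : 0 < a) (m : ℕ) :
    ‖F ^ m‖ ^ 2 ≤ b / a * ((m : ℝ) + 1) ^ max r 0 := by
  have hb := hk.pos_right ha
  refine opNorm_sq_le_of_pairwise_inner_eq_zero he hdense _ (fun i j hij => ?_) (by positivity)
    fun i => ?_
  · dsimp only
    rw [hF.pow_apply, hF.pow_apply]
    exact he (by omega)
  · rw [hF.pow_apply, hnorm, hnorm, ← div_le_iff₀ (hk.pos ha i)]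
    exact hk.div_le ha i m

lemma IsForwardShift.le_opNorm_pow_sq {F : E →L[𝕜] E} (hF : IsForwardShift F e)
    (hnorm : ∀ i, ‖e i‖ ^ 2 = k i) (hk : PowerBounds k r a b) (ha : 0 < a) (m : ℕ) :
    a / b * 2 ^ (-|r|) * ((m : ℝ) + 1) ^ max r 0 ≤ ‖F ^ m‖ ^ 2 := by
  obtain ⟨j, hj⟩ := hk.exists_le_div ha m
  calc _ ≤ k (j + m) / k j := hj
    _ = ‖(F ^ m) (e j)‖ ^ 2 / ‖e j‖ ^ 2 := by rw [hF.pow_apply, hnorm, hnorm]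
    _ ≤ ‖F ^ m‖ ^ 2 := (F ^ m).norm_sq_div_norm_sq_le_opNorm_sq (e j)

lemma IsBackwardShift.opNorm_pow_sq_le {B : E →L[𝕜] E} (hB : IsBackwardShift B e)
    (he : Pairwise fun i j => ⟪e i, e j⟫_𝕜 = 0)
    (hdense : (Submodule.span 𝕜 (Set.range e)).topologicalClosure = ⊤)
    (hnorm : ∀ i, ‖e i‖ ^ 2 = k i) (hk : PowerBounds k r a b) (ha : 0 < a) (m : ℕ) :
    ‖B ^ m‖ ^ 2 ≤ b / a * ((m : ℝ) + 1) ^ max (-r) 0 := by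
  have hb := hk.pos_right ha
  refine opNorm_sq_le_of_pairwise_inner_eq_zero he hdense _ (fun i j hij => ?_) (by positivity)
    fun i => ?_
  · dsimp only
    rw [hB.pow_apply, hB.pow_apply]
    split_ifs with hi hj hj
    · exact he (by omega)
    all_goals simp only [inner_zero_left, inner_zero_right]
  · rw [hB.pow_apply]
    split_ifs with hi
    · obtain ⟨j, rfl⟩ := Nat.exists_eq_add_of_le' hi
      rw [Nat.add_sub_cancel, hnorm, hnorm, ← div_le_iff₀ (hk.pos ha _)]
      simpa only [Pi.inv_apply, inv_div_inv] using (hk.inv ha).div_le (inv_pos.2 hb) j m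
    · rw [norm_zero, sq, zero_mul]
      positivity

lemma IsBackwardShift.le_opNorm_pow_sq {B : E →L[𝕜] E} (hB : IsBackwardShift B e)
    (hnorm : ∀ i, ‖e i‖ ^ 2 = k i) (hk : PowerBounds k r a b) (ha : 0 < a) (m : ℕ) :
    a / b * 2 ^ (-|r|) * ((m : ℝ) + 1) ^ max (-r) 0 ≤ ‖B ^ m‖ ^ 2 := by
  obtain ⟨j, hj⟩ := (hk.inv ha).exists_le_div (inv_pos.2 (hk.pos_right ha)) m
  rw [abs_neg, inv_div_inv, Pi.inv_apply, Pi.inv_apply, inv_div_inv] at hj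
  calc _ ≤ k j / k (j + m) := hj
    _ = ‖(B ^ m) (e (j + m))‖ ^ 2 / ‖e (j + m)‖ ^ 2 := by
        rw [hB.pow_apply, if_pos (Nat.le_add_left m j), Nat.add_sub_cancel, hnorm, hnorm]
    _ ≤ ‖B ^ m‖ ^ 2 := (B ^ m).norm_sq_div_norm_sq_le_opNorm_sq _

end WeightedShift

/-- `e n` models the monomial `t^n` of `H_s`: an orthogonal family with `‖e n‖² = k_n` and
dense span. -/
theorem stmt_18_general {E : Type*} [NormedAddCommGroup E] [InnerProductSpace ℂ E]
    (s : ℝ) (hs : 0 < s) (e : ℕ → E)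
    (horth : ∀ i j : ℕ, ⟪e i, e j⟫_ℂ = if i = j then ((ces s i : ℝ) : ℂ) else 0)
    (hdense : (Submodule.span ℂ (Set.range e)).topologicalClosure = ⊤)
    (B F : E →L[ℂ] E)
    (hB0 : B (e 0) = 0) (hB : ∀ n : ℕ, B (e (n + 1)) = e n)
    (hF : ∀ n : ℕ, F (e n) = e (n + 1)) :
    ∃ c C : ℝ, 0 < c ∧ 0 < C ∧ ∀ m : ℕ,
      c * ((m : ℝ) + 1) ^ (max (1 - s) 0) ≤ ‖B ^ m‖ ^ 2 ∧
      ‖B ^ m‖ ^ 2 ≤ C * ((m : ℝ) + 1) ^ (max (1 - s) 0) ∧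
      c * ((m : ℝ) + 1) ^ (max (s - 1) 0) ≤ ‖F ^ m‖ ^ 2 ∧
      ‖F ^ m‖ ^ 2 ≤ C * ((m : ℝ) + 1) ^ (max (s - 1) 0) := by
  obtain ⟨a, b, ha, hb, hk⟩ := ces_powerBounds hs
  have he : Pairwise fun i j => ⟪e i, e j⟫_ℂ = 0 := fun i j hij =>
    (horth i j).trans (if_neg hij)
  have hnorm : ∀ i, ‖e i‖ ^ 2 = ces s i := fun i => by
    have h := inner_self_eq_norm_sq_to_K (𝕜 := ℂ) (e i)
    rw [horth, if_pos rfl] at h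
    exact Complex.ofReal_injective (by push_cast; exact h.symm)
  have hB' : IsBackwardShift B e := ⟨hB0, hB⟩
  have h1s : -(s - 1) = 1 - s := neg_sub s 1
  refine ⟨a / b * 2 ^ (-|s - 1|), b / a, by positivity, by positivity, fun m => ⟨?_, ?_, ?_, ?_⟩⟩
  · exact h1s ▸ hB'.le_opNorm_pow_sq hnorm hk ha m
  · exact h1s ▸ hB'.opNorm_pow_sq_le he hdense hnorm hk ha m
  · exact IsForwardShift.le_opNorm_pow_sq hF hnorm hk ha m
  · exact IsForwardShift.opNorm_pow_sq_le hF he hdense hnorm hk ha m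

/-- Norm asymptotics of the powers of the backward shift `B_s` and forward shift `F_s`
on the weighted space `H_s` (modeled abstractly: `e n` is the monomial `t^n`, an
orthogonal family with `‖e n‖² = k_n` whose span is dense):
`‖B_s^m‖² ≍ (m+1)^{max(1-s,0)}` and `‖F_s^m‖² ≍ (m+1)^{max(s-1,0)}`. -/
theorem stmt_18 {E : Type*} [NormedAddCommGroup E] [InnerProductSpace ℂ E] [CompleteSpace E]
    (s : ℝ) (hs : 0 < s) (e : ℕ → E)
    (horth : ∀ i j : ℕ, ⟪e i, e j⟫_ℂ = if i = j then ((ces s i : ℝ) : ℂ) else 0)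
    (hdense : (Submodule.span ℂ (Set.range e)).topologicalClosure = ⊤)
    (B F : E →L[ℂ] E)
    (hB0 : B (e 0) = 0) (hB : ∀ n : ℕ, B (e (n + 1)) = e n)
    (hF : ∀ n : ℕ, F (e n) = e (n + 1)) :
    ∃ c C : ℝ, 0 < c ∧ 0 < C ∧ ∀ m : ℕ,
      c * ((m : ℝ) + 1) ^ (max (1 - s) 0) ≤ ‖B ^ m‖ ^ 2 ∧
      ‖B ^ m‖ ^ 2 ≤ C * ((m : ℝ) + 1) ^ (max (1 - s) 0) ∧
      c * ((m : ℝ) + 1) ^ (max (s - 1) 0) ≤ ‖F ^ m‖ ^ 2 ∧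
      ‖F ^ m‖ ^ 2 ≤ C * ((m : ℝ) + 1) ^ (max (s - 1) 0) :=
  stmt_18_general s hs e horth hdense B F hB0 hB hF
end

section
/- Let 0 < a < 1 and set f_r(t) = (1-t)^{a+1}/(1-rt)^a for 0 < r < 1. Then there is a constant C independent of r and n such that the n-th Taylor coefficient of f_r satisfies |f̂_r(n)| ≤ C/(n+1)^{1+a} for all n ≥ 0. -/
/-!
Two differentiations give `f_r''(t) = a(a+1)(1-r)^2 (1-t)^(a-1) (1-rt)^(-a-2)`. Since
`|1 - r t| ≥ 1 - r`, `|1 - r t| ≥ 1 - ρ` and `|1 - t| ≤ 2 |1 - r t|` on the circle `|t| = ρ`, one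
gets `|f_r''(t)| ≤ 4 (1 - ρ)^(-b) |1 - t|^(b - 1)` for `b = min a (1 - a)`, and `|1 - t|^(b - 1)`
is integrable over the circle uniformly in `ρ`. Cauchy's estimate for the `m`-th coefficient of
`f_r''` on the circle of radius `ρ = (m+1)/(m+2)` then gives
`(m+1)(m+2) |f̂_r(m+2)| ≲ (m+2)^b ≤ (m+2)^(1-a)`.
-/

open Metric Filter Real
open scoped Topology Nat NNReal

theorem factorial_mul_eq_iteratedDeriv_of_hasSum {R : ℝ≥0} {c : ℕ → ℂ} {f : ℂ → ℂ}
    (hR : 0 < R) (hc : ∀ t : ℂ, ‖t‖ < R → HasSum (fun n => c n * t ^ n) (f t)) (n : ℕ) :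
    (n ! : ℂ) * c n = iteratedDeriv n f 0 := by
  have hradius : (R : ENNReal) ≤ (FormalMultilinearSeries.ofScalars ℂ c).radius := by
    refine ENNReal.le_of_forall_nnreal_lt fun s hs => ?_
    have hs' : ‖((s : ℝ) : ℂ)‖ < R := by simpa using hs
    refine FormalMultilinearSeries.le_radius_of_tendsto _ (l := 0) ?_
    simpa [FormalMultilinearSeries.ofScalars_norm] using
      (hc _ hs').summable.tendsto_atTop_zero.norm
  have hf : HasFPowerSeriesOnBall f (FormalMultilinearSeries.ofScalars ℂ c) 0 R :=
    ⟨hradius, by simpa using hR, fun {y} hy => by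
      simpa [FormalMultilinearSeries.ofScalars_apply_eq, mul_comm] using hc y (by simpa using hy)⟩
  rw [iteratedDeriv_eq_iteratedFDeriv, ← hf.factorial_smul (1 : ℂ) n]
  simp [nsmul_eq_mul]

theorem norm_iteratedDeriv_le_circleIntegral {E : Type*} [NormedAddCommGroup E]
    [NormedSpace ℂ E] [CompleteSpace E] {g : ℂ → E} {c : ℂ} {R : ℝ} (hR : 0 < R)
    (hg : DifferentiableOn ℂ g (closedBall c R)) (n : ℕ) :
    ‖iteratedDeriv n g c‖ ≤
      n ! * ((2 * π)⁻¹ * ∫ θ in 0..2 * π, ‖g (circleMap c R θ)‖) * R⁻¹ ^ n := by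
  lift R to ℝ≥0 using hR.le
  have hp := hg.hasFPowerSeriesOnBall (mod_cast hR)
  rw [iteratedDeriv_eq_iteratedFDeriv, ← hp.factorial_smul (1 : ℂ) n, mul_assoc]
  refine norm_nsmul_le.trans ?_
  gcongr
  calc ‖cauchyPowerSeries g c R n fun _ => 1‖ ≤ ‖cauchyPowerSeries g c R n‖ := by simp
    _ ≤ _ := by simpa using norm_cauchyPowerSeries_le g c R n

theorem iteratedDeriv_add_two_eq {𝕜 F : Type*} [NontriviallyNormedField 𝕜]
    [NormedAddCommGroup F] [NormedSpace 𝕜 F] {f f' f'' : 𝕜 → F} {x : 𝕜}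
    (hf : ∀ᶠ t in 𝓝 x, HasDerivAt f (f' t) t) (hf' : ∀ᶠ t in 𝓝 x, HasDerivAt f' (f'' t) t)
    (m : ℕ) : iteratedDeriv (m + 2) f x = iteratedDeriv m f'' x := by
  have h : deriv f =ᶠ[𝓝 x] f' := hf.mono fun t ht => ht.deriv
  have h' : deriv f' =ᶠ[𝓝 x] f'' := hf'.mono fun t ht => ht.deriv
  rw [iteratedDeriv_succ', h.iteratedDeriv_eq, iteratedDeriv_succ', h'.iteratedDeriv_eq]

theorem rpow_sub_one_mul_rpow_neg_le {a b x y d : ℝ} (hb : 0 < b) (hba : b ≤ a)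
    (hx : 0 < x) (hxy : x ≤ 2 * y) (hd : 0 < d) (hdy : d ≤ y) :
    x ^ (a - 1) * y ^ (-a) ≤ 2 ^ a * d ^ (-b) * x ^ (b - 1) := by
  have hy : 0 < y := hd.trans_le hdy
  calc x ^ (a - 1) * y ^ (-a) = x ^ (a - 1) * y ^ (-(a - b)) * y ^ (-b) := by
        rw [mul_assoc, ← rpow_add hy]; ring_nf
    _ ≤ x ^ (a - 1) * (x / 2) ^ (-(a - b)) * d ^ (-b) := by
        gcongr x ^ (a - 1) * ?_ * ?_
        · exact rpow_le_rpow_of_nonpos (by positivity) (by linarith) (by linarith)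
        · exact rpow_le_rpow_of_nonpos hd hdy (by linarith)
    _ = 2 ^ (a - b) * d ^ (-b) * x ^ (b - 1) := by
        rw [div_rpow hx.le zero_le_two, rpow_neg zero_le_two, div_inv_eq_mul, mul_comm _ (2 ^ _),
          ← mul_assoc, mul_comm _ (2 ^ _), mul_assoc (2 ^ _), ← rpow_add hx]
        ring_nf
    _ ≤ 2 ^ a * d ^ (-b) * x ^ (b - 1) := by
        gcongr
        · exact one_le_two
        · linarith

theorem inv_div_pow_le_three (m : ℕ) : (((m + 1 : ℝ) / (m + 2))⁻¹) ^ m ≤ 3 := by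
  have hm : (0 : ℝ) < m + 1 := by positivity
  calc (((m + 1 : ℝ) / (m + 2))⁻¹) ^ m = (1 + (m + 1 : ℝ)⁻¹) ^ m := by
        rw [inv_div]; congr 1; field_simp; ring
    _ ≤ exp ((m + 1 : ℝ)⁻¹) ^ m := by
        gcongr; linarith [add_one_le_exp (m + 1 : ℝ)⁻¹]
    _ = exp (m / (m + 1)) := by rw [← exp_nat_mul, div_eq_mul_inv]
    _ ≤ exp 1 := exp_le_exp.2 (div_le_one_of_le₀ (by linarith) hm.le)
    _ ≤ 3 := by linarith [exp_one_lt_d9]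

theorem two_rpow_le_four {p : ℝ} (hp : p ≤ 2) : (2 : ℝ) ^ p ≤ 4 :=
  (rpow_le_rpow_of_exponent_le one_le_two hp).trans_eq (by norm_num)

theorem add_three_rpow_mul_add_two_rpow_le {u a b : ℝ} (hu : 0 ≤ u) (ha₀ : 0 ≤ a) (ha₁ : a ≤ 1)
    (hb : b ≤ 1 - a) : (u + 3) ^ (1 + a) * (u + 2) ^ b ≤ 8 * ((u + 1) * (u + 2)) := by
  calc (u + 3) ^ (1 + a) * (u + 2) ^ b ≤ (2 * (u + 2)) ^ (1 + a) * (u + 2) ^ (1 - a) := by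
        gcongr
        · linarith
        · linarith
    _ = 2 ^ (1 + a) * (u + 2) ^ 2 := by
        rw [mul_rpow zero_le_two (by linarith), mul_assoc, ← rpow_add (by linarith)]
        norm_num
    _ ≤ 4 * (u + 2) ^ 2 := by gcongr; exact two_rpow_le_four (by linarith)
    _ ≤ 8 * ((u + 1) * (u + 2)) := by nlinarith

theorem mul_add_three_rpow_le_of_mul_le {x K u a b : ℝ} (hu : 0 ≤ u) (ha₀ : 0 ≤ a) (ha₁ : a ≤ 1)
    (hb : b ≤ 1 - a) (hK : 0 ≤ K) (hx : x * ((u + 1) * (u + 2)) ≤ K * (u + 2) ^ b) :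
    x * (u + 3) ^ (1 + a) ≤ 8 * K := by
  refine le_of_mul_le_mul_right ?_ (by positivity : 0 < (u + 1) * (u + 2))
  calc x * (u + 3) ^ (1 + a) * ((u + 1) * (u + 2))
      = x * ((u + 1) * (u + 2)) * (u + 3) ^ (1 + a) := by ring
    _ ≤ K * (u + 2) ^ b * (u + 3) ^ (1 + a) := by gcongr
    _ = K * ((u + 3) ^ (1 + a) * (u + 2) ^ b) := by ring
    _ ≤ K * (8 * ((u + 1) * (u + 2))) :=
        mul_le_mul_of_nonneg_left (add_three_rpow_mul_add_two_rpow_le hu ha₀ ha₁ hb) hK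
    _ = 8 * K * ((u + 1) * (u + 2)) := by ring

theorem norm_sq_one_sub_circleMap (ρ θ : ℝ) :
    ‖1 - circleMap 0 ρ θ‖ ^ 2 = (1 - ρ) ^ 2 + 2 * ρ * (1 - cos θ) := by
  rw [← Complex.normSq_eq_norm_sq, Complex.normSq_apply]
  simp [circleMap, Complex.exp_mul_I, ← Complex.ofReal_cos, ← Complex.ofReal_sin]
  linear_combination ρ ^ 2 * sin_sq_add_cos_sq θ

theorem le_pi_mul_norm_one_sub_circleMap {ρ θ η : ℝ} (hρ : 1 / 2 ≤ ρ) (hη₀ : 0 ≤ η)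
    (hη : η ≤ π) (hcos : cos θ = cos η) : η ≤ π * ‖1 - circleMap 0 ρ θ‖ := by
  have hcosη := cos_le_one_sub_mul_cos_sq (x := η) (by rwa [abs_of_nonneg hη₀])
  have hsq : (η / π) ^ 2 ≤ ‖1 - circleMap 0 ρ θ‖ ^ 2 := by
    rw [norm_sq_one_sub_circleMap, hcos, div_pow]
    have hq : 0 ≤ 2 / π ^ 2 * η ^ 2 := by positivity
    calc η ^ 2 / π ^ 2 ≤ 2 / π ^ 2 * η ^ 2 := by
          rw [div_mul_eq_mul_div]; gcongr; linarith [sq_nonneg η]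
      _ ≤ 2 * ρ * (2 / π ^ 2 * η ^ 2) := le_mul_of_one_le_left hq (by linarith)
      _ ≤ (1 - ρ) ^ 2 + 2 * ρ * (1 - cos η) := by nlinarith [sq_nonneg (1 - ρ)]
  rw [← div_le_iff₀' pi_pos]
  exact (sq_le_sq₀ (by positivity) (norm_nonneg _)).1 hsq

theorem min_le_pi_mul_norm_one_sub_circleMap {ρ θ : ℝ} (hρ : 1 / 2 ≤ ρ) (hθ₀ : 0 ≤ θ)
    (hθ : θ ≤ 2 * π) : min θ (2 * π - θ) ≤ π * ‖1 - circleMap 0 ρ θ‖ := by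
  rcases min_cases θ (2 * π - θ) with ⟨h, hle⟩ | ⟨h, hlt⟩ <;> rw [h]
  · exact le_pi_mul_norm_one_sub_circleMap hρ hθ₀ (by linarith) rfl
  · exact le_pi_mul_norm_one_sub_circleMap hρ (by linarith) (by linarith) (cos_two_pi_sub θ).symm

theorem continuous_norm_one_sub_circleMap_rpow {ρ : ℝ} (hρ : |ρ| < 1) (p : ℝ) :
    Continuous fun θ => ‖1 - circleMap 0 ρ θ‖ ^ p := by
  refine (continuous_const.sub (continuous_circleMap 0 ρ)).norm.rpow_const fun θ => Or.inl ?_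
  rw [Pi.sub_apply, norm_ne_zero_iff, sub_ne_zero]
  intro h
  have := norm_circleMap_zero ρ θ
  rw [← h, norm_one] at this
  linarith

theorem integral_norm_one_sub_circleMap_rpow_le {b ρ : ℝ} (hb : 0 < b) (hb₁ : b ≤ 1)
    (hρ : 1 / 2 ≤ ρ) (hρ₁ : ρ < 1) :
    ∫ θ in 0..2 * π, ‖1 - circleMap 0 ρ θ‖ ^ (b - 1) ≤
      π ^ (1 - b) * ∫ θ in 0..2 * π, (θ ^ (b - 1) + (2 * π - θ) ^ (b - 1)) := by
  have hexp : -1 < b - 1 := by linarith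
  have hint : IntervalIntegrable (fun θ => θ ^ (b - 1) + (2 * π - θ) ^ (b - 1))
      MeasureTheory.volume 0 (2 * π) := by
    refine (intervalIntegral.intervalIntegrable_rpow' hexp).add ?_
    simpa using
      ((intervalIntegral.intervalIntegrable_rpow' (a := 0) (b := 2 * π) hexp).comp_sub_left
        (2 * π)).symm
  rw [← intervalIntegral.integral_const_mul]
  refine intervalIntegral.integral_mono_on_of_le_Ioo (by positivity) ?_ (hint.const_mul _) ?_
  · exact (continuous_norm_one_sub_circleMap_rpow
      (by rwa [abs_of_pos (by linarith)]) _).intervalIntegrable _ _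
  intro θ hθ
  have hmin : 0 < min θ (2 * π - θ) := lt_min hθ.1 (by linarith [hθ.2])
  calc ‖1 - circleMap 0 ρ θ‖ ^ (b - 1) ≤ (min θ (2 * π - θ) / π) ^ (b - 1) := by
        refine rpow_le_rpow_of_nonpos (by positivity) ?_ (by linarith)
        rw [div_le_iff₀' pi_pos]
        exact min_le_pi_mul_norm_one_sub_circleMap hρ hθ.1.le hθ.2.le
    _ = π ^ (1 - b) * min θ (2 * π - θ) ^ (b - 1) := by
        rw [div_rpow hmin.le pi_pos.le, div_eq_mul_inv, ← rpow_neg pi_pos.le, neg_sub, mul_comm]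
    _ ≤ π ^ (1 - b) * (θ ^ (b - 1) + (2 * π - θ) ^ (b - 1)) := by
        gcongr
        rcases min_cases θ (2 * π - θ) with ⟨h, -⟩ | ⟨h, -⟩ <;> rw [h]
        · exact le_add_of_nonneg_right (rpow_nonneg (by linarith [hθ.2]) _)
        · exact le_add_of_nonneg_left (rpow_nonneg hθ.1.le _)

theorem one_sub_ofReal_mul_mem_slitPlane {s : ℝ} (hs₀ : 0 ≤ s) (hs₁ : s ≤ 1) {t : ℂ}
    (ht : ‖t‖ < 1) : 1 - (s : ℂ) * t ∈ Complex.slitPlane := by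
  rw [sub_eq_add_neg]
  refine Complex.mem_slitPlane_of_norm_lt_one ?_
  rw [norm_neg, norm_mul, Complex.norm_real, Real.norm_of_nonneg hs₀]
  nlinarith [norm_nonneg t]

-- `f_r = powProd r (a + 1) (-a)`, and its derivatives are combinations of `powProd r p q`.
noncomputable def powProd (s : ℝ) (p q t : ℂ) : ℂ := (1 - t) ^ p * (1 - s * t) ^ q

section powProd

variable {s : ℝ} {t : ℂ}

theorem norm_powProd (s p q : ℝ) (t : ℂ) :
    ‖powProd s p q t‖ = ‖1 - t‖ ^ p * ‖1 - s * t‖ ^ q := by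
  rw [powProd, norm_mul, Complex.norm_cpow_real, Complex.norm_cpow_real]

theorem powProd_eq_mul_pow (hs₀ : 0 ≤ s) (hs₁ : s ≤ 1) (ht : ‖t‖ < 1) {p q p' q' : ℂ} (m n : ℕ)
    (hp : p' = p + m) (hq : q' = q + n) :
    powProd s p' q' t = powProd s p q t * (1 - t) ^ m * (1 - s * t) ^ n := by
  subst hp hq
  have hu : 1 - t ≠ 0 := Complex.slitPlane_ne_zero
    (by simpa using one_sub_ofReal_mul_mem_slitPlane zero_le_one le_rfl ht)
  have hv := Complex.slitPlane_ne_zero (one_sub_ofReal_mul_mem_slitPlane hs₀ hs₁ ht)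
  rw [powProd, powProd, Complex.cpow_add _ _ hu, Complex.cpow_add _ _ hv, Complex.cpow_natCast,
    Complex.cpow_natCast]
  ring

theorem hasDerivAt_powProd (hs₀ : 0 ≤ s) (hs₁ : s ≤ 1) (ht : ‖t‖ < 1) (p q : ℂ) :
    HasDerivAt (powProd s p q)
      (-p * powProd s (p - 1) q t - s * q * powProd s p (q - 1) t) t := by
  have hu := ((hasDerivAt_id' t).const_sub 1).cpow_const (c := p)
    (by simpa using one_sub_ofReal_mul_mem_slitPlane zero_le_one le_rfl ht)
  have hv := (((hasDerivAt_id' t).const_mul (s : ℂ)).const_sub 1).cpow_const (c := q)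
    (one_sub_ofReal_mul_mem_slitPlane hs₀ hs₁ ht)
  refine (hu.mul hv).congr_deriv ?_
  simp only [powProd]
  ring

theorem differentiableAt_powProd (hs₀ : 0 ≤ s) (hs₁ : s ≤ 1) (ht : ‖t‖ < 1) (p q : ℂ) :
    DifferentiableAt ℂ (powProd s p q) t :=
  (hasDerivAt_powProd hs₀ hs₁ ht p q).differentiableAt

end powProd

section derivatives

variable {a : ℂ} {r : ℝ} {t : ℂ}

theorem hasDerivAt_powProd_add_one_neg (hr₀ : 0 ≤ r) (hr₁ : r ≤ 1) (ht : ‖t‖ < 1) :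
    HasDerivAt (powProd r (a + 1) (-a))
      (-(a + 1) * powProd r a (-a) t + a * r * powProd r (a + 1) (-a - 1) t) t := by
  convert hasDerivAt_powProd hr₀ hr₁ ht (a + 1) (-a) using 1
  rw [add_sub_cancel_right]
  ring

-- The three terms of the second derivative recombine because `(1 - r t) - r (1 - t) = 1 - r`.
theorem hasDerivAt_deriv_powProd_add_one_neg (hr₀ : 0 ≤ r) (hr₁ : r ≤ 1) (ht : ‖t‖ < 1) :
    HasDerivAt (fun z => -(a + 1) * powProd r a (-a) z + a * r * powProd r (a + 1) (-a - 1) z)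
      (a * (a + 1) * (1 - r) ^ 2 * powProd r (a - 1) (-a - 2) t) t := by
  have h := ((hasDerivAt_powProd hr₀ hr₁ ht a (-a)).const_mul (-(a + 1))).add
    ((hasDerivAt_powProd hr₀ hr₁ ht (a + 1) (-a - 1)).const_mul (a * r))
  refine h.congr_deriv ?_
  set P := powProd r (a - 1) (-a - 2) t
  have e₀ : powProd r (a - 1) (-a) t = P * (1 - r * t) ^ 2 := by
    simpa using powProd_eq_mul_pow hr₀ hr₁ ht 0 2 (by simp) (by push_cast; ring)
  have e₁ : powProd r (a + 1 - 1) (-a - 1) t = P * (1 - t) * (1 - r * t) := by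
    simpa using powProd_eq_mul_pow hr₀ hr₁ ht 1 1 (by push_cast; ring) (by push_cast; ring)
  have e₁' : powProd r a (-a - 1) t = P * (1 - t) * (1 - r * t) := by
    rw [← e₁, add_sub_cancel_right]
  have e₂ : powProd r (a + 1) (-a - 1 - 1) t = P * (1 - t) ^ 2 := by
    simpa using powProd_eq_mul_pow hr₀ hr₁ ht 2 0 (by push_cast; ring) (by push_cast; ring)
  rw [e₀, e₁, e₁', e₂]
  ring

end derivatives

section secondDerivBound

variable {r : ℝ} {t : ℂ}

theorem one_sub_mul_norm_le_norm_one_sub_mul (hr₀ : 0 ≤ r) (t : ℂ) :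
    1 - r * ‖t‖ ≤ ‖1 - r * t‖ := by
  simpa [norm_mul, abs_of_nonneg hr₀] using norm_sub_norm_le (1 : ℂ) (r * t)

theorem norm_one_sub_le_two_mul_norm_one_sub_mul (hr₀ : 0 ≤ r) (hr₁ : r ≤ 1) (ht : ‖t‖ ≤ 1) :
    ‖1 - t‖ ≤ 2 * ‖1 - r * t‖ := by
  have hy := one_sub_mul_norm_le_norm_one_sub_mul hr₀ t
  calc ‖1 - t‖ = ‖(1 - r * t) - (1 - r : ℝ) * t‖ := by push_cast; ring_nf
    _ ≤ ‖1 - r * t‖ + (1 - r) * ‖t‖ := by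
        refine (norm_sub_le _ _).trans_eq ?_
        rw [norm_mul, Complex.norm_real, Real.norm_of_nonneg (by linarith)]
    _ ≤ 2 * ‖1 - r * t‖ := by nlinarith [norm_nonneg t]

theorem norm_secondDeriv_le {a b : ℝ} (hb : 0 < b) (hba : b ≤ a) (ha : a ≤ 1) (hr₀ : 0 ≤ r)
    (hr₁ : r ≤ 1) (ht : ‖t‖ < 1) :
    ‖(a : ℂ) * (a + 1) * (1 - r) ^ 2 * powProd r (a - 1) (-a - 2) t‖ ≤
      4 * (1 - ‖t‖) ^ (-b) * ‖1 - t‖ ^ (b - 1) := by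
  have ha₀ : 0 < a := hb.trans_le hba
  set x := ‖1 - t‖
  set y := ‖1 - r * t‖
  have hyr : 1 - r ≤ y := by
    nlinarith [one_sub_mul_norm_le_norm_one_sub_mul hr₀ t, norm_nonneg t]
  have hyt : 1 - ‖t‖ ≤ y := by
    nlinarith [one_sub_mul_norm_le_norm_one_sub_mul hr₀ t, norm_nonneg t]
  have hx : 1 - ‖t‖ ≤ x := by
    simpa using one_sub_mul_norm_le_norm_one_sub_mul zero_le_one t
  have hy₀ : 0 < y := by linarith
  have hnorm : ‖(a : ℂ) * (a + 1) * (1 - r) ^ 2 * powProd r (a - 1) (-a - 2) t‖ =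
      a * (a + 1) * x ^ (a - 1) * ((1 - r) ^ 2 * y ^ (-a - 2)) := by
    have h := norm_powProd r (a - 1) (-a - 2) t
    push_cast at h
    rw [norm_mul, h, show (a : ℂ) * (a + 1) * (1 - r) ^ 2 = ((a * (a + 1) * (1 - r) ^ 2 : ℝ) : ℂ)
      by push_cast; ring, Complex.norm_real, Real.norm_of_nonneg (by positivity)]
    ring
  have hdamp : (1 - r) ^ 2 * y ^ (-a - 2) ≤ y ^ (-a) := by
    rw [rpow_sub hy₀, rpow_two, mul_div_left_comm, ← div_pow]
    exact mul_le_of_le_one_right (rpow_nonneg hy₀.le _)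
      (pow_le_one₀ (div_nonneg (by linarith) hy₀.le) ((div_le_one hy₀).2 hyr))
  calc ‖(a : ℂ) * (a + 1) * (1 - r) ^ 2 * powProd r (a - 1) (-a - 2) t‖
      ≤ 2 * (x ^ (a - 1) * y ^ (-a)) := by
        rw [hnorm, mul_assoc (a * (a + 1))]
        exact mul_le_mul (by nlinarith)
          (mul_le_mul_of_nonneg_left hdamp (rpow_nonneg (norm_nonneg _) _)) (by positivity)
          zero_le_two
    _ ≤ 2 * (2 ^ a * (1 - ‖t‖) ^ (-b) * x ^ (b - 1)) :=
        mul_le_mul_of_nonneg_left (rpow_sub_one_mul_rpow_neg_le hb hba (by linarith)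
          (norm_one_sub_le_two_mul_norm_one_sub_mul hr₀ hr₁ ht.le) (by linarith) hyt) zero_le_two
    _ ≤ 4 * (1 - ‖t‖) ^ (-b) * x ^ (b - 1) := by
        have : (2 : ℝ) ^ a ≤ 2 := by simpa using rpow_le_rpow_of_exponent_le one_le_two ha
        have : 0 ≤ (1 - ‖t‖) ^ (-b) * x ^ (b - 1) := by positivity
        nlinarith

end secondDerivBound

theorem integral_norm_secondDeriv_circleMap_le {a b r ρ : ℝ} (hb : 0 < b) (hba : b ≤ a)
    (ha : a ≤ 1) (hr₀ : 0 ≤ r) (hr₁ : r ≤ 1) (hρ : 1 / 2 ≤ ρ) (hρ₁ : ρ < 1) :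
    ∫ θ in 0..2 * π,
        ‖(a : ℂ) * (a + 1) * (1 - r) ^ 2 * powProd r (a - 1) (-a - 2) (circleMap 0 ρ θ)‖ ≤
      4 * (1 - ρ) ^ (-b) *
        (π ^ (1 - b) * ∫ θ in 0..2 * π, (θ ^ (b - 1) + (2 * π - θ) ^ (b - 1))) := by
  have hnorm : ∀ θ, ‖circleMap 0 ρ θ‖ = ρ := fun θ => by
    rw [norm_circleMap_zero, abs_of_pos (by linarith)]
  have hmem : ∀ θ, ‖circleMap 0 ρ θ‖ < 1 := fun θ => (hnorm θ).trans_lt hρ₁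
  have hb₁ : b ≤ 1 := hba.trans ha
  refine le_trans ?_ (mul_le_mul_of_nonneg_left
    (integral_norm_one_sub_circleMap_rpow_le hb hb₁ hρ hρ₁)
    (mul_nonneg (by norm_num) (rpow_nonneg (by linarith) _)))
  rw [← intervalIntegral.integral_const_mul]
  refine intervalIntegral.integral_mono_on (by positivity) ?_ ?_ fun θ _ => ?_
  · refine (continuous_iff_continuousAt.2 fun θ => ?_).intervalIntegrable _ _
    exact ((((differentiableAt_powProd hr₀ hr₁ (hmem θ) _ _).const_mul _).continuousAt).comp
      (continuous_circleMap 0 ρ).continuousAt).norm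
  · exact ((continuous_norm_one_sub_circleMap_rpow
      (by rwa [abs_of_pos (by linarith)]) _).const_mul _).intervalIntegrable _ _
  · simpa [hnorm θ] using norm_secondDeriv_le hb hba ha hr₀ hr₁ (hmem θ)

section coefficients

variable {a r : ℝ} {c : ℕ → ℂ}

theorem norm_coeff_le_two (ha₀ : 0 ≤ a) (ha₁ : a ≤ 1) (hr₀ : 0 ≤ r) (hr₁ : r ≤ 1)
    (hc : ∀ t : ℂ, ‖t‖ < 1 → HasSum (fun n => c n * t ^ n) (powProd r (a + 1) (-a) t))
    {n : ℕ} (hn : n < 2) : ‖c n‖ ≤ 2 := by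
  have hcoeff := factorial_mul_eq_iteratedDeriv_of_hasSum one_pos (by simpa using hc) n
  interval_cases n
  · simp [powProd] at hcoeff
    simp [hcoeff]
  · rw [iteratedDeriv_one, (hasDerivAt_powProd_add_one_neg hr₀ hr₁ (by simp)).deriv] at hcoeff
    have h₁ : c 1 = -1 + -a + a * r := by simpa [powProd] using hcoeff
    rw [h₁, show (-1 + -a + a * r : ℂ) = ((-(1 + a * (1 - r)) : ℝ) : ℂ) by push_cast; ring,
      Complex.norm_real, norm_neg, Real.norm_of_nonneg (by nlinarith)]
    nlinarith

theorem exists_norm_coeff_add_two_le {b : ℝ} (hb : 0 < b) (hba : b ≤ a) (ha : a ≤ 1) :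
    ∃ K, 0 ≤ K ∧ ∀ r : ℝ, 0 ≤ r → r ≤ 1 → ∀ c : ℕ → ℂ,
      (∀ t : ℂ, ‖t‖ < 1 → HasSum (fun n => c n * t ^ n) (powProd r (a + 1) (-a) t)) →
      ∀ m : ℕ, ‖c (m + 2)‖ * ((m + 1) * (m + 2)) ≤ K * (m + 2) ^ b := by
  set D := ∫ θ in 0..2 * π, (θ ^ (b - 1) + (2 * π - θ) ^ (b - 1))
  have hD : 0 ≤ D := intervalIntegral.integral_nonneg (by positivity) fun θ hθ =>
    add_nonneg (rpow_nonneg hθ.1 _) (rpow_nonneg (by linarith [hθ.2]) _)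
  refine ⟨(2 * π)⁻¹ * (4 * (π ^ (1 - b) * D)) * 3, by positivity, fun r hr₀ hr₁ c hc m => ?_⟩
  set f'' : ℂ → ℂ := fun t => (a : ℂ) * (a + 1) * (1 - r) ^ 2 * powProd r (a - 1) (-a - 2) t
  have hball : ∀ᶠ t in 𝓝 (0 : ℂ), ‖t‖ < 1 :=
    (isOpen_lt continuous_norm continuous_const).mem_nhds (by simp)
  have hcoeff : ((m + 2) ! : ℂ) * c (m + 2) = iteratedDeriv m f'' 0 := by
    rw [factorial_mul_eq_iteratedDeriv_of_hasSum one_pos (by simpa using hc),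
      iteratedDeriv_add_two_eq (hball.mono fun t ht => hasDerivAt_powProd_add_one_neg hr₀ hr₁ ht)
        (hball.mono fun t ht => hasDerivAt_deriv_powProd_add_one_neg hr₀ hr₁ ht)]
  set ρ : ℝ := (m + 1) / (m + 2)
  have hρ : 1 / 2 ≤ ρ := by rw [div_le_div_iff₀ (by norm_num) (by positivity)]; linarith
  have hρ₁ : ρ < 1 := (div_lt_one (by positivity)).2 (by linarith)
  have h1ρ : (1 - ρ) ^ (-b) = (m + 2) ^ b := by
    rw [show 1 - ρ = ((m : ℝ) + 2)⁻¹ by simp only [ρ]; field_simp; ring,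
      inv_rpow (by positivity), ← rpow_neg (by positivity), neg_neg]
  have hcauchy := norm_iteratedDeriv_le_circleIntegral (g := f'') (c := 0) (by positivity : 0 < ρ)
    (fun t ht => ((differentiableAt_powProd hr₀ hr₁ ((mem_closedBall_zero_iff.1 ht).trans_lt hρ₁)
      _ _).const_mul _).differentiableWithinAt) m
  have hfact : ((m + 2) ! : ℝ) = m ! * ((m + 1) * (m + 2)) := by
    push_cast [Nat.factorial_succ]; ring
  refine le_of_mul_le_mul_left ?_ (by positivity : (0 : ℝ) < m !)
  calc (m ! : ℝ) * (‖c (m + 2)‖ * ((m + 1) * (m + 2))) = ‖iteratedDeriv m f'' 0‖ := by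
        rw [← hcoeff, norm_mul, Complex.norm_natCast, hfact]; ring
    _ ≤ m ! * ((2 * π)⁻¹ * ∫ θ in 0..2 * π, ‖f'' (circleMap 0 ρ θ)‖) * ρ⁻¹ ^ m := hcauchy
    _ ≤ m ! * ((2 * π)⁻¹ * (4 * (1 - ρ) ^ (-b) * (π ^ (1 - b) * D))) * 3 := by
        gcongr
        · exact integral_norm_secondDeriv_circleMap_le hb hba ha hr₀ hr₁ hρ hρ₁
        · exact inv_div_pow_le_three m
    _ = m ! * ((2 * π)⁻¹ * (4 * (π ^ (1 - b) * D)) * 3 * (m + 2) ^ b) := by rw [h1ρ]; ring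

end coefficients

/-- For `0 < a < 1` and `f_r(t) = (1-t)^{a+1}/(1-rt)^a` (`0 < r < 1`), the Taylor
coefficients of `f_r` satisfy `|f̂_r(n)| ≤ C/(n+1)^{1+a}` with `C` independent of `r`
and `n`. -/
theorem stmt_19 (a : ℝ) (ha : 0 < a) (ha1 : a < 1) :
    ∃ C : ℝ, ∀ r : ℝ, 0 < r → r < 1 →
      ∀ c : ℕ → ℂ,
        (∀ t : ℂ, ‖t‖ < 1 →
          HasSum (fun n => c n * t ^ n)
            (((1 - t) ^ ((a : ℂ) + 1)) / ((1 - (r : ℂ) * t) ^ (a : ℂ)))) →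
        ∀ n : ℕ, ‖c n‖ ≤ C / ((n : ℝ) + 1) ^ (1 + a) := by
  obtain ⟨K, hK₀, hK⟩ := exists_norm_coeff_add_two_le (lt_min ha (by linarith : 0 < 1 - a))
    (min_le_left a (1 - a)) ha1.le
  refine ⟨8 * max 1 K, fun r hr₀ hr₁ c hc n => ?_⟩
  have hc' : ∀ t : ℂ, ‖t‖ < 1 → HasSum (fun n => c n * t ^ n) (powProd r (a + 1) (-a) t) := by
    simpa only [powProd, Complex.cpow_neg, div_eq_mul_inv] using hc
  rw [le_div_iff₀ (by positivity)]
  rcases lt_or_ge n 2 with hn | hn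
  · have hn' : (n : ℝ) ≤ 1 := by exact_mod_cast Nat.lt_succ_iff.mp hn
    calc ‖c n‖ * ((n : ℝ) + 1) ^ (1 + a) ≤ 2 * 2 ^ (1 + a) := by
          gcongr
          · exact norm_coeff_le_two ha.le ha1.le hr₀.le hr₁.le hc' hn
          · linarith
      _ ≤ 2 * 4 := by gcongr; exact two_rpow_le_four (by linarith)
      _ ≤ 8 * max 1 K := by linarith [le_max_left 1 K]
  · obtain ⟨m, rfl⟩ := Nat.exists_eq_add_of_le' hn
    have h := mul_add_three_rpow_le_of_mul_le (Nat.cast_nonneg m) ha.le ha1.le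
      (min_le_right a (1 - a)) hK₀ (hK r hr₀.le hr₁.le c hc' m)
    push_cast
    rw [show (m : ℝ) + 2 + 1 = m + 3 by ring]
    linarith [le_max_right 1 K]
end
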